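/- arXiv:2601.09649 — 9 statements merged into one kernel-verified Lean document; each statement's English description precedes it below -/
import Mathlib

section
/- Let Ω ⊆ ℝ² be open, let u : ℝ² → ℝ be twice continuously differentiable on Ω, and let γ : ℝ → Ω be a continuously differentiable curve with γ'(t) ≠ 0 for all t. Let P(x₁,x₂) = a + d₁x₁ + d₂x₂ − (c/2)(x₁² + x₂²) for constants a, d₁, d₂, c ∈ ℝ, and assume u(γ(t)) = P(γ(t)) for all t ∈ ℝ. Then the following are equivalent: (i) for all t, −∂₁∂₂u(γ(t))·(γ₁'(t)² − γ₂'(t)²) + (∂₁∂₁u(γ(t)) − ∂₂∂₂u(γ(t)))·γ₁'(t)·γ₂'(t) = 0 (i.e. γ is a Hessian eigencurve of u); (ii) the function t ↦ ‖∇(u − P)(γ(t))‖ is constant on ℝ. -/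
/-!
Write `v = u - P` and `f = ∇v ∘ γ`. Since `v ∘ γ = 0`, `f` is orthogonal to `γ'`, so in the plane
`f = λ γ'^⊥`. Then `(|f|²)' = 2 ⟨f, D²v γ'⟩ = 2 λ (γ' × D²v γ')`, and the cross product is, up to
sign, the eigencurve expression (`D²v = D²u - c I` has the same eigenvectors as `D²u`). So (i) makes
`|f|` constant. Conversely, if `|f|` is constant then `λ (γ' × D²v γ') = 0`: either `λ ≠ 0`, or
`f` vanishes identically, and then so does its derivative `D²v γ'`.
-/

open Filter

section PartialDerivatives

variable {F : Type*} [NormedAddCommGroup F] [NormedSpace ℝ F]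

theorem hasFDerivAt_of_eqOn_fderiv_apply {E : Type*} [NormedAddCommGroup E] [NormedSpace ℝ E]
    {Ω : Set E} {u g : E → F} {p : E} (v : E) (hΩ : IsOpen Ω) (hu : ContDiffOn ℝ 2 u Ω)
    (hg : ∀ q ∈ Ω, g q = fderiv ℝ u q v) (hp : p ∈ Ω) :
    HasFDerivAt g ((fderiv ℝ (fderiv ℝ u) p).flip v) p := by
  have hD : HasFDerivAt (fderiv ℝ u) (fderiv ℝ (fderiv ℝ u) p) p :=
    (((hu.contDiffAt (hΩ.mem_nhds hp)).fderiv_right (m := 1) le_rfl).differentiableAt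
      one_ne_zero).hasFDerivAt
  have hDv := hD.clm_apply (hasFDerivAt_const v p)
  rw [ContinuousLinearMap.comp_zero, zero_add] at hDv
  exact hDv.congr_of_eventuallyEq (eventually_of_mem (hΩ.mem_nhds hp) hg)

variable {u : ℝ × ℝ → F} {L : ℝ × ℝ →L[ℝ] F} {p : ℝ × ℝ} {u₁ u₂ : F}

theorem HasFDerivAt.partial_fst_eq (hL : HasFDerivAt u L p)
    (h₁ : HasDerivAt (fun s => u (s, p.2)) u₁ p.1) : u₁ = L (1, 0) :=
  h₁.unique (hL.comp_hasDerivAt p.1 ((hasDerivAt_id p.1).prodMk (hasDerivAt_const p.1 p.2)))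

theorem HasFDerivAt.partial_snd_eq (hL : HasFDerivAt u L p)
    (h₂ : HasDerivAt (fun s => u (p.1, s)) u₂ p.2) : u₂ = L (0, 1) :=
  h₂.unique (hL.comp_hasDerivAt p.2 ((hasDerivAt_const p.2 p.1).prodMk (hasDerivAt_id p.2)))

theorem HasFDerivAt.apply_eq_partials (hL : HasFDerivAt u L p)
    (h₁ : HasDerivAt (fun s => u (s, p.2)) u₁ p.1) (h₂ : HasDerivAt (fun s => u (p.1, s)) u₂ p.2)
    (w : ℝ × ℝ) : L w = w.1 • u₁ + w.2 • u₂ := by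
  rw [hL.partial_fst_eq h₁, hL.partial_snd_eq h₂, ← map_smul, ← map_smul, ← map_add]
  congr 1
  ext <;> simp

theorem HasDerivAt.comp_of_partials {γ : ℝ → ℝ × ℝ} {w : ℝ × ℝ} {t : ℝ}
    (hγ : HasDerivAt γ w t) (hu : DifferentiableAt ℝ u (γ t))
    (h₁ : HasDerivAt (fun s => u (s, (γ t).2)) u₁ (γ t).1)
    (h₂ : HasDerivAt (fun s => u ((γ t).1, s)) u₂ (γ t).2) :
    HasDerivAt (fun t => u (γ t)) (w.1 • u₁ + w.2 • u₂) t := by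
  have h := hu.hasFDerivAt.comp_hasDerivAt t hγ
  rwa [hu.hasFDerivAt.apply_eq_partials h₁ h₂] at h

variable {Ω : Set (ℝ × ℝ)} {u₁ u₂ u₁₂ : ℝ × ℝ → F}

theorem ContDiffOn.hasFDerivAt_partial_fst (hu : ContDiffOn ℝ 2 u Ω) (hΩ : IsOpen Ω)
    (hu₁ : ∀ q ∈ Ω, HasDerivAt (fun s => u (s, q.2)) (u₁ q) q.1) (hp : p ∈ Ω) :
    HasFDerivAt u₁ ((fderiv ℝ (fderiv ℝ u) p).flip (1, 0)) p :=
  hasFDerivAt_of_eqOn_fderiv_apply _ hΩ hu (fun q hq =>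
    ((hu.contDiffAt (hΩ.mem_nhds hq)).differentiableAt two_ne_zero).hasFDerivAt.partial_fst_eq
      (hu₁ q hq)) hp

theorem ContDiffOn.hasFDerivAt_partial_snd (hu : ContDiffOn ℝ 2 u Ω) (hΩ : IsOpen Ω)
    (hu₂ : ∀ q ∈ Ω, HasDerivAt (fun s => u (q.1, s)) (u₂ q) q.2) (hp : p ∈ Ω) :
    HasFDerivAt u₂ ((fderiv ℝ (fderiv ℝ u) p).flip (0, 1)) p :=
  hasFDerivAt_of_eqOn_fderiv_apply _ hΩ hu (fun q hq =>
    ((hu.contDiffAt (hΩ.mem_nhds hq)).differentiableAt two_ne_zero).hasFDerivAt.partial_snd_eq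
      (hu₂ q hq)) hp

theorem ContDiffOn.hasDerivAt_partial_snd_fst (hu : ContDiffOn ℝ 2 u Ω) (hΩ : IsOpen Ω)
    (hu₁ : ∀ q ∈ Ω, HasDerivAt (fun s => u (s, q.2)) (u₁ q) q.1)
    (hu₂ : ∀ q ∈ Ω, HasDerivAt (fun s => u (q.1, s)) (u₂ q) q.2)
    (hu₁₂ : HasDerivAt (fun s => u₁ (p.1, s)) (u₁₂ p) p.2) (hp : p ∈ Ω) :
    HasDerivAt (fun s => u₂ (s, p.2)) (u₁₂ p) p.1 := by
  have hsymm := (hu.contDiffAt (hΩ.mem_nhds hp)).isSymmSndFDerivAt (by simp) (0, 1) (1, 0)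
  have h := (hu.hasFDerivAt_partial_snd hΩ hu₂ hp).comp_hasDerivAt p.1
    ((hasDerivAt_id p.1).prodMk (hasDerivAt_const p.1 p.2))
  rw [ContinuousLinearMap.flip_apply, ← hsymm] at h
  rw [(hu.hasFDerivAt_partial_fst hΩ hu₁ hp).partial_snd_eq hu₁₂, ContinuousLinearMap.flip_apply]
  exact h

end PartialDerivatives

theorem HasDerivAt.paraboloid_comp {γ : ℝ → ℝ × ℝ} {w : ℝ × ℝ} {t : ℝ} (a d₁ d₂ c : ℝ)
    (hγ : HasDerivAt γ w t) :
    HasDerivAt (fun t => a + d₁ * (γ t).1 + d₂ * (γ t).2 - c / 2 * ((γ t).1 ^ 2 + (γ t).2 ^ 2))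
      (w.1 * (d₁ - c * (γ t).1) + w.2 * (d₂ - c * (γ t).2)) t := by
  have hγ₁ : HasDerivAt (fun t => (γ t).1) w.1 t :=
    (hasFDerivAt_fst (p := γ t)).comp_hasDerivAt t hγ
  have hγ₂ : HasDerivAt (fun t => (γ t).2) w.2 t :=
    (hasFDerivAt_snd (p := γ t)).comp_hasDerivAt t hγ
  refine ((((hasDerivAt_const t a).add (hγ₁.const_mul d₁)).add (hγ₂.const_mul d₂)).sub
    (((hγ₁.pow 2).add (hγ₂.pow 2)).const_mul (c / 2))).congr_deriv ?_
  ring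

section Eigencurve

theorem hessian_pairing_mul_sq_add_sq {f₁ f₂ x y A B C : ℝ} (h : f₁ * x + f₂ * y = 0) :
    (f₁ * (A * x + B * y) + f₂ * (B * x + C * y)) * (x ^ 2 + y ^ 2)
      = (f₁ * y - f₂ * x) * (-B * (x ^ 2 - y ^ 2) + (A - C) * x * y) := by
  linear_combination (A * x ^ 2 + 2 * B * x * y + C * y ^ 2) * h

theorem HasDerivAt.sq_add_sq {f₁ f₂ : ℝ → ℝ} {a₁ a₂ t : ℝ} (h₁ : HasDerivAt f₁ a₁ t)
    (h₂ : HasDerivAt f₂ a₂ t) :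
    HasDerivAt (fun t => f₁ t ^ 2 + f₂ t ^ 2) (2 * (f₁ t * a₁ + f₂ t * a₂)) t := by
  refine ((h₁.pow 2).add (h₂.pow 2)).congr_deriv ?_
  ring

variable {f₁ f₂ x y A B C : ℝ → ℝ}

theorem sq_add_sq_const_iff_eigencurve
    (hf₁ : ∀ t, HasDerivAt f₁ (A t * x t + B t * y t) t)
    (hf₂ : ∀ t, HasDerivAt f₂ (B t * x t + C t * y t) t)
    (horth : ∀ t, f₁ t * x t + f₂ t * y t = 0) (hreg : ∀ t, x t ^ 2 + y t ^ 2 ≠ 0) :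
    (∀ t, -B t * (x t ^ 2 - y t ^ 2) + (A t - C t) * x t * y t = 0) ↔
      ∀ t s, f₁ t ^ 2 + f₂ t ^ 2 = f₁ s ^ 2 + f₂ s ^ 2 := by
  have hpair t : f₁ t * (A t * x t + B t * y t) + f₂ t * (B t * x t + C t * y t) = 0 ↔
      (f₁ t * y t - f₂ t * x t) * (-B t * (x t ^ 2 - y t ^ 2) + (A t - C t) * x t * y t) = 0 := by
    rw [← hessian_pairing_mul_sq_add_sq (horth t), mul_eq_zero, or_iff_left (hreg t)]
  constructor
  · intro hE t s
    have hderiv t : HasDerivAt (fun t => f₁ t ^ 2 + f₂ t ^ 2) 0 t := by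
      simpa [(hpair t).2 (by rw [hE t, mul_zero])] using (hf₁ t).sq_add_sq (hf₂ t)
    exact is_const_of_deriv_eq_zero (fun t => (hderiv t).differentiableAt)
      (fun t => (hderiv t).deriv) t s
  · intro hconst t
    have hpair₀ : f₁ t * (A t * x t + B t * y t) + f₂ t * (B t * x t + C t * y t) = 0 := by
      have h := ((hf₁ t).sq_add_sq (hf₂ t)).unique <|
        (hasDerivAt_const t (f₁ 0 ^ 2 + f₂ 0 ^ 2)).congr_of_eventuallyEq
          (.of_forall fun s => hconst s 0)
      linarith
    by_cases hzero : f₁ t ^ 2 + f₂ t ^ 2 = 0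
    · have hf₀ s : f₁ s = 0 ∧ f₂ s = 0 := by
        rw [← mul_self_add_mul_self_eq_zero, ← sq, ← sq, hconst s t, hzero]
      have h₁ := (hf₁ t).unique <|
        (hasDerivAt_const t 0).congr_of_eventuallyEq (.of_forall fun s => (hf₀ s).1)
      have h₂ := (hf₂ t).unique <|
        (hasDerivAt_const t 0).congr_of_eventuallyEq (.of_forall fun s => (hf₀ s).2)
      linear_combination y t * h₁ - x t * h₂
    · have hcross : f₁ t * y t - f₂ t * x t ≠ 0 := fun h => hzero <| by
        have : (f₁ t ^ 2 + f₂ t ^ 2) * (x t ^ 2 + y t ^ 2) = 0 := by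
          linear_combination (f₁ t * x t + f₂ t * y t) * horth t + (f₁ t * y t - f₂ t * x t) * h
        exact (mul_eq_zero.1 this).resolve_right (hreg t)
      exact (mul_eq_zero.1 ((hpair t).1 hpair₀)).resolve_left hcross

end Eigencurve

theorem capillary_curve_equivalence_general
    (Ω : Set (ℝ × ℝ)) (hΩ : IsOpen Ω)
    (u : ℝ × ℝ → ℝ) (hu : ContDiffOn ℝ 2 u Ω)
    (u1 u2 u11 u12 u22 : ℝ × ℝ → ℝ)
    (hu1 : ∀ p ∈ Ω, HasDerivAt (fun s => u (s, p.2)) (u1 p) p.1)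
    (hu2 : ∀ p ∈ Ω, HasDerivAt (fun s => u (p.1, s)) (u2 p) p.2)
    (hu11 : ∀ p ∈ Ω, HasDerivAt (fun s => u1 (s, p.2)) (u11 p) p.1)
    (hu12 : ∀ p ∈ Ω, HasDerivAt (fun s => u1 (p.1, s)) (u12 p) p.2)
    (hu22 : ∀ p ∈ Ω, HasDerivAt (fun s => u2 (p.1, s)) (u22 p) p.2)
    (γ : ℝ → ℝ × ℝ) (γ' : ℝ → ℝ × ℝ)
    (hγ : ∀ t, HasDerivAt γ (γ' t) t)
    (hγreg : ∀ t, γ' t ≠ 0)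
    (hγΩ : ∀ t, γ t ∈ Ω)
    (a d1 d2 c : ℝ)
    (hP : ∀ t, u (γ t) = a + d1 * (γ t).1 + d2 * (γ t).2
        - c / 2 * ((γ t).1 ^ 2 + (γ t).2 ^ 2)) :
    (∀ t, -u12 (γ t) * ((γ' t).1 ^ 2 - (γ' t).2 ^ 2)
        + (u11 (γ t) - u22 (γ t)) * (γ' t).1 * (γ' t).2 = 0)
    ↔ (∀ t s : ℝ,
        Real.sqrt ((u1 (γ t) - (d1 - c * (γ t).1)) ^ 2
            + (u2 (γ t) - (d2 - c * (γ t).2)) ^ 2)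
      = Real.sqrt ((u1 (γ s) - (d1 - c * (γ s).1)) ^ 2
            + (u2 (γ s) - (d2 - c * (γ s).2)) ^ 2)) := by
  have hγ₁ t : HasDerivAt (fun t => (γ t).1) (γ' t).1 t :=
    (hasFDerivAt_fst (p := γ t)).comp_hasDerivAt t (hγ t)
  have hγ₂ t : HasDerivAt (fun t => (γ t).2) (γ' t).2 t :=
    (hasFDerivAt_snd (p := γ t)).comp_hasDerivAt t (hγ t)
  have horth t : (u1 (γ t) - (d1 - c * (γ t).1)) * (γ' t).1
      + (u2 (γ t) - (d2 - c * (γ t).2)) * (γ' t).2 = 0 := by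
    have hu_γ := (hγ t).comp_of_partials
      ((hu.contDiffAt (hΩ.mem_nhds (hγΩ t))).differentiableAt two_ne_zero)
      (hu1 _ (hγΩ t)) (hu2 _ (hγΩ t))
    have h := hu_γ.unique (((hγ t).paraboloid_comp a d1 d2 c).congr_of_eventuallyEq (.of_forall hP))
    simp only [smul_eq_mul] at h
    linear_combination h
  have hf₁ t : HasDerivAt (fun t => u1 (γ t) - (d1 - c * (γ t).1))
      ((u11 (γ t) + c) * (γ' t).1 + u12 (γ t) * (γ' t).2) t := by
    have hu1_γ := (hγ t).comp_of_partials
      (hu.hasFDerivAt_partial_fst hΩ hu1 (hγΩ t)).differentiableAt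
      (hu11 _ (hγΩ t)) (hu12 _ (hγΩ t))
    refine (hu1_γ.sub ((hasDerivAt_const t d1).sub ((hγ₁ t).const_mul c))).congr_deriv ?_
    simp only [smul_eq_mul]
    ring
  have hf₂ t : HasDerivAt (fun t => u2 (γ t) - (d2 - c * (γ t).2))
      (u12 (γ t) * (γ' t).1 + (u22 (γ t) + c) * (γ' t).2) t := by
    have hu2_γ := (hγ t).comp_of_partials
      (hu.hasFDerivAt_partial_snd hΩ hu2 (hγΩ t)).differentiableAt
      (hu.hasDerivAt_partial_snd_fst hΩ hu1 hu2 (hu12 _ (hγΩ t)) (hγΩ t)) (hu22 _ (hγΩ t))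
    refine (hu2_γ.sub ((hasDerivAt_const t d2).sub ((hγ₂ t).const_mul c))).congr_deriv ?_
    simp only [smul_eq_mul]
    ring
  have hreg t : (γ' t).1 ^ 2 + (γ' t).2 ^ 2 ≠ 0 := by
    rw [sq, sq, Ne, mul_self_add_mul_self_eq_zero]
    exact fun h => hγreg t (Prod.ext h.1 h.2)
  have key := sq_add_sq_const_iff_eigencurve hf₁ hf₂ horth hreg
  simp only [add_sub_add_right_eq_sub] at key
  exact key.trans (forall₂_congr fun t s => (Real.sqrt_inj (by positivity) (by positivity)).symm)

/-- Lemma 2.2 (equivalence of the Hessian-eigencurve condition and constancy of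
`‖∇(u−P)‖` along a curve on which `u = P`), where
`P(x₁,x₂) = a + d₁x₁ + d₂x₂ − (c/2)(x₁²+x₂²)`. -/
theorem capillary_curve_equivalence
    (Ω : Set (ℝ × ℝ)) (hΩ : IsOpen Ω)
    (u : ℝ × ℝ → ℝ) (hu : ContDiffOn ℝ 2 u Ω)
    (u1 u2 u11 u12 u22 : ℝ × ℝ → ℝ)
    (hu1 : ∀ p ∈ Ω, HasDerivAt (fun s => u (s, p.2)) (u1 p) p.1)
    (hu2 : ∀ p ∈ Ω, HasDerivAt (fun s => u (p.1, s)) (u2 p) p.2)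
    (hu11 : ∀ p ∈ Ω, HasDerivAt (fun s => u1 (s, p.2)) (u11 p) p.1)
    (hu12 : ∀ p ∈ Ω, HasDerivAt (fun s => u1 (p.1, s)) (u12 p) p.2)
    (hu22 : ∀ p ∈ Ω, HasDerivAt (fun s => u2 (p.1, s)) (u22 p) p.2)
    (γ : ℝ → ℝ × ℝ) (γ' : ℝ → ℝ × ℝ)
    (hγ : ∀ t, HasDerivAt γ (γ' t) t)
    (hγ'cont : Continuous γ')
    (hγreg : ∀ t, γ' t ≠ 0)
    (hγΩ : ∀ t, γ t ∈ Ω)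
    (a d1 d2 c : ℝ)
    (hP : ∀ t, u (γ t) = a + d1 * (γ t).1 + d2 * (γ t).2
        - c / 2 * ((γ t).1 ^ 2 + (γ t).2 ^ 2)) :
    (∀ t, -u12 (γ t) * ((γ' t).1 ^ 2 - (γ' t).2 ^ 2)
        + (u11 (γ t) - u22 (γ t)) * (γ' t).1 * (γ' t).2 = 0)
    ↔ (∀ t s : ℝ,
        Real.sqrt ((u1 (γ t) - (d1 - c * (γ t).1)) ^ 2
            + (u2 (γ t) - (d2 - c * (γ t).2)) ^ 2)
      = Real.sqrt ((u1 (γ s) - (d1 - c * (γ s).1)) ^ 2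
            + (u2 (γ s) - (d2 - c * (γ s).2)) ^ 2)) :=
  capillary_curve_equivalence_general Ω hΩ u hu u1 u2 u11 u12 u22 hu1 hu2 hu11 hu12 hu22 γ γ' hγ
    hγreg hγΩ a d1 d2 c hP
end

section
/- Let U ⊆ ℝ² ≅ ℂ be open, let ω : U → ℝ be a C³ harmonic function (ω_xx + ω_yy = 0 on U), and let v : U → ℝ be a C³ function satisfying v_xx + v_yy + 2e^{2ω} = 0 on U. Define 𝔮 : U → ℂ by 𝔮 = v_zz − 2ω_z v_z, where v_z = (v_x − i v_y)/2, ω_z = (ω_x − i ω_y)/2, and v_zz = (v_xx − v_yy − 2i v_xy)/4. Then 𝔮 is holomorphic on U, i.e. 𝔮 is complex differentiable at every point of U when (x,y) is identified with z = x + iy. -/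
/-!
With `∂ = ∂/∂z` and `∂̄ = ∂/∂z̄` one has `∂̄∂ = ∂∂̄ = Δ/4` on `C²` functions. Hence
`∂̄ v_zz = ∂(Δv/4) = ∂(-e^{2ω}/2) = -e^{2ω} ω_z`, while `∂̄ ω_z = Δω/4 = 0` and
`∂̄ v_z = Δv/4 = -e^{2ω}/2`, so `∂̄ 𝔮 = -e^{2ω} ω_z - 2 ω_z (-e^{2ω}/2) = 0`, which is the
Cauchy–Riemann equation for `𝔮`.
-/

open Complex Filter Topology InnerProductSpace Laplacian Set

noncomputable def wirtingerDz (f : ℂ → ℂ) (z : ℂ) : ℂ :=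
  (fderiv ℝ f z 1 - I * fderiv ℝ f z I) / 2

noncomputable def wirtingerDzbar (f : ℂ → ℂ) (z : ℂ) : ℂ :=
  (fderiv ℝ f z 1 + I * fderiv ℝ f z I) / 2

noncomputable def hopfDifferential (ω v : ℂ → ℂ) : ℂ → ℂ := fun z =>
  wirtingerDz (wirtingerDz v) z - 2 * (wirtingerDz ω z * wirtingerDz v z)

section SecondDerivatives

variable {𝕜 E F : Type*} [NontriviallyNormedField 𝕜] [NormedAddCommGroup E] [NormedSpace 𝕜 E]
  [NormedAddCommGroup F] [NormedSpace 𝕜 F] {U : Set E} {f g g' : E → F} {x d e : E}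

theorem ContDiffAt.differentiableAt_fderiv (hf : ContDiffAt 𝕜 2 f x) :
    DifferentiableAt 𝕜 (fderiv 𝕜 f) x :=
  (hf.fderiv_right_succ (n := 1)).differentiableAt one_ne_zero

theorem hasFDerivAt_fderiv_apply (hf : DifferentiableAt 𝕜 (fderiv 𝕜 f) x) (e : E) :
    HasFDerivAt (fun y => fderiv 𝕜 f y e) ((fderiv 𝕜 (fderiv 𝕜 f) x).flip e) x := by
  convert hf.hasFDerivAt.clm_apply (hasFDerivAt_const e x) using 1
  ext; simp

theorem HasLineDerivAt.eq_of_hasFDerivAt {L : E →L[𝕜] F} {c : F}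
    (h : HasLineDerivAt 𝕜 g c x d) (hgf : g =ᶠ[𝓝 x] f) (hf : HasFDerivAt f L x) : c = L d :=
  (h.congr_of_eventuallyEq hgf.symm).unique (hf.hasLineDerivAt d)

theorem eqOn_fderiv_of_hasLineDerivAt (hU : IsOpen U) (hf : DifferentiableOn 𝕜 f U)
    (h : ∀ x ∈ U, HasLineDerivAt 𝕜 f (g x) x d) : EqOn g (fun x => fderiv 𝕜 f x d) U :=
  fun x hx => (h x hx).eq_of_hasFDerivAt EventuallyEq.rfl
    ((hf.differentiableAt (hU.mem_nhds hx)).hasFDerivAt)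

theorem eqOn_fderiv_fderiv_of_hasLineDerivAt (hU : IsOpen U) (hf : ContDiffOn 𝕜 2 f U)
    (hg : EqOn g (fun x => fderiv 𝕜 f x d) U) (h : ∀ x ∈ U, HasLineDerivAt 𝕜 g (g' x) x e) :
    EqOn g' (fun x => fderiv 𝕜 (fderiv 𝕜 f) x e d) U :=
  fun x hx => (h x hx).eq_of_hasFDerivAt (eventually_of_mem (hU.mem_nhds hx) hg)
    (hasFDerivAt_fderiv_apply (hf.contDiffAt (hU.mem_nhds hx)).differentiableAt_fderiv d)

end SecondDerivatives

section Wirtinger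

variable {f g : ℂ → ℂ} {z : ℂ}

theorem differentiableAt_complex_of_wirtingerDzbar_eq_zero (hf : DifferentiableAt ℝ f z)
    (h : wirtingerDzbar f z = 0) : DifferentiableAt ℂ f z := by
  refine differentiableAt_complex_iff_differentiableAt_real.2 ⟨hf, ?_⟩
  rw [wirtingerDzbar] at h
  rw [smul_eq_mul]
  linear_combination (-2 * I) * h + fderiv ℝ f z I * I_sq

theorem ContDiffAt.wirtingerDz {m n : WithTop ℕ∞} (hf : ContDiffAt ℝ n f z) (hmn : m + 1 ≤ n) :
    ContDiffAt ℝ m (wirtingerDz f) z := by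
  have hDf := hf.fderiv_right hmn
  unfold _root_.wirtingerDz
  fun_prop

theorem Filter.EventuallyEq.wirtingerDz_eq (h : f =ᶠ[𝓝 z] g) :
    wirtingerDz f z = wirtingerDz g z := by
  rw [wirtingerDz, wirtingerDz, h.fderiv_eq]

theorem wirtingerDzbar_sub (hf : DifferentiableAt ℝ f z) (hg : DifferentiableAt ℝ g z) :
    wirtingerDzbar (fun w => f w - g w) z = wirtingerDzbar f z - wirtingerDzbar g z := by
  simp only [wirtingerDzbar, fderiv_fun_sub hf hg, sub_apply]
  ring

theorem wirtingerDzbar_const_mul (hf : DifferentiableAt ℝ f z) (c : ℂ) :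
    wirtingerDzbar (fun w => c * f w) z = c * wirtingerDzbar f z := by
  simp only [wirtingerDzbar, (hf.hasFDerivAt.const_mul c).fderiv, smul_apply, smul_eq_mul]
  ring

theorem wirtingerDzbar_mul (hf : DifferentiableAt ℝ f z) (hg : DifferentiableAt ℝ g z) :
    wirtingerDzbar (fun w => f w * g w) z =
      wirtingerDzbar f z * g z + f z * wirtingerDzbar g z := by
  rw [wirtingerDzbar, (hf.hasFDerivAt.fun_mul hg.hasFDerivAt).fderiv]
  simp only [add_apply, smul_apply, smul_eq_mul, wirtingerDzbar]
  ring

theorem HasDerivAt.wirtingerDz_comp {h : ℂ → ℂ} {h' : ℂ} (hh : HasDerivAt h h' (f z))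
    (hf : DifferentiableAt ℝ f z) : wirtingerDz (fun w => h (f w)) z = h' * wirtingerDz f z := by
  have hd : HasFDerivAt (fun w => h (f w)) (h' • fderiv ℝ f z) z :=
    hh.comp_hasFDerivAt z hf.hasFDerivAt
  rw [wirtingerDz, hd.fderiv]
  simp only [smul_apply, smul_eq_mul, wirtingerDz]
  ring

theorem fderiv_wirtingerDz_apply (hf : DifferentiableAt ℝ (fderiv ℝ f) z) (d : ℂ) :
    fderiv ℝ (wirtingerDz f) z d =
      (fderiv ℝ (fderiv ℝ f) z d 1 - I * fderiv ℝ (fderiv ℝ f) z d I) / 2 := by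
  have h : HasFDerivAt (fun y => (fderiv ℝ f y 1 - I * fderiv ℝ f y I) * 2⁻¹)
      ((2⁻¹ : ℂ) • ((fderiv ℝ (fderiv ℝ f) z).flip 1 - I • (fderiv ℝ (fderiv ℝ f) z).flip I)) z :=
    ((hasFDerivAt_fderiv_apply hf 1).fun_sub
      ((hasFDerivAt_fderiv_apply hf I).const_mul I)).mul_const 2⁻¹
  rw [show wirtingerDz f = _ from funext fun y => div_eq_mul_inv _ _, h.fderiv]
  simp; ring

theorem fderiv_wirtingerDzbar_apply (hf : DifferentiableAt ℝ (fderiv ℝ f) z) (d : ℂ) :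
    fderiv ℝ (wirtingerDzbar f) z d =
      (fderiv ℝ (fderiv ℝ f) z d 1 + I * fderiv ℝ (fderiv ℝ f) z d I) / 2 := by
  have h : HasFDerivAt (fun y => (fderiv ℝ f y 1 + I * fderiv ℝ f y I) * 2⁻¹)
      ((2⁻¹ : ℂ) • ((fderiv ℝ (fderiv ℝ f) z).flip 1 + I • (fderiv ℝ (fderiv ℝ f) z).flip I)) z :=
    ((hasFDerivAt_fderiv_apply hf 1).fun_add
      ((hasFDerivAt_fderiv_apply hf I).const_mul I)).mul_const 2⁻¹
  rw [show wirtingerDzbar f = _ from funext fun y => div_eq_mul_inv _ _, h.fderiv]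
  simp; ring

theorem laplacian_eq_fderiv_fderiv (f : ℂ → ℂ) (z : ℂ) :
    Δ f z = fderiv ℝ (fderiv ℝ f) z 1 1 + fderiv ℝ (fderiv ℝ f) z I I := by
  simp [laplacian_eq_iteratedFDeriv_complexPlane, iteratedFDeriv_two_apply]

theorem wirtingerDz_wirtingerDz_eq (hf : ContDiffAt ℝ 2 f z) :
    wirtingerDz (wirtingerDz f) z = (fderiv ℝ (fderiv ℝ f) z 1 1 - fderiv ℝ (fderiv ℝ f) z I I
      - 2 * I * fderiv ℝ (fderiv ℝ f) z I 1) / 4 := by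
  have hsymm := hf.isSymmSndFDerivAt (by simp) I 1
  rw [wirtingerDz, fderiv_wirtingerDz_apply hf.differentiableAt_fderiv,
    fderiv_wirtingerDz_apply hf.differentiableAt_fderiv]
  linear_combination (I / 4) * hsymm + fderiv ℝ (fderiv ℝ f) z I I / 4 * I_sq

theorem wirtingerDzbar_wirtingerDz (hf : ContDiffAt ℝ 2 f z) :
    wirtingerDzbar (wirtingerDz f) z = Δ f z / 4 := by
  have hsymm := hf.isSymmSndFDerivAt (by simp) I 1
  rw [wirtingerDzbar, fderiv_wirtingerDz_apply hf.differentiableAt_fderiv,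
    fderiv_wirtingerDz_apply hf.differentiableAt_fderiv, laplacian_eq_fderiv_fderiv]
  linear_combination (I / 4) * hsymm - fderiv ℝ (fderiv ℝ f) z I I / 4 * I_sq

theorem wirtingerDz_wirtingerDzbar (hf : ContDiffAt ℝ 2 f z) :
    wirtingerDz (wirtingerDzbar f) z = Δ f z / 4 := by
  have hsymm := hf.isSymmSndFDerivAt (by simp) I 1
  rw [wirtingerDz, fderiv_wirtingerDzbar_apply hf.differentiableAt_fderiv,
    fderiv_wirtingerDzbar_apply hf.differentiableAt_fderiv, laplacian_eq_fderiv_fderiv]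
  linear_combination (-I / 4) * hsymm - fderiv ℝ (fderiv ℝ f) z I I / 4 * I_sq

end Wirtinger

section HopfDifferential

variable {ω v : ℂ → ℂ} {z : ℂ}

theorem wirtingerDzbar_wirtingerDz_wirtingerDz (hv : ContDiffAt ℝ 3 v z)
    (hω : DifferentiableAt ℝ ω z) (hv_pde : ∀ᶠ w in 𝓝 z, Δ v w = -2 * exp (2 * ω w)) :
    wirtingerDzbar (wirtingerDz (wirtingerDz v)) z = -exp (2 * ω z) * wirtingerDz ω z := by
  have hvz : ContDiffAt ℝ 2 (wirtingerDz v) z := hv.wirtingerDz (by norm_num)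
  have hev : wirtingerDzbar (wirtingerDz v) =ᶠ[𝓝 z] fun w => -exp (2 * ω w) / 2 := by
    filter_upwards [hv.eventually (by simp), hv_pde] with w hw hΔ
    rw [wirtingerDzbar_wirtingerDz (hw.of_le (by norm_num)), hΔ]
    ring
  have hexp : HasDerivAt (fun u => -exp (2 * u) / 2) (-exp (2 * ω z)) (ω z) := by
    refine ((((hasDerivAt_id' (ω z)).const_mul 2).cexp).neg.div_const 2).congr_deriv ?_
    ring
  rw [wirtingerDzbar_wirtingerDz hvz, ← wirtingerDz_wirtingerDzbar hvz, hev.wirtingerDz_eq,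
    hexp.wirtingerDz_comp hω]

theorem wirtingerDzbar_hopfDifferential (hv : ContDiffAt ℝ 3 v z)
    (hω : ContDiffAt ℝ 2 ω z) (hω_harm : Δ ω z = 0)
    (hv_pde : ∀ᶠ w in 𝓝 z, Δ v w = -2 * exp (2 * ω w)) :
    wirtingerDzbar (hopfDifferential ω v) z = 0 := by
  have hvz : ContDiffAt ℝ 2 (wirtingerDz v) z := hv.wirtingerDz (by norm_num)
  have hvz_diff : DifferentiableAt ℝ (wirtingerDz v) z := hvz.differentiableAt two_ne_zero
  have hωz_diff : DifferentiableAt ℝ (wirtingerDz ω) z :=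
    (hω.wirtingerDz (m := 1) (by norm_num)).differentiableAt one_ne_zero
  have hvzz_diff : DifferentiableAt ℝ (wirtingerDz (wirtingerDz v)) z :=
    (hvz.wirtingerDz (m := 1) (by norm_num)).differentiableAt one_ne_zero
  have hvz_bar : wirtingerDzbar (wirtingerDz v) z = -exp (2 * ω z) / 2 := by
    rw [wirtingerDzbar_wirtingerDz (hv.of_le (by norm_num)), hv_pde.self_of_nhds]
    ring
  unfold hopfDifferential
  rw [wirtingerDzbar_sub hvzz_diff ((hωz_diff.fun_mul hvz_diff).const_mul 2),
    wirtingerDzbar_const_mul (hωz_diff.fun_mul hvz_diff), wirtingerDzbar_mul hωz_diff hvz_diff,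
    wirtingerDzbar_wirtingerDz_wirtingerDz hv (hω.differentiableAt two_ne_zero) hv_pde,
    wirtingerDzbar_wirtingerDz hω, hω_harm, hvz_bar]
  ring

theorem contDiffAt_hopfDifferential (hv : ContDiffAt ℝ 3 v z)
    (hω : ContDiffAt ℝ 2 ω z) : ContDiffAt ℝ 1 (hopfDifferential ω v) z := by
  have hvz : ContDiffAt ℝ 1 (wirtingerDz v) z := hv.wirtingerDz (by norm_num)
  have hvzz : ContDiffAt ℝ 1 (wirtingerDz (wirtingerDz v)) z := hv.wirtingerDz
    (by norm_num) |>.wirtingerDz le_rfl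
  have hωz : ContDiffAt ℝ 1 (wirtingerDz ω) z := hω.wirtingerDz (by norm_num)
  unfold hopfDifferential
  fun_prop

theorem differentiableAt_hopfDifferential (hv : ContDiffAt ℝ 3 v z)
    (hω : ContDiffAt ℝ 2 ω z) (hω_harm : Δ ω z = 0)
    (hv_pde : ∀ᶠ w in 𝓝 z, Δ v w = -2 * exp (2 * ω w)) :
    DifferentiableAt ℂ (hopfDifferential ω v) z :=
  differentiableAt_complex_of_wirtingerDzbar_eq_zero
    ((contDiffAt_hopfDifferential hv hω).differentiableAt one_ne_zero)
    (wirtingerDzbar_hopfDifferential hv hω hω_harm hv_pde)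

end HopfDifferential

section RealCoordinates

variable {U : Set ℂ} {f fx fy fxx fyy fxy : ℂ → ℝ}

theorem HasDerivAt.hasLineDerivAt_ofReal_one {z : ℂ} {c : ℝ}
    (h : HasDerivAt (fun t : ℝ => f (z + t)) c 0) :
    HasLineDerivAt ℝ (fun w => (f w : ℂ)) (c : ℂ) z 1 := by
  simpa [HasLineDerivAt, real_smul] using h.ofReal_comp

theorem HasDerivAt.hasLineDerivAt_ofReal_I {z : ℂ} {c : ℝ}
    (h : HasDerivAt (fun t : ℝ => f (z + t * I)) c 0) :
    HasLineDerivAt ℝ (fun w => (f w : ℂ)) (c : ℂ) z I := by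
  simpa [HasLineDerivAt, real_smul] using h.ofReal_comp

theorem ContDiffOn.ofReal {n : WithTop ℕ∞} (hf : ContDiffOn ℝ n f U) :
    ContDiffOn ℝ n (fun w => (f w : ℂ)) U :=
  ofRealCLM.contDiff.comp_contDiffOn hf

theorem ofReal_partials_eqOn_fderiv (hU : IsOpen U) (hf : DifferentiableOn ℝ f U)
    (hx : ∀ z ∈ U, HasDerivAt (fun t : ℝ => f (z + t)) (fx z) 0)
    (hy : ∀ z ∈ U, HasDerivAt (fun t : ℝ => f (z + t * I)) (fy z) 0) :
    EqOn (fun z => (fx z : ℂ)) (fun z => fderiv ℝ (fun w => (f w : ℂ)) z 1) U ∧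
      EqOn (fun z => (fy z : ℂ)) (fun z => fderiv ℝ (fun w => (f w : ℂ)) z I) U := by
  have hF : DifferentiableOn ℝ (fun w => (f w : ℂ)) U :=
    ofRealCLM.differentiable.comp_differentiableOn hf
  exact ⟨eqOn_fderiv_of_hasLineDerivAt hU hF fun z hz => (hx z hz).hasLineDerivAt_ofReal_one,
    eqOn_fderiv_of_hasLineDerivAt hU hF fun z hz => (hy z hz).hasLineDerivAt_ofReal_I⟩

theorem wirtingerDz_ofReal_eqOn (hU : IsOpen U) (hf : DifferentiableOn ℝ f U)
    (hx : ∀ z ∈ U, HasDerivAt (fun t : ℝ => f (z + t)) (fx z) 0)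
    (hy : ∀ z ∈ U, HasDerivAt (fun t : ℝ => f (z + t * I)) (fy z) 0) :
    EqOn (wirtingerDz fun w => (f w : ℂ)) (fun z => (fx z - I * fy z) / 2) U := by
  obtain ⟨hFx, hFy⟩ := ofReal_partials_eqOn_fderiv hU hf hx hy
  intro z hz
  simp only [wirtingerDz, hFx hz, hFy hz]

theorem ofReal_second_partials_eqOn_fderiv (hU : IsOpen U) (hf : ContDiffOn ℝ 2 f U)
    (hx : ∀ z ∈ U, HasDerivAt (fun t : ℝ => f (z + t)) (fx z) 0)
    (hy : ∀ z ∈ U, HasDerivAt (fun t : ℝ => f (z + t * I)) (fy z) 0)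
    (hxx : ∀ z ∈ U, HasDerivAt (fun t : ℝ => fx (z + t)) (fxx z) 0)
    (hyy : ∀ z ∈ U, HasDerivAt (fun t : ℝ => fy (z + t * I)) (fyy z) 0) :
    EqOn (fun z => (fxx z : ℂ)) (fun z => fderiv ℝ (fderiv ℝ fun w => (f w : ℂ)) z 1 1) U ∧
      EqOn (fun z => (fyy z : ℂ)) (fun z => fderiv ℝ (fderiv ℝ fun w => (f w : ℂ)) z I I) U := by
  obtain ⟨hFx, hFy⟩ := ofReal_partials_eqOn_fderiv hU (hf.differentiableOn two_ne_zero) hx hy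
  exact ⟨eqOn_fderiv_fderiv_of_hasLineDerivAt hU hf.ofReal hFx fun z hz =>
      (hxx z hz).hasLineDerivAt_ofReal_one,
    eqOn_fderiv_fderiv_of_hasLineDerivAt hU hf.ofReal hFy fun z hz =>
      (hyy z hz).hasLineDerivAt_ofReal_I⟩

theorem laplacian_ofReal_eqOn (hU : IsOpen U) (hf : ContDiffOn ℝ 2 f U)
    (hx : ∀ z ∈ U, HasDerivAt (fun t : ℝ => f (z + t)) (fx z) 0)
    (hy : ∀ z ∈ U, HasDerivAt (fun t : ℝ => f (z + t * I)) (fy z) 0)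
    (hxx : ∀ z ∈ U, HasDerivAt (fun t : ℝ => fx (z + t)) (fxx z) 0)
    (hyy : ∀ z ∈ U, HasDerivAt (fun t : ℝ => fy (z + t * I)) (fyy z) 0) :
    EqOn (Δ fun w => (f w : ℂ)) (fun z => ((fxx z + fyy z : ℝ) : ℂ)) U := by
  obtain ⟨hFxx, hFyy⟩ := ofReal_second_partials_eqOn_fderiv hU hf hx hy hxx hyy
  intro z hz
  simp only [laplacian_eq_fderiv_fderiv, ← hFxx hz, ← hFyy hz, ofReal_add]

theorem wirtingerDz_wirtingerDz_ofReal_eqOn (hU : IsOpen U) (hf : ContDiffOn ℝ 2 f U)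
    (hx : ∀ z ∈ U, HasDerivAt (fun t : ℝ => f (z + t)) (fx z) 0)
    (hy : ∀ z ∈ U, HasDerivAt (fun t : ℝ => f (z + t * I)) (fy z) 0)
    (hxx : ∀ z ∈ U, HasDerivAt (fun t : ℝ => fx (z + t)) (fxx z) 0)
    (hyy : ∀ z ∈ U, HasDerivAt (fun t : ℝ => fy (z + t * I)) (fyy z) 0)
    (hxy : ∀ z ∈ U, HasDerivAt (fun t : ℝ => fx (z + t * I)) (fxy z) 0) :
    EqOn (wirtingerDz (wirtingerDz fun w => (f w : ℂ)))
      (fun z => (fxx z - fyy z - 2 * I * fxy z) / 4) U := by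
  obtain ⟨hFxx, hFyy⟩ := ofReal_second_partials_eqOn_fderiv hU hf hx hy hxx hyy
  have hFxy := eqOn_fderiv_fderiv_of_hasLineDerivAt hU hf.ofReal
    (ofReal_partials_eqOn_fderiv hU (hf.differentiableOn two_ne_zero) hx hy).1
    fun z hz => (hxy z hz).hasLineDerivAt_ofReal_I
  intro z hz
  simp only [wirtingerDz_wirtingerDz_eq (hf.ofReal.contDiffAt (hU.mem_nhds hz)), ← hFxx hz,
    ← hFyy hz, ← hFxy hz]

end RealCoordinates

/-- The Hopf differential `𝔮 = v_zz − 2ω_z v_z` of a solution of the conformally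
transformed torsion equation `Δv + 2e^{2ω} = 0`, with `ω` harmonic, is holomorphic. -/
theorem hopf_differential_holomorphic
    (U : Set ℂ) (hU : IsOpen U)
    (ω v : ℂ → ℝ)
    (hω : ContDiffOn ℝ 3 ω U) (hv : ContDiffOn ℝ 3 v U)
    (ωx ωy ωxx ωyy vx vy vxx vyy vxy : ℂ → ℝ)
    (hωx : ∀ z ∈ U, HasDerivAt (fun t : ℝ => ω (z + t)) (ωx z) 0)
    (hωy : ∀ z ∈ U, HasDerivAt (fun t : ℝ => ω (z + t * Complex.I)) (ωy z) 0)
    (hωxx : ∀ z ∈ U, HasDerivAt (fun t : ℝ => ωx (z + t)) (ωxx z) 0)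
    (hωyy : ∀ z ∈ U, HasDerivAt (fun t : ℝ => ωy (z + t * Complex.I)) (ωyy z) 0)
    (hvx : ∀ z ∈ U, HasDerivAt (fun t : ℝ => v (z + t)) (vx z) 0)
    (hvy : ∀ z ∈ U, HasDerivAt (fun t : ℝ => v (z + t * Complex.I)) (vy z) 0)
    (hvxx : ∀ z ∈ U, HasDerivAt (fun t : ℝ => vx (z + t)) (vxx z) 0)
    (hvyy : ∀ z ∈ U, HasDerivAt (fun t : ℝ => vy (z + t * Complex.I)) (vyy z) 0)
    (hvxy : ∀ z ∈ U, HasDerivAt (fun t : ℝ => vx (z + t * Complex.I)) (vxy z) 0)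
    (hharm : ∀ z ∈ U, ωxx z + ωyy z = 0)
    (hpde : ∀ z ∈ U, vxx z + vyy z + 2 * Real.exp (2 * ω z) = 0) :
    ∀ z ∈ U, DifferentiableAt ℂ
      (fun w => ((vxx w : ℂ) - (vyy w : ℂ) - 2 * Complex.I * (vxy w : ℂ)) / 4
        - 2 * (((ωx w : ℂ) - Complex.I * (ωy w : ℂ)) / 2)
            * (((vx w : ℂ) - Complex.I * (vy w : ℂ)) / 2)) z := by
  intro z hz
  have hv2 : ContDiffOn ℝ 2 v U := hv.of_le (by norm_num)
  have hω2 : ContDiffOn ℝ 2 ω U := hω.of_le (by norm_num)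
  have hq : hopfDifferential (fun w => (ω w : ℂ)) (fun w => (v w : ℂ)) =ᶠ[𝓝 z]
      fun w => ((vxx w : ℂ) - (vyy w : ℂ) - 2 * I * (vxy w : ℂ)) / 4
        - 2 * (((ωx w : ℂ) - I * (ωy w : ℂ)) / 2) * (((vx w : ℂ) - I * (vy w : ℂ)) / 2) := by
    filter_upwards [hU.mem_nhds hz] with w hw
    rw [hopfDifferential, wirtingerDz_wirtingerDz_ofReal_eqOn hU hv2 hvx hvy hvxx hvyy hvxy hw,
      wirtingerDz_ofReal_eqOn hU (hv.differentiableOn (by norm_num)) hvx hvy hw,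
      wirtingerDz_ofReal_eqOn hU (hω.differentiableOn (by norm_num)) hωx hωy hw]
    ring
  refine hq.differentiableAt_iff.1 (differentiableAt_hopfDifferential
    (hv.ofReal.contDiffAt (hU.mem_nhds hz)) (hω2.ofReal.contDiffAt (hU.mem_nhds hz)) ?_ ?_)
  · simp only [laplacian_ofReal_eqOn hU hω2 hωx hωy hωxx hωyy hz, hharm z hz, ofReal_zero]
  · filter_upwards [hU.mem_nhds hz] with w hw
    have hΔ : vxx w + vyy w = -2 * Real.exp (2 * ω w) := by linarith [hpde w hw]
    simp only [laplacian_ofReal_eqOn hU hv2 hvx hvy hvxx hvyy hw, hΔ]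
    push_cast; ring
end

section
/- Let s₁ < s₂ be real numbers, T > 0, and let S = {z ∈ ℂ : s₁ ≤ Re z ≤ s₂}. Let f : S → ℂ be continuous on S and holomorphic on the open strip {z : s₁ < Re z < s₂}, and suppose that f(z + iT) = f(z) for all z ∈ S and that Im f(z) = 0 whenever Re z = s₁ or Re z = s₂. Then f is constant on S, and its value is a real number. -/
/-!
Since the strip is unbounded, the maximum modulus principle is applied through periodicity: a
period rectangle is compact, so the modulus of a periodic holomorphic function attains its maximum
over the closed strip, and an interior maximum makes the modulus constant. Applied to `exp (∓ I * f)`, whose modulus is `exp (± Im f)`, this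
gives `Im f = 0` on the strip. A holomorphic function with real values on a connected open set
is constant by the open mapping theorem, and continuity carries the constant to the boundary.
-/

open Complex Set

namespace Complex

theorem closure_preimage_re_Ioo {a b : ℝ} (hab : a < b) :
    closure (re ⁻¹' Ioo a b) = re ⁻¹' Icc a b := by
  rw [closure_preimage_re, closure_Ioo hab.ne]

/-- Periodicity reduces the maximum over the unbounded strip to one over the compact rectangle
`[a, b] ×ℂ [0, T]`. -/
theorem exists_isMaxOn_of_periodic_strip {a b T : ℝ} (hab : a ≤ b) (hT : 0 < T) {φ : ℂ → ℝ}
    (hφ : ContinuousOn φ (re ⁻¹' Icc a b))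
    (hper : ∀ z ∈ re ⁻¹' Icc a b, φ (z + T * I) = φ z) :
    ∃ z₀ ∈ re ⁻¹' Icc a b, IsMaxOn φ (re ⁻¹' Icc a b) z₀ := by
  have hK : Icc a b ×ℂ Icc 0 T ⊆ re ⁻¹' Icc a b := fun z hz => hz.1
  obtain ⟨z₀, hz₀, hmax⟩ := (isCompact_Icc.reProdIm isCompact_Icc).exists_isMaxOn
    ⟨a, by simp [mem_reProdIm, hab, hT.le]⟩ (hφ.mono hK)
  refine ⟨z₀, hK hz₀, fun z hz => ?_⟩
  have hline : Function.Periodic (fun t : ℝ => φ (z.re + t * I)) T := fun t => by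
    simpa [add_mul, add_assoc] using hper (z.re + t * I) (by simpa using hz)
  obtain ⟨t, ht, hφt⟩ := hline.exists_mem_Ico₀ hT z.im
  have : φ z = φ (z.re + t * I) := by simpa only [re_add_im] using hφt
  show φ z ≤ φ z₀
  rw [this]
  exact hmax ⟨by simpa using hz, by simpa using Ico_subset_Icc_self ht⟩

theorem norm_le_of_periodic_strip {a b T C : ℝ} (hab : a < b) (hT : 0 < T) {g : ℂ → ℂ}
    (hg : DiffContOnCl ℂ g (re ⁻¹' Ioo a b))
    (hper : ∀ z ∈ re ⁻¹' Icc a b, g (z + T * I) = g z)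
    (hbd : ∀ z : ℂ, (z.re = a ∨ z.re = b) → ‖g z‖ ≤ C) :
    ∀ z ∈ re ⁻¹' Icc a b, ‖g z‖ ≤ C := by
  have hcl := closure_preimage_re_Ioo hab
  obtain ⟨z₀, ⟨ha, hb⟩, hmax⟩ := exists_isMaxOn_of_periodic_strip hab.le hT
    (hcl ▸ hg.continuousOn).norm (fun z hz => by rw [hper z hz])
  intro z hz
  refine (hmax hz).trans ?_
  rcases ha.eq_or_lt with ha | ha
  · exact hbd z₀ (.inl ha.symm)
  rcases hb.eq_or_lt with hb | hb
  · exact hbd z₀ (.inr hb)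
  -- an interior maximum forces `‖g‖` to be constant, so its value is also attained on `re z = a`
  have hconst := norm_eqOn_closure_of_isPreconnected_of_isMaxOn
    ((convex_Ioo a b).linear_preimage reLm).isPreconnected (isOpen_Ioo.preimage continuous_re) hg
    ⟨ha, hb⟩ (hmax.on_subset fun w hw => ⟨hw.1.le, hw.2.le⟩)
  have ha_mem : (a : ℂ) ∈ closure (re ⁻¹' Ioo a b) := by simp [hcl, hab.le]
  have hnorm_eq : ‖g a‖ = ‖g z₀‖ := hconst ha_mem
  show ‖g z₀‖ ≤ C
  exact hnorm_eq ▸ hbd a (.inl (ofReal_re a))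

theorem re_le_of_periodic_strip {a b T M : ℝ} (hab : a < b) (hT : 0 < T) {f : ℂ → ℂ}
    (hf : DiffContOnCl ℂ f (re ⁻¹' Ioo a b))
    (hper : ∀ z ∈ re ⁻¹' Icc a b, f (z + T * I) = f z)
    (hbd : ∀ z : ℂ, (z.re = a ∨ z.re = b) → (f z).re ≤ M) :
    ∀ z ∈ re ⁻¹' Icc a b, (f z).re ≤ M := by
  intro z hz
  simpa [norm_exp] using norm_le_of_periodic_strip hab hT (C := Real.exp M)
    (differentiable_exp.comp_diffContOnCl hf) (fun w hw => by simp [hper w hw])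
    (fun w hw => by simpa [norm_exp] using hbd w hw) z hz

theorem _root_.DifferentiableOn.exists_eqOn_const_of_im_eq_zero {U : Set ℂ} {f : ℂ → ℂ}
    (hf : DifferentiableOn ℂ f U) (hU : IsOpen U) (hU' : IsPreconnected U)
    (him : ∀ z ∈ U, (f z).im = 0) : ∃ w, EqOn f (fun _ => w) U := by
  rcases (hf.analyticOnNhd hU).is_constant_or_isOpen hU' with hconst | hopen
  · exact hconst
  -- `f '' U` is open but lies on the real axis, which has empty interior
  have hsub : f '' U ⊆ interior (im ⁻¹' {0}) :=
    (hopen U subset_rfl hU).subset_interior_iff.2 (image_subset_iff.2 him)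
  rw [interior_preimage_im, interior_singleton, preimage_empty, subset_empty_iff,
    image_eq_empty] at hsub
  exact ⟨0, by simp [hsub]⟩

end Complex

/-- A holomorphic function on a vertical strip, continuous up to the boundary,
periodic of period `iT`, whose imaginary part vanishes on both boundary lines,
is a real constant. -/
theorem strip_periodic_real_boundary_constant
    (s₁ s₂ T : ℝ) (hs : s₁ < s₂) (hT : 0 < T)
    (f : ℂ → ℂ)
    (hcont : ContinuousOn f {z : ℂ | s₁ ≤ z.re ∧ z.re ≤ s₂})
    (hhol : DifferentiableOn ℂ f {z : ℂ | s₁ < z.re ∧ z.re < s₂})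
    (hper : ∀ z : ℂ, s₁ ≤ z.re → z.re ≤ s₂ → f (z + T * Complex.I) = f z)
    (hbd : ∀ z : ℂ, (z.re = s₁ ∨ z.re = s₂) → (f z).im = 0) :
    ∃ c : ℝ, ∀ z : ℂ, s₁ ≤ z.re → z.re ≤ s₂ → f z = (c : ℂ) := by
  have hcl := closure_preimage_re_Ioo hs
  have hf : DiffContOnCl ℂ f (re ⁻¹' Ioo s₁ s₂) := ⟨hhol, hcl ▸ hcont⟩
  have hper' (z : ℂ) (hz : z ∈ re ⁻¹' Icc s₁ s₂) : f (z + T * I) = f z := hper z hz.1 hz.2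
  have him_nonpos := re_le_of_periodic_strip hs hT (hf.const_smul (-I)) (M := 0)
    (fun z hz => by simp [hper' z hz]) (fun z hz => by simp [hbd z hz])
  have him_nonneg := re_le_of_periodic_strip hs hT (hf.const_smul I) (M := 0)
    (fun z hz => by simp [hper' z hz]) (fun z hz => by simp [hbd z hz])
  have him (z : ℂ) (hz : z ∈ re ⁻¹' Icc s₁ s₂) : (f z).im = 0 := by
    have h₁ := him_nonpos z hz
    have h₂ := him_nonneg z hz
    simp only [Pi.smul_apply, smul_eq_mul, neg_mul, neg_re, mul_re, I_re, I_im] at h₁ h₂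
    linarith
  have hUS : re ⁻¹' Ioo s₁ s₂ ⊆ re ⁻¹' Icc s₁ s₂ := preimage_mono Ioo_subset_Icc_self
  obtain ⟨w, hw⟩ := hhol.exists_eqOn_const_of_im_eq_zero (isOpen_Ioo.preimage continuous_re)
    ((convex_Ioo s₁ s₂).linear_preimage reLm).isPreconnected
    (fun z hz => him z (hUS hz))
  have hwS : EqOn f (fun _ => w) (re ⁻¹' Icc s₁ s₂) :=
    EqOn.of_subset_closure hw hcont continuousOn_const hUS hcl.ge
  have hs₁ : (s₁ : ℂ) ∈ re ⁻¹' Icc s₁ s₂ := by simp [hs.le]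
  have hw_real : w.im = 0 := (congrArg im (hwS hs₁)).symm.trans (him s₁ hs₁)
  exact ⟨w.re, fun z h₁ h₂ => (hwS ⟨h₁, h₂⟩).trans (ext rfl (by simp [hw_real]))⟩
end

section
/- Let 𝒱 = (s₁,s₂)×(t₁,t₂) ⊆ ℝ² ≅ ℂ, let g be holomorphic on 𝒱 with g'(z) ≠ 0 for all z ∈ 𝒱, and set ω = log|g'| and σ = −|g|²/2. Let 𝔮 ∈ ℝ and let v : 𝒱 → ℝ be a C² function satisfying v_xx + v_yy + 2e^{2ω} = 0 and v_zz − 2ω_z v_z = 𝔮 on 𝒱, where v_z = (v_x − iv_y)/2, v_zz = (v_xx − v_yy − 2iv_xy)/4 and ω_z = (ω_x − iω_y)/2. Fix x₀ ∈ (s₁,s₂) and suppose there exist a, b, c, d₁, d₂ ∈ ℝ with b ≠ 0 such that, setting L = d₁·Re g + d₂·Im g, for all y ∈ (t₁,t₂): v(x₀,y) = a + c·σ(x₀,y) + L(x₀,y) and v_x(x₀,y) = b·e^{ω(x₀,y)} + c·σ_x(x₀,y) + L_x(x₀,y). Then 2ω_x(x₀,y) = −(4𝔮/b)·e^{−ω(x₀,y)}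 − (2(1−c)/b)·e^{ω(x₀,y)} for all y ∈ (t₁,t₂). -/
/-!
On the line `x = x₀` the first capillarity identity says `v = P ∘ g` with
`P w = a + ⟪d, w⟫ - (c/2)|w|²`, `d = d₁ + i d₂`. Differentiating twice in `y` gives
`v_y = ⟪W, i g'⟫` and `v_yy = -⟪W, g''⟫ - c|g'|²` with `W = ∇P(g) = d - c g`, while the second
identity reads `v_x = b|g'| + ⟪W, g'⟫`. Hence `v_x + i v_y = b|g'| + W · conj g'`, and since
`ω_x + i ω_y = conj (g''/g')`,
`ω_x v_x - ω_y v_y = Re ((ω_x + i ω_y)(v_x + i v_y)) = b|g'| ω_x + ⟪W, g''⟫`.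
In the real part of the Hopf equation, with `v_xx` eliminated by `v_xx + v_yy = -2|g'|²`, the
term `⟪W, g''⟫` cancels against `v_yy`, leaving `b|g'| ω_x = (c - 1)|g'|² - 2𝔮`.
-/

open Set Complex ComplexConjugate
open scoped RealInnerProductSpace

theorem HasDerivAt.log_norm {F : Type*} [NormedAddCommGroup F] [InnerProductSpace ℝ F]
    {h : ℝ → F} {h' : F} {t : ℝ} (hh : HasDerivAt h h' t) (h0 : h t ≠ 0) :
    HasDerivAt (fun s => Real.log ‖h s‖) (⟪h t, h'⟫ / ‖h t‖ ^ 2) t := by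
  have hsq : (fun s => Real.log ‖h s‖) = fun s => Real.log (‖h s‖ ^ 2) / 2 := by
    funext s
    rw [Real.log_pow]
    ring
  rw [hsq]
  exact ((hh.norm_sq.log (by positivity)).div_const 2).congr_deriv (by ring)

section Line

variable {E : Type*} [NormedAddCommGroup E]

theorem HasDerivAt.comp_line [NormedSpace ℂ E] {F : ℂ → E} {F' : E} {z u : ℂ} {s : ℝ}
    (hF : HasDerivAt F F' (z + s * u)) :
    HasDerivAt (fun t : ℝ => F (z + t * u)) (u • F') s := by
  have hline : HasDerivAt (fun t : ℝ => z + t * u) u s := by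
    simpa using ((hasDerivAt_id (s : ℂ)).comp_ofReal.mul_const u).const_add z
  exact hF.scomp s hline

theorem HasDerivAt.of_comp_line_shift [NormedSpace ℝ E] {F : ℂ → E} {d : E} {z u : ℂ} {s : ℝ}
    (hF : HasDerivAt (fun t : ℝ => F (z + s * u + t * u)) d 0) :
    HasDerivAt (fun t : ℝ => F (z + t * u)) d s := by
  rw [← sub_self s] at hF
  convert hF.comp_sub_const s s using 2 with t
  push_cast
  ring_nf

end Line

theorem HasDerivAt.log_norm_comp_line {f : ℂ → ℂ} {f' z : ℂ} (hf : HasDerivAt f f' z)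
    (h0 : f z ≠ 0) (u : ℂ) :
    HasDerivAt (fun t : ℝ => Real.log ‖f (z + t * u)‖) (⟪f z, u * f'⟫ / ‖f z‖ ^ 2) 0 := by
  have hf₀ : HasDerivAt f f' (z + ((0 : ℝ) : ℂ) * u) := by simpa using hf
  simpa using hf₀.comp_line.log_norm (by simpa using h0)

theorem Set.EqOn.eqOn_of_hasDerivAt {E : Type*} [NormedAddCommGroup E] [NormedSpace ℝ E]
    {S : Set ℝ} (hS : IsOpen S) {f h f' h' : ℝ → E} (hfh : EqOn f h S)
    (hf : ∀ s ∈ S, HasDerivAt f (f' s) s) (hh : ∀ s ∈ S, HasDerivAt h (h' s) s) :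
    EqOn f' h' S := fun s hs =>
  (hf s hs).unique
    ((hh s hs).congr_of_eventuallyEq (Filter.eventuallyEq_of_mem (hS.mem_nhds hs) hfh))

theorem DifferentiableOn.of_hasDerivAt_of_isOpen {E : Type*} [NormedAddCommGroup E]
    [NormedSpace ℂ E] [CompleteSpace E] {U : Set ℂ} (hU : IsOpen U) {g g' : ℂ → E}
    (hg : ∀ z ∈ U, HasDerivAt g (g' z) z) : DifferentiableOn ℂ g' U := by
  have hdiff : DifferentiableOn ℂ g U := fun z hz =>
    (hg z hz).differentiableAt.differentiableWithinAt
  exact (hdiff.deriv hU).congr fun z hz => (hg z hz).deriv.symm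

section Capillary

variable {E : Type*} [NormedAddCommGroup E] [InnerProductSpace ℝ E]

noncomputable def capillaryPolynomial (a c : ℝ) (d w : E) : ℝ := a + ⟪d, w⟫ - c / 2 * ‖w‖ ^ 2

theorem HasDerivAt.capillaryPolynomial_comp (a c : ℝ) (d : E) {G : ℝ → E} {G' : E} {t : ℝ}
    (hG : HasDerivAt G G' t) :
    HasDerivAt (fun s => capillaryPolynomial a c d (G s)) ⟪d - c • G t, G'⟫ t := by
  have h := (((hasDerivAt_const t d).inner ℝ hG).const_add a).sub (hG.norm_sq.const_mul (c / 2))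
  refine h.congr_deriv ?_
  simp only [inner_sub_left, real_inner_smul_left, inner_zero_left]
  ring

theorem HasDerivAt.inner_sub_smul (c : ℝ) (d : E) {G H : ℝ → E} {G' H' : E} {t : ℝ}
    (hG : HasDerivAt G G' t) (hH : HasDerivAt H H' t) :
    HasDerivAt (fun s => ⟪d - c • G s, H s⟫) (⟪d - c • G t, H'⟫ - c * ⟪G', H t⟫) t := by
  refine (((hasDerivAt_const t d).sub (hG.const_smul c)).inner ℝ hH).congr_deriv ?_
  simp only [Pi.sub_apply, Pi.smul_apply, zero_sub, inner_neg_left, real_inner_smul_left]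
  ring

theorem Set.EqOn.capillaryPolynomial_comp_derivs (a c : ℝ) (d : E) {S : Set ℝ} (hS : IsOpen S)
    {G G' G'' : ℝ → E} {f fy fyy : ℝ → ℝ}
    (hG : ∀ s ∈ S, HasDerivAt G (G' s) s) (hG' : ∀ s ∈ S, HasDerivAt G' (G'' s) s)
    (hf : EqOn f (fun s => capillaryPolynomial a c d (G s)) S)
    (hfy : ∀ s ∈ S, HasDerivAt f (fy s) s) (hfyy : ∀ s ∈ S, HasDerivAt fy (fyy s) s) :
    EqOn fy (fun s => ⟪d - c • G s, G' s⟫) S ∧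
      EqOn fyy (fun s => ⟪d - c • G s, G'' s⟫ - c * ‖G' s‖ ^ 2) S := by
  have hfy_eq : EqOn fy (fun s => ⟪d - c • G s, G' s⟫) S :=
    hf.eqOn_of_hasDerivAt hS hfy fun s hs => (hG s hs).capillaryPolynomial_comp a c d
  refine ⟨hfy_eq, hfy_eq.eqOn_of_hasDerivAt hS hfyy fun s hs => ?_⟩
  exact ((hG s hs).inner_sub_smul c d (hG' s hs)).congr_deriv
    (by rw [real_inner_self_eq_norm_sq])

end Capillary

theorem capillaryPolynomial_mk (a c d₁ d₂ : ℝ) (w : ℂ) :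
    capillaryPolynomial a c ⟨d₁, d₂⟩ w = a + c * (-‖w‖ ^ 2 / 2) + (d₁ * w.re + d₂ * w.im) := by
  simp only [capillaryPolynomial, Complex.inner, mul_re, conj_re, conj_im]
  ring

theorem inner_mk_sub_smul (c d₁ d₂ : ℝ) (w w' : ℂ) :
    ⟪(⟨d₁, d₂⟩ : ℂ) - c • w, w'⟫ = c * (-(conj w * w').re) + (d₁ * w'.re + d₂ * w'.im) := by
  simp only [Complex.inner, mul_re, mul_im, conj_re, conj_im, sub_re, sub_im, real_smul,
    ofReal_re, ofReal_im]
  ring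

theorem re_hopf_eq (A B C p q r s : ℝ) :
    (((A : ℂ) - B - 2 * I * C) / 4 - 2 * (((p : ℂ) - I * q) / 2) * (((r : ℂ) - I * s) / 2)).re
      = (A - B) / 4 - (p * r - q * s) / 2 := by
  simp only [sub_re, sub_im, mul_re, mul_im, div_ofNat_re, div_ofNat_im, ofReal_re, ofReal_im,
    re_ofNat, im_ofNat, I_re, I_im]
  ring

theorem inner_mul_inner_sub_inner_I_mul (W G₁ G₂ : ℂ) :
    ⟪G₁, G₂⟫ * ⟪W, G₁⟫ - ⟪G₁, I * G₂⟫ * ⟪W, I * G₁⟫ = ‖G₁‖ ^ 2 * ⟪W, G₂⟫ := by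
  simp only [Complex.inner, Complex.sq_norm, Complex.normSq_apply, mul_re, mul_im, conj_re,
    conj_im, I_re, I_im]
  ring

theorem two_mul_omegaX_eq_of_hopf {b c q vx vy vxx vyy ωx ωy : ℝ} {W G₁ G₂ : ℂ} (hb : b ≠ 0)
    (hG₁ : G₁ ≠ 0)
    (hωx : ωx = ⟪G₁, G₂⟫ / ‖G₁‖ ^ 2) (hωy : ωy = ⟪G₁, I * G₂⟫ / ‖G₁‖ ^ 2)
    (hvx : vx = b * ‖G₁‖ + ⟪W, G₁⟫) (hvy : vy = ⟪W, I * G₁⟫)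
    (hvyy : vyy = -⟪W, G₂⟫ - c * ‖G₁‖ ^ 2)
    (hpde : vxx + vyy + 2 * ‖G₁‖ ^ 2 = 0)
    (hhopf : (vxx - vyy) / 4 - (ωx * vx - ωy * vy) / 2 = q) :
    2 * ωx = -(4 * q / b) * ‖G₁‖⁻¹ - (2 * (1 - c) / b) * ‖G₁‖ := by
  have hn : ‖G₁‖ ≠ 0 := norm_ne_zero_iff.2 hG₁
  have hcross : ωx * vx - ωy * vy = b * ‖G₁‖ * ωx + ⟪W, G₂⟫ := by
    rw [hvx, hvy, hωx, hωy]
    field_simp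
    linear_combination inner_mul_inner_sub_inner_I_mul W G₁ G₂
  have hbn : b * ‖G₁‖ * ωx = (c - 1) * ‖G₁‖ ^ 2 - 2 * q := by linarith
  field_simp
  linear_combination 2 * hbn

theorem capillary_implies_omega_equation_general
    (s₁ s₂ t₁ t₂ : ℝ) (V : Set ℂ)
    (hV : V = {z : ℂ | z.re ∈ Ioo s₁ s₂ ∧ z.im ∈ Ioo t₁ t₂})
    (g g' : ℂ → ℂ)
    (hg : ∀ z ∈ V, HasDerivAt g (g' z) z)
    (hg'ne : ∀ z ∈ V, g' z ≠ 0)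
    (ω σ : ℂ → ℝ)
    (hωdef : ∀ z, ω z = Real.log (‖g' z‖))
    (hσdef : ∀ z, σ z = -‖g z‖^2 / 2)
    (ωx ωy : ℂ → ℝ)
    (hωx : ∀ z ∈ V, HasDerivAt (fun t : ℝ => ω (z + t)) (ωx z) 0)
    (hωy : ∀ z ∈ V, HasDerivAt (fun t : ℝ => ω (z + t * Complex.I)) (ωy z) 0)
    (v : ℂ → ℝ)
    (vx vy vxx vyy vxy : ℂ → ℝ)
    (hvy : ∀ z ∈ V, HasDerivAt (fun t : ℝ => v (z + t * Complex.I)) (vy z) 0)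
    (hvyy : ∀ z ∈ V, HasDerivAt (fun t : ℝ => vy (z + t * Complex.I)) (vyy z) 0)
    (hpde : ∀ z ∈ V, vxx z + vyy z + 2 * Real.exp (2 * ω z) = 0)
    (𝔮 : ℝ)
    (hhopf : ∀ z ∈ V,
      ((vxx z : ℂ) - (vyy z : ℂ) - 2 * Complex.I * (vxy z : ℂ)) / 4
        - 2 * (((ωx z : ℂ) - Complex.I * (ωy z : ℂ)) / 2)
            * (((vx z : ℂ) - Complex.I * (vy z : ℂ)) / 2) = (𝔮 : ℂ))
    (x₀ : ℝ) (hx₀ : x₀ ∈ Ioo s₁ s₂)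
    (a b c d₁ d₂ : ℝ) (hb : b ≠ 0)
    (hcap1 : ∀ y ∈ Ioo t₁ t₂,
      v ((x₀ : ℂ) + (y : ℂ) * Complex.I)
        = a + c * σ ((x₀ : ℂ) + (y : ℂ) * Complex.I)
          + (d₁ * (g ((x₀ : ℂ) + (y : ℂ) * Complex.I)).re
            + d₂ * (g ((x₀ : ℂ) + (y : ℂ) * Complex.I)).im))
    (hcap2 : ∀ y ∈ Ioo t₁ t₂,
      vx ((x₀ : ℂ) + (y : ℂ) * Complex.I)
        = b * Real.exp (ω ((x₀ : ℂ) + (y : ℂ) * Complex.I))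
          + c * (-((starRingEnd ℂ) (g ((x₀ : ℂ) + (y : ℂ) * Complex.I))
              * g' ((x₀ : ℂ) + (y : ℂ) * Complex.I)).re)
          + (d₁ * (g' ((x₀ : ℂ) + (y : ℂ) * Complex.I)).re
            + d₂ * (g' ((x₀ : ℂ) + (y : ℂ) * Complex.I)).im)) :
    ∀ y ∈ Ioo t₁ t₂,
      2 * ωx ((x₀ : ℂ) + (y : ℂ) * Complex.I)
        = -(4 * 𝔮 / b) * Real.exp (-(ω ((x₀ : ℂ) + (y : ℂ) * Complex.I)))
          - (2 * (1 - c) / b) * Real.exp (ω ((x₀ : ℂ) + (y : ℂ) * Complex.I)) := by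
  intro y hy
  have hω : ω = fun z => Real.log ‖g' z‖ := funext hωdef
  subst hω
  have hVo : IsOpen V := hV ▸ isOpen_Ioo.reProdIm isOpen_Ioo
  have hline : ∀ s ∈ Ioo t₁ t₂, (x₀ : ℂ) + s * I ∈ V := fun s hs => by
    rw [hV]; exact ⟨by simpa using hx₀, by simpa using hs⟩
  have hg'' : ∀ z ∈ V, HasDerivAt g' (deriv g' z) z := fun z hz =>
    ((DifferentiableOn.of_hasDerivAt_of_isOpen hVo hg z hz).differentiableAt
      (hVo.mem_nhds hz)).hasDerivAt
  obtain ⟨hvy_line, hvyy_line⟩ := EqOn.capillaryPolynomial_comp_derivs a c ⟨d₁, d₂⟩ isOpen_Ioo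
    (G'' := fun s => -deriv g' (x₀ + s * I))
    (fun s hs => (hg _ (hline s hs)).comp_line)
    (fun s hs => ((hg'' _ (hline s hs)).comp_line.const_smul I).congr_deriv
      (by rw [smul_smul, I_mul_I, neg_one_smul]))
    (fun s hs => by simp only [hcap1 s hs, hσdef, capillaryPolynomial_mk])
    (fun s hs => (hvy _ (hline s hs)).of_comp_line_shift)
    (fun s hs => (hvyy _ (hline s hs)).of_comp_line_shift)
  set z : ℂ := x₀ + y * I
  have hz := hline y hy
  have hn : 0 < ‖g' z‖ := norm_pos_iff.2 (hg'ne z hz)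
  have hlog := (hg'' z hz).log_norm_comp_line (hg'ne z hz)
  have hexp : Real.exp (2 * Real.log ‖g' z‖) = ‖g' z‖ ^ 2 := by
    rw [mul_comm, Real.exp_mul, Real.exp_log hn]
    norm_cast
  rw [Real.exp_neg, Real.exp_log hn]
  refine two_mul_omegaX_eq_of_hopf (vxx := vxx z) (W := ⟨d₁, d₂⟩ - c • g z) hb (hg'ne z hz)
    ((hωx z hz).unique (by simpa using hlog 1)) ((hωy z hz).unique (hlog I))
    ((hcap2 y hy).trans (by rw [Real.exp_log hn, inner_mk_sub_smul, add_assoc]))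
    (hvy_line hy)
    ((hvyy_line hy).trans (by dsimp only; rw [inner_neg_right, norm_smul, norm_I, one_mul]))
    (by simpa only [hexp] using hpde z hz)
    (by simpa only [re_hopf_eq, ofReal_re] using congrArg re (hhopf z hz))

/-- Proposition 2.7 (first direction): if the vertical parameter curve `x = x₀` of a
conformal eigenline parametrization is a capillary curve with capillarity constant
`b ≠ 0`, then `2ω_x = −(4𝔮/b)e^{−ω} − (2(1−c)/b)e^{ω}` along it. -/
theorem capillary_implies_omega_equation
    (s₁ s₂ t₁ t₂ : ℝ) (V : Set ℂ)
    (hV : V = {z : ℂ | z.re ∈ Ioo s₁ s₂ ∧ z.im ∈ Ioo t₁ t₂})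
    (g g' : ℂ → ℂ)
    (hg : ∀ z ∈ V, HasDerivAt g (g' z) z)
    (hg'ne : ∀ z ∈ V, g' z ≠ 0)
    (ω σ : ℂ → ℝ)
    (hωdef : ∀ z, ω z = Real.log (‖g' z‖))
    (hσdef : ∀ z, σ z = -‖g z‖^2 / 2)
    (ωx ωy : ℂ → ℝ)
    (hωx : ∀ z ∈ V, HasDerivAt (fun t : ℝ => ω (z + t)) (ωx z) 0)
    (hωy : ∀ z ∈ V, HasDerivAt (fun t : ℝ => ω (z + t * Complex.I)) (ωy z) 0)
    (v : ℂ → ℝ) (hv : ContDiffOn ℝ 2 v V)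
    (vx vy vxx vyy vxy : ℂ → ℝ)
    (hvx : ∀ z ∈ V, HasDerivAt (fun t : ℝ => v (z + t)) (vx z) 0)
    (hvy : ∀ z ∈ V, HasDerivAt (fun t : ℝ => v (z + t * Complex.I)) (vy z) 0)
    (hvxx : ∀ z ∈ V, HasDerivAt (fun t : ℝ => vx (z + t)) (vxx z) 0)
    (hvyy : ∀ z ∈ V, HasDerivAt (fun t : ℝ => vy (z + t * Complex.I)) (vyy z) 0)
    (hvxy : ∀ z ∈ V, HasDerivAt (fun t : ℝ => vx (z + t * Complex.I)) (vxy z) 0)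
    (hpde : ∀ z ∈ V, vxx z + vyy z + 2 * Real.exp (2 * ω z) = 0)
    (𝔮 : ℝ)
    (hhopf : ∀ z ∈ V,
      ((vxx z : ℂ) - (vyy z : ℂ) - 2 * Complex.I * (vxy z : ℂ)) / 4
        - 2 * (((ωx z : ℂ) - Complex.I * (ωy z : ℂ)) / 2)
            * (((vx z : ℂ) - Complex.I * (vy z : ℂ)) / 2) = (𝔮 : ℂ))
    (x₀ : ℝ) (hx₀ : x₀ ∈ Ioo s₁ s₂)
    (a b c d₁ d₂ : ℝ) (hb : b ≠ 0)
    (hcap1 : ∀ y ∈ Ioo t₁ t₂,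
      v ((x₀ : ℂ) + (y : ℂ) * Complex.I)
        = a + c * σ ((x₀ : ℂ) + (y : ℂ) * Complex.I)
          + (d₁ * (g ((x₀ : ℂ) + (y : ℂ) * Complex.I)).re
            + d₂ * (g ((x₀ : ℂ) + (y : ℂ) * Complex.I)).im))
    (hcap2 : ∀ y ∈ Ioo t₁ t₂,
      vx ((x₀ : ℂ) + (y : ℂ) * Complex.I)
        = b * Real.exp (ω ((x₀ : ℂ) + (y : ℂ) * Complex.I))
          + c * (-((starRingEnd ℂ) (g ((x₀ : ℂ) + (y : ℂ) * Complex.I))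
              * g' ((x₀ : ℂ) + (y : ℂ) * Complex.I)).re)
          + (d₁ * (g' ((x₀ : ℂ) + (y : ℂ) * Complex.I)).re
            + d₂ * (g' ((x₀ : ℂ) + (y : ℂ) * Complex.I)).im)) :
    ∀ y ∈ Ioo t₁ t₂,
      2 * ωx ((x₀ : ℂ) + (y : ℂ) * Complex.I)
        = -(4 * 𝔮 / b) * Real.exp (-(ω ((x₀ : ℂ) + (y : ℂ) * Complex.I)))
          - (2 * (1 - c) / b) * Real.exp (ω ((x₀ : ℂ) + (y : ℂ) * Complex.I)) :=
  capillary_implies_omega_equation_general s₁ s₂ t₁ t₂ V hV g g' hg hg'ne ω σ hωdef hσdef ωx ωy hωx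
    hωy v vx vy vxx vyy vxy hvy hvyy hpde 𝔮 hhopf x₀ hx₀ a b c d₁ d₂ hb hcap1 hcap2
end

section
/- Let 𝒱 = (s₁,s₂)×(t₁,t₂) ⊆ ℝ² ≅ ℂ, let g be holomorphic on 𝒱 with g'(z) ≠ 0 for all z ∈ 𝒱, and set ω = log|g'| and σ = −|g|²/2. Let 𝔮 ∈ ℝ and let v : 𝒱 → ℝ be a C² function satisfying v_xx + v_yy + 2e^{2ω} = 0 and v_zz − 2ω_z v_z = 𝔮 on 𝒱, where v_z = (v_x − iv_y)/2, v_zz = (v_xx − v_yy − 2iv_xy)/4 and ω_z = (ω_x − iω_y)/2. Fix x₀ ∈ (s₁,s₂) and suppose there exist α, β ∈ ℝ with α ≠ 0 such that 2ω_x(x₀,y) = −α·e^{−ω(x₀,y)} − β·e^{ω(x₀,y)} for all y ∈ (t₁,t₂). Then, setting b = 4𝔮/α and c = 1 − 2𝔮β/α, there exist a, d₁, d₂ ∈ ℝ such that, with L = d₁·Re g + d₂·Im g, for all y ∈ (t₁,t₂): v(x₀,y) = a + c·σ(x₀,y) + L(x₀,y) and v_x(x₀,y) = b·e^{ω(x₀,y)}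 + c·σ_x(x₀,y) + L_x(x₀,y); that is, the curve y ↦ g(x₀+iy) is a capillary curve of v. -/
/-!
Restrict everything to the line `γ(y) = x₀ + iy` and put `W = v_x − i v_y = 2 v_z`. The Hopf
equation together with `Δv = −2e^{2ω}` gives `∂_y W = i (e^{2ω} + 2𝔮 + 2 ω_z W)`, and
`ω = log |g'|` gives `g'' = 2 ω_z g'`. Using `2ω_x = −α e^{−ω} − β e^{ω}`, a direct computation
shows that `η = (W − b e^{ω}) / g' + c · conj g` is constant along `γ`. Writing `η = d₁ − i d₂`,
the real part of `W − b e^{ω} = (η − c · conj g) g'` is the identity for `v_x`, and its imaginary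
part says that `v − c σ − Re (η g)` has vanishing `y`-derivative, which gives the identity for `v`.
-/

open Set Complex ComplexConjugate

theorem exists_forall_eq_of_hasDerivAt_zero {𝕜 E : Type*} [RCLike 𝕜]
    [NormedAddCommGroup E] [NormedSpace 𝕜 E] {f : 𝕜 → E} {s : Set 𝕜}
    (hs : IsOpen s) (hs' : IsPreconnected s) (hf : ∀ y ∈ s, HasDerivAt f 0 y) :
    ∃ c, ∀ y ∈ s, f y = c :=
  hs.exists_is_const_of_deriv_eq_zero hs'
    (fun y hy => (hf y hy).differentiableAt.differentiableWithinAt) fun y hy => (hf y hy).deriv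

theorem HasDerivAt.log_norm_s4 {F : ℝ → ℂ} {A : ℂ} {t : ℝ} (hF : HasDerivAt F A t) (h0 : F t ≠ 0) :
    HasDerivAt (fun s => Real.log ‖F s‖) (A / F t).re t := by
  have hsq := (hF.norm_sq.log (by positivity)).div_const 2
  simp only [Real.log_pow, Nat.cast_ofNat] at hsq
  have hfun : (fun s => 2 * Real.log ‖F s‖ / 2) = fun s => Real.log ‖F s‖ := by
    funext s; ring
  rw [hfun] at hsq
  refine hsq.congr_deriv ?_
  rw [Complex.inner, div_re, ← normSq_eq_norm_sq]
  simp only [mul_re, conj_re, conj_im]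
  field_simp
  ring

theorem HasDerivAt.comp_vertical_line {f : ℂ → ℂ} {f' : ℂ} {x₀ y : ℝ}
    (hf : HasDerivAt f f' ((x₀ : ℂ) + (y : ℂ) * I)) :
    HasDerivAt (fun s : ℝ => f ((x₀ : ℂ) + (s : ℂ) * I)) (f' * I) y := by
  have hγ : HasDerivAt (fun s : ℝ => (x₀ : ℂ) + (s : ℂ) * I) I y := by
    simpa using ((hasDerivAt_id (y : ℂ)).comp_ofReal.mul_const I).const_add (x₀ : ℂ)
  exact hf.comp y hγ

theorem hasDerivAt_vertical_line_of_shift {E : Type*} [NormedAddCommGroup E] [NormedSpace ℝ E]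
    {f : ℂ → E} {d : E} {x₀ y : ℝ}
    (h : HasDerivAt (fun t : ℝ => f ((x₀ : ℂ) + (y : ℂ) * I + (t : ℂ) * I)) d 0) :
    HasDerivAt (fun s : ℝ => f ((x₀ : ℂ) + (s : ℂ) * I)) d y := by
  have h' := (sub_self y ▸ h).comp_sub_const y y
  convert h' using 2 with s
  push_cast; ring_nf

theorem differentiableOn_of_forall_hasDerivAt {g g' : ℂ → ℂ} {V : Set ℂ} (hV : IsOpen V)
    (hg : ∀ z ∈ V, HasDerivAt g (g' z) z) : DifferentiableOn ℂ g' V := by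
  have hd : DifferentiableOn ℂ (deriv g) V :=
    DifferentiableOn.deriv (fun z hz => (hg z hz).differentiableAt.differentiableWithinAt) hV
  intro z hz
  refine ((hd z hz).differentiableAt (hV.mem_nhds hz)).congr_of_eventuallyEq ?_
    |>.differentiableWithinAt
  filter_upwards [hV.mem_nhds hz] with w hw
  exact (hg w hw).deriv.symm

theorem HasDerivAt.eq_mul_of_log_norm {f : ℂ → ℂ} {f' z : ℂ} {ux uy : ℝ}
    (hf : HasDerivAt f f' z) (hz : f z ≠ 0)
    (hx : HasDerivAt (fun t : ℝ => Real.log ‖f (z + t)‖) ux 0)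
    (hy : HasDerivAt (fun t : ℝ => Real.log ‖f (z + t * I)‖) uy 0) :
    f' = f z * (ux - uy * I) := by
  have hline : ∀ c : ℂ, HasDerivAt (fun t : ℝ => z + t * c) c 0 := fun c => by
    simpa using ((hasDerivAt_id ((0 : ℝ) : ℂ)).comp_ofReal.mul_const c).const_add z
  have hx' := ((show HasDerivAt f f' (z + (0 : ℝ) * 1) by simpa using hf).comp (0 : ℝ)
    (hline 1)).log_norm_s4 (by simpa using hz)
  have hy' := ((show HasDerivAt f f' (z + (0 : ℝ) * I) by simpa using hf).comp (0 : ℝ)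
    (hline I)).log_norm_s4 (by simpa using hz)
  simp only [Function.comp_def, mul_one, ofReal_zero, zero_mul, add_zero] at hx' hy'
  have hre_im : ∀ w : ℂ, ((w.re : ℂ) - ((w * I).re : ℂ) * I) = w := fun w => by
    apply Complex.ext <;> simp
  rw [hx.unique hx', hy.unique hy', mul_div_right_comm, hre_im, mul_div_cancel₀ _ hz]

theorem vxy_sub_vyy_mul_I_eq_of_hopf {vx vy vxx vyy vxy ωx ωy q e : ℝ}
    (hpde : vxx + vyy + 2 * e = 0)
    (hhopf : ((vxx : ℂ) - (vyy : ℂ) - 2 * I * (vxy : ℂ)) / 4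
        - 2 * (((ωx : ℂ) - I * (ωy : ℂ)) / 2) * (((vx : ℂ) - I * (vy : ℂ)) / 2) = (q : ℂ)) :
    (vxy : ℂ) - vyy * I = I * (e + 2 * q + (ωx - ωy * I) * (vx - vy * I)) := by
  have hpdeC : (vxx + vyy + 2 * e : ℂ) = 0 := by exact_mod_cast hpde
  linear_combination (2 * I) * hhopf - (I / 2) * hpdeC + vxy * I_sq

theorem hasDerivAt_capillary_invariant {G G₁ W : ℝ → ℂ} {ω : ℝ → ℝ} {y ωx ωy q α β b c : ℝ}
    (hG : HasDerivAt G (G₁ y * I) y)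
    (hG₁ : HasDerivAt G₁ (G₁ y * (ωx - ωy * I) * I) y)
    (hω : HasDerivAt ω ωy y)
    (hnorm : ‖G₁ y‖ = Real.exp (ω y))
    (hW : HasDerivAt W (I * (Real.exp (2 * ω y) + 2 * q + (ωx - ωy * I) * W y)) y)
    (hcap : 2 * ωx = -α * Real.exp (-ω y) - β * Real.exp (ω y))
    (hb : b * α = 4 * q) (hc : c + b * β / 2 = 1) :
    HasDerivAt (fun s => (W s - b * Real.exp (ω s)) / G₁ s + c * conj (G s)) 0 y := by
  have hG₁0 : G₁ y ≠ 0 := norm_pos_iff.mp (hnorm ▸ Real.exp_pos _)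
  have hconj : HasDerivAt (fun s => conj (G s)) (conj (G₁ y * I)) y := hG.star
  have hinvariant := ((hW.sub (hω.exp.ofReal_comp.const_mul (b : ℂ))).div hG₁ hG₁0).add
    (hconj.const_mul (c : ℂ))
  refine hinvariant.congr_deriv ?_
  rw [Pi.sub_apply, div_add' _ _ _ (pow_ne_zero 2 hG₁0), div_eq_zero_iff]
  left
  set E := Real.exp (ω y)
  have hsq : G₁ y * conj (G₁ y) = (E : ℂ) ^ 2 := by
    rw [mul_conj, normSq_eq_norm_sq, hnorm]; push_cast; rfl
  have h2 : Real.exp (2 * ω y) = E ^ 2 := by rw [← Real.exp_nat_mul]; norm_num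
  have hinv : Real.exp (-ω y) * E = 1 := by rw [← Real.exp_add]; simp
  have hcapE : 2 * ωx * E = -α - β * E ^ 2 := by linear_combination E * hcap - α * hinv
  have hcapC : (2 * ωx * E : ℂ) = -α - β * E ^ 2 := by exact_mod_cast hcapE
  have hbC : (b * α : ℂ) = 4 * q := by exact_mod_cast hb
  have hcC : (c + b * β / 2 : ℂ) = 1 := by exact_mod_cast hc
  rw [h2]
  simp only [map_mul, conj_I]
  push_cast
  linear_combination (-I * c * G₁ y) * hsq + (-b * E * ωy * G₁ y) * I_sq
    + (I * b * G₁ y / 2) * hcapC - (I * G₁ y / 2) * hbC - (I * G₁ y * E ^ 2) * hcC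

theorem exists_capillary_of_invariant_eq {G G₁ : ℝ → ℂ} {u ux uy ρ : ℝ → ℝ} {t₁ t₂ b c : ℝ}
    {η : ℂ} (hG : ∀ y ∈ Ioo t₁ t₂, HasDerivAt G (G₁ y * I) y)
    (hu : ∀ y ∈ Ioo t₁ t₂, HasDerivAt u (uy y) y) (hG₁ : ∀ y ∈ Ioo t₁ t₂, G₁ y ≠ 0)
    (hη : ∀ y ∈ Ioo t₁ t₂, ((ux y : ℂ) - uy y * I - b * ρ y) / G₁ y + c * conj (G y) = η) :
    ∃ a, ∀ y ∈ Ioo t₁ t₂,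
      u y = a + c * (-‖G y‖ ^ 2 / 2) + (η.re * (G y).re + -η.im * (G y).im)
      ∧ ux y = b * ρ y + c * (-(conj (G y) * G₁ y).re)
          + (η.re * (G₁ y).re + -η.im * (G₁ y).im) := by
  have hlin : ∀ y ∈ Ioo t₁ t₂,
      (ux y : ℂ) - uy y * I - b * ρ y = (η - c * conj (G y)) * G₁ y := fun y hy =>
    (div_eq_iff (hG₁ y hy)).mp (eq_sub_of_add_eq (hη y hy))
  have hΦ : ∀ y ∈ Ioo t₁ t₂,
      HasDerivAt (fun s => u s - c * (-‖G s‖ ^ 2 / 2) - (η * G s).re) 0 y := by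
    intro y hy
    have hRe : HasDerivAt (fun s => (η * G s).re) (η * (G₁ y * I)).re y := by
      simpa [Function.comp_def] using
        reCLM.hasFDerivAt.comp_hasDerivAt y ((hG y hy).const_mul η)
    have hσ := ((hG y hy).norm_sq.neg.div_const 2).const_mul c
    refine (((hu y hy).sub hσ).sub hRe).congr_deriv ?_
    have him := congrArg im (hlin y hy)
    simp only [sub_re, sub_im, mul_im, mul_re, ofReal_re, ofReal_im, I_re, I_im, conj_re,
      conj_im] at him
    rw [Complex.inner]
    simp only [mul_re, mul_im, I_re, I_im, conj_re, conj_im]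
    linear_combination -him
  obtain ⟨a, ha⟩ := exists_forall_eq_of_hasDerivAt_zero isOpen_Ioo isPreconnected_Ioo hΦ
  refine ⟨a, fun y hy => ⟨?_, ?_⟩⟩
  · have := ha y hy
    simp only [mul_re] at this
    linear_combination this
  · have hre := congrArg re (hlin y hy)
    simp only [sub_re, sub_im, mul_im, mul_re, ofReal_re, ofReal_im, I_re, I_im, conj_re,
      conj_im] at hre
    simp only [mul_re, conj_re, conj_im]
    linear_combination hre

theorem omega_equation_implies_capillary_general
    (s₁ s₂ t₁ t₂ : ℝ) (V : Set ℂ)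
    (hV : V = {z : ℂ | z.re ∈ Ioo s₁ s₂ ∧ z.im ∈ Ioo t₁ t₂})
    (g g' : ℂ → ℂ)
    (hg : ∀ z ∈ V, HasDerivAt g (g' z) z)
    (hg'ne : ∀ z ∈ V, g' z ≠ 0)
    (ω σ : ℂ → ℝ)
    (hωdef : ∀ z, ω z = Real.log (‖g' z‖))
    (hσdef : ∀ z, σ z = -‖g z‖^2 / 2)
    (ωx ωy : ℂ → ℝ)
    (hωx : ∀ z ∈ V, HasDerivAt (fun t : ℝ => ω (z + t)) (ωx z) 0)
    (hωy : ∀ z ∈ V, HasDerivAt (fun t : ℝ => ω (z + t * Complex.I)) (ωy z) 0)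
    (v : ℂ → ℝ)
    (vx vy vxx vyy vxy : ℂ → ℝ)
    (hvy : ∀ z ∈ V, HasDerivAt (fun t : ℝ => v (z + t * Complex.I)) (vy z) 0)
    (hvyy : ∀ z ∈ V, HasDerivAt (fun t : ℝ => vy (z + t * Complex.I)) (vyy z) 0)
    (hvxy : ∀ z ∈ V, HasDerivAt (fun t : ℝ => vx (z + t * Complex.I)) (vxy z) 0)
    (hpde : ∀ z ∈ V, vxx z + vyy z + 2 * Real.exp (2 * ω z) = 0)
    (𝔮 : ℝ)
    (hhopf : ∀ z ∈ V,
      ((vxx z : ℂ) - (vyy z : ℂ) - 2 * Complex.I * (vxy z : ℂ)) / 4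
        - 2 * (((ωx z : ℂ) - Complex.I * (ωy z : ℂ)) / 2)
            * (((vx z : ℂ) - Complex.I * (vy z : ℂ)) / 2) = (𝔮 : ℂ))
    (x₀ : ℝ) (hx₀ : x₀ ∈ Ioo s₁ s₂)
    (α β : ℝ) (hα : α ≠ 0)
    (hcap : ∀ y ∈ Ioo t₁ t₂,
      2 * ωx ((x₀ : ℂ) + (y : ℂ) * Complex.I)
        = -α * Real.exp (-(ω ((x₀ : ℂ) + (y : ℂ) * Complex.I)))
          - β * Real.exp (ω ((x₀ : ℂ) + (y : ℂ) * Complex.I))) :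
    ∃ a d₁ d₂ : ℝ, ∀ y ∈ Ioo t₁ t₂,
      (v ((x₀ : ℂ) + (y : ℂ) * Complex.I)
        = a + (1 - 2 * 𝔮 * β / α) * σ ((x₀ : ℂ) + (y : ℂ) * Complex.I)
          + (d₁ * (g ((x₀ : ℂ) + (y : ℂ) * Complex.I)).re
            + d₂ * (g ((x₀ : ℂ) + (y : ℂ) * Complex.I)).im))
      ∧ (vx ((x₀ : ℂ) + (y : ℂ) * Complex.I)
        = (4 * 𝔮 / α) * Real.exp (ω ((x₀ : ℂ) + (y : ℂ) * Complex.I))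
          + (1 - 2 * 𝔮 * β / α)
              * (-((starRingEnd ℂ) (g ((x₀ : ℂ) + (y : ℂ) * Complex.I))
                  * g' ((x₀ : ℂ) + (y : ℂ) * Complex.I)).re)
          + (d₁ * (g' ((x₀ : ℂ) + (y : ℂ) * Complex.I)).re
            + d₂ * (g' ((x₀ : ℂ) + (y : ℂ) * Complex.I)).im)) := by
  have hVopen : IsOpen V :=
    hV ▸ (isOpen_Ioo.preimage continuous_re).inter (isOpen_Ioo.preimage continuous_im)
  have hγ : ∀ y ∈ Ioo t₁ t₂, (x₀ : ℂ) + (y : ℂ) * I ∈ V := fun y hy => by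
    rw [hV]; simpa using ⟨hx₀, hy⟩
  have hg'diff := differentiableOn_of_forall_hasDerivAt hVopen hg
  have hkey : ∀ z ∈ V, HasDerivAt g' (g' z * (ωx z - ωy z * I)) z := fun z hz => by
    have h := (hg'diff z hz |>.differentiableAt (hVopen.mem_nhds hz)).hasDerivAt
    rwa [h.eq_mul_of_log_norm (hg'ne z hz) (by simpa only [hωdef] using hωx z hz)
      (by simpa only [hωdef] using hωy z hz)] at h
  have hinv : ∀ y ∈ Ioo t₁ t₂, HasDerivAt (fun s : ℝ =>
      ((vx ((x₀ : ℂ) + s * I) : ℂ) - vy ((x₀ : ℂ) + s * I) * I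
        - ((4 * 𝔮 / α : ℝ) : ℂ) * Real.exp (ω ((x₀ : ℂ) + s * I))) / g' ((x₀ : ℂ) + s * I)
        + ((1 - 2 * 𝔮 * β / α : ℝ) : ℂ) * conj (g ((x₀ : ℂ) + s * I))) 0 y := fun y hy => by
    have hz := hγ y hy
    have hW := (hasDerivAt_vertical_line_of_shift (hvxy _ hz)).ofReal_comp.sub
      ((hasDerivAt_vertical_line_of_shift (hvyy _ hz)).ofReal_comp.mul_const I)
    rw [vxy_sub_vyy_mul_I_eq_of_hopf (hpde _ hz) (hhopf _ hz)] at hW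
    refine hasDerivAt_capillary_invariant (hg _ hz).comp_vertical_line
      (hkey _ hz).comp_vertical_line (hasDerivAt_vertical_line_of_shift (hωy _ hz)) ?_ hW
      (hcap y hy) (by field_simp) (by field_simp; ring)
    rw [hωdef, Real.exp_log (norm_pos_iff.2 (hg'ne _ hz))]
  obtain ⟨η, hη⟩ := exists_forall_eq_of_hasDerivAt_zero isOpen_Ioo isPreconnected_Ioo hinv
  obtain ⟨a, ha⟩ := exists_capillary_of_invariant_eq
    (fun y hy => (hg _ (hγ y hy)).comp_vertical_line)
    (fun y hy => hasDerivAt_vertical_line_of_shift (hvy _ (hγ y hy)))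
    (fun y hy => hg'ne _ (hγ y hy)) hη
  exact ⟨a, η.re, -η.im, fun y hy => by simpa only [hσdef] using ha y hy⟩

/-- Proposition 2.7 (converse direction): if `2ω_x = −α e^{−ω} − β e^{ω}` with `α ≠ 0`
holds along the vertical parameter curve `x = x₀`, then that curve is a capillary
curve of `v`, with `b = 4𝔮/α` and `c = 1 − 2𝔮β/α`. -/
theorem omega_equation_implies_capillary
    (s₁ s₂ t₁ t₂ : ℝ) (V : Set ℂ)
    (hV : V = {z : ℂ | z.re ∈ Ioo s₁ s₂ ∧ z.im ∈ Ioo t₁ t₂})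
    (g g' : ℂ → ℂ)
    (hg : ∀ z ∈ V, HasDerivAt g (g' z) z)
    (hg'ne : ∀ z ∈ V, g' z ≠ 0)
    (ω σ : ℂ → ℝ)
    (hωdef : ∀ z, ω z = Real.log (‖g' z‖))
    (hσdef : ∀ z, σ z = -‖g z‖^2 / 2)
    (ωx ωy : ℂ → ℝ)
    (hωx : ∀ z ∈ V, HasDerivAt (fun t : ℝ => ω (z + t)) (ωx z) 0)
    (hωy : ∀ z ∈ V, HasDerivAt (fun t : ℝ => ω (z + t * Complex.I)) (ωy z) 0)
    (v : ℂ → ℝ) (hv : ContDiffOn ℝ 2 v V)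
    (vx vy vxx vyy vxy : ℂ → ℝ)
    (hvx : ∀ z ∈ V, HasDerivAt (fun t : ℝ => v (z + t)) (vx z) 0)
    (hvy : ∀ z ∈ V, HasDerivAt (fun t : ℝ => v (z + t * Complex.I)) (vy z) 0)
    (hvxx : ∀ z ∈ V, HasDerivAt (fun t : ℝ => vx (z + t)) (vxx z) 0)
    (hvyy : ∀ z ∈ V, HasDerivAt (fun t : ℝ => vy (z + t * Complex.I)) (vyy z) 0)
    (hvxy : ∀ z ∈ V, HasDerivAt (fun t : ℝ => vx (z + t * Complex.I)) (vxy z) 0)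
    (hpde : ∀ z ∈ V, vxx z + vyy z + 2 * Real.exp (2 * ω z) = 0)
    (𝔮 : ℝ)
    (hhopf : ∀ z ∈ V,
      ((vxx z : ℂ) - (vyy z : ℂ) - 2 * Complex.I * (vxy z : ℂ)) / 4
        - 2 * (((ωx z : ℂ) - Complex.I * (ωy z : ℂ)) / 2)
            * (((vx z : ℂ) - Complex.I * (vy z : ℂ)) / 2) = (𝔮 : ℂ))
    (x₀ : ℝ) (hx₀ : x₀ ∈ Ioo s₁ s₂)
    (α β : ℝ) (hα : α ≠ 0)
    (hcap : ∀ y ∈ Ioo t₁ t₂,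
      2 * ωx ((x₀ : ℂ) + (y : ℂ) * Complex.I)
        = -α * Real.exp (-(ω ((x₀ : ℂ) + (y : ℂ) * Complex.I)))
          - β * Real.exp (ω ((x₀ : ℂ) + (y : ℂ) * Complex.I))) :
    ∃ a d₁ d₂ : ℝ, ∀ y ∈ Ioo t₁ t₂,
      (v ((x₀ : ℂ) + (y : ℂ) * Complex.I)
        = a + (1 - 2 * 𝔮 * β / α) * σ ((x₀ : ℂ) + (y : ℂ) * Complex.I)
          + (d₁ * (g ((x₀ : ℂ) + (y : ℂ) * Complex.I)).re
            + d₂ * (g ((x₀ : ℂ) + (y : ℂ) * Complex.I)).im))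
      ∧ (vx ((x₀ : ℂ) + (y : ℂ) * Complex.I)
        = (4 * 𝔮 / α) * Real.exp (ω ((x₀ : ℂ) + (y : ℂ) * Complex.I))
          + (1 - 2 * 𝔮 * β / α)
              * (-((starRingEnd ℂ) (g ((x₀ : ℂ) + (y : ℂ) * Complex.I))
                  * g' ((x₀ : ℂ) + (y : ℂ) * Complex.I)).re)
          + (d₁ * (g' ((x₀ : ℂ) + (y : ℂ) * Complex.I)).re
            + d₂ * (g' ((x₀ : ℂ) + (y : ℂ) * Complex.I)).im)) :=
  omega_equation_implies_capillary_general s₁ s₂ t₁ t₂ V hV g g' hg hg'ne ω σ hωdef hσdef ωx ωy hωx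
    hωy v vx vy vxx vyy vxy hvy hvyy hvxy hpde 𝔮 hhopf x₀ hx₀ α β hα hcap
end

section
/- Let 𝒱 = (s₁,s₂)×(t₁,t₂) ⊆ ℝ², let ω : 𝒱 → ℝ be harmonic (smooth with ω_xx + ω_yy = 0 on 𝒱), and let α, β : (s₁,s₂) → ℝ be real analytic functions such that 2ω_x(x,y) = −α(x)·e^{−ω(x,y)} − β(x)·e^{ω(x,y)} for all (x,y) ∈ 𝒱. Assume that ω_y is not identically zero on 𝒱. Then there exists a constant δ ∈ ℝ such that α'' = δα − 2α²β and β'' = δβ − 2αβ² hold on (s₁,s₂). -/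
open Set

private lemma aux_const_of_deriv {f : ℝ → ℝ} {a b : ℝ}
    (hf : ∀ x ∈ Set.Ioo a b, HasDerivAt f 0 x) :
    ∀ x ∈ Set.Ioo a b, ∀ y ∈ Set.Ioo a b, f x = f y := by
  have key : ∀ x ∈ Set.Ioo a b, ∀ y ∈ Set.Ioo a b, x < y → f x = f y := by
    intro x hx y hy hxy
    have hsub : Set.Icc x y ⊆ Set.Ioo a b := fun z hz =>
      ⟨lt_of_lt_of_le hx.1 hz.1, lt_of_le_of_lt hz.2 hy.2⟩
    have hsub2 : Set.Ioo x y ⊆ Set.Ioo a b := fun z hz =>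
      ⟨hx.1.trans hz.1, hz.2.trans hy.2⟩
    have hcont : ContinuousOn f (Set.Icc x y) := fun z hz =>
      ((hf z (hsub hz)).continuousAt).continuousWithinAt
    obtain ⟨ξ, _, hslope⟩ := exists_hasDerivAt_eq_slope f (fun _ => 0) hxy hcont
      (fun z hz => hf z (hsub2 hz))
    have hne : y - x ≠ 0 := sub_ne_zero.2 hxy.ne'
    have h0 : (f y - f x) / (y - x) = 0 := by simpa using hslope.symm
    rcases div_eq_zero_iff.1 h0 with h | h
    · linarith
    · exact absurd h hne
  intro x hx y hy
  rcases lt_trichotomy x y with h | h | h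
  · exact key x hx y hy h
  · rw [h]
  · exact (key y hy x hx h).symm

private lemma aux_quad {p0 p1 p2 u1 u2 u3 : ℝ} (h12 : u1 ≠ u2) (h13 : u1 ≠ u3) (h23 : u2 ≠ u3)
    (e1 : p0 * u1 ^ 2 + p1 * u1 + p2 = 0) (e2 : p0 * u2 ^ 2 + p1 * u2 + p2 = 0)
    (e3 : p0 * u3 ^ 2 + p1 * u3 + p2 = 0) : p0 = 0 ∧ p1 = 0 ∧ p2 = 0 := by
  have k12 : p0 * (u1 + u2) + p1 = 0 := by
    have h : (u1 - u2) * (p0 * (u1 + u2) + p1) = 0 := by linear_combination e1 - e2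
    exact (mul_eq_zero.1 h).resolve_left (sub_ne_zero.2 h12)
  have k13 : p0 * (u1 + u3) + p1 = 0 := by
    have h : (u1 - u3) * (p0 * (u1 + u3) + p1) = 0 := by linear_combination e1 - e3
    exact (mul_eq_zero.1 h).resolve_left (sub_ne_zero.2 h13)
  have hp0 : p0 = 0 := by
    have h : (u2 - u3) * p0 = 0 := by linear_combination k12 - k13
    exact (mul_eq_zero.1 h).resolve_left (sub_ne_zero.2 h23)
  have hp1 : p1 = 0 := by linear_combination k12 - (u1 + u2) * hp0
  exact ⟨hp0, hp1, by linear_combination e1 - u1 ^ 2 * hp0 - u1 * hp1⟩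

/-- Proposition 3.3: if a harmonic function `ω` on a rectangle is foliated by capillary
curves, i.e. `2ω_x = −α(x)e^{−ω} − β(x)e^{ω}` with `α, β` real analytic, and `ω_y` is not
identically zero, then `(α,β)` solves `α'' = δα − 2α²β`, `β'' = δβ − 2αβ²` for some `δ ∈ ℝ`. -/
theorem foliation_coefficients_solve_system
    (s₁ s₂ t₁ t₂ : ℝ) (V : Set (ℝ × ℝ))
    (hV : V = Ioo s₁ s₂ ×ˢ Ioo t₁ t₂)
    (ω ωx ωy ωxx ωyy : ℝ × ℝ → ℝ)
    (hsmooth : ContDiffOn ℝ (⊤ : ℕ∞) ω V)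
    (hωx : ∀ p ∈ V, HasDerivAt (fun s => ω (s, p.2)) (ωx p) p.1)
    (hωy : ∀ p ∈ V, HasDerivAt (fun t => ω (p.1, t)) (ωy p) p.2)
    (hωxx : ∀ p ∈ V, HasDerivAt (fun s => ωx (s, p.2)) (ωxx p) p.1)
    (hωyy : ∀ p ∈ V, HasDerivAt (fun t => ωy (p.1, t)) (ωyy p) p.2)
    (hharm : ∀ p ∈ V, ωxx p + ωyy p = 0)
    (α β α' β' α'' β'' : ℝ → ℝ)
    (hαanal : AnalyticOnNhd ℝ α (Ioo s₁ s₂))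
    (hβanal : AnalyticOnNhd ℝ β (Ioo s₁ s₂))
    (hα' : ∀ x ∈ Ioo s₁ s₂, HasDerivAt α (α' x) x)
    (hα'' : ∀ x ∈ Ioo s₁ s₂, HasDerivAt α' (α'' x) x)
    (hβ' : ∀ x ∈ Ioo s₁ s₂, HasDerivAt β (β' x) x)
    (hβ'' : ∀ x ∈ Ioo s₁ s₂, HasDerivAt β' (β'' x) x)
    (hfol : ∀ p ∈ V, 2 * ωx p = -α p.1 * Real.exp (-ω p) - β p.1 * Real.exp (ω p))
    (hωyne : ∃ p ∈ V, ωy p ≠ 0) :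
    ∃ δ : ℝ, ∀ x ∈ Ioo s₁ s₂,
      α'' x = δ * α x - 2 * (α x) ^ 2 * β x ∧
      β'' x = δ * β x - 2 * α x * (β x) ^ 2 := by
  obtain ⟨p₀, hp₀V, hp₀y⟩ := hωyne
  have hVopen : IsOpen V := by rw [hV]; exact isOpen_Ioo.prod isOpen_Ioo
  have hmem : ∀ p : ℝ × ℝ, p ∈ V ↔ p.1 ∈ Ioo s₁ s₂ ∧ p.2 ∈ Ioo t₁ t₂ := by
    intro p; rw [hV]; exact Set.mem_prod
  have hs12 : s₁ < s₂ := ((hmem p₀).1 hp₀V).1.1.trans ((hmem p₀).1 hp₀V).1.2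
  have ht12 : t₁ < t₂ := ((hmem p₀).1 hp₀V).2.1.trans ((hmem p₀).1 hp₀V).2.2
  -- eventually-in-V facts
  have hevV2 : ∀ p ∈ V, ∀ᶠ t in nhds p.2, (p.1, t) ∈ V := by
    intro p hp
    have h1 := ((hmem p).1 hp).1
    filter_upwards [Ioo_mem_nhds ((hmem p).1 hp).2.1 ((hmem p).1 hp).2.2] with t ht
    exact (hmem _).2 ⟨h1, ht⟩
  have hevV1 : ∀ p ∈ V, ∀ᶠ x in nhds p.1, (x, p.2) ∈ V := by
    intro p hp
    have h2 := ((hmem p).1 hp).2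
    filter_upwards [Ioo_mem_nhds ((hmem p).1 hp).1.1 ((hmem p).1 hp).1.2] with x hx
    exact (hmem _).2 ⟨hx, h2⟩
  -- curves
  have hcurve1 : ∀ (y x : ℝ), HasDerivAt (fun s => ((s, y) : ℝ × ℝ)) (1, 0) x :=
    fun y x => (hasDerivAt_id x).prodMk (hasDerivAt_const x y)
  have hcurve2 : ∀ (x y : ℝ), HasDerivAt (fun t => ((x, t) : ℝ × ℝ)) (0, 1) y :=
    fun x y => (hasDerivAt_const y x).prodMk (hasDerivAt_id y)
  -- fderiv infrastructure
  have hωC : ∀ p ∈ V, ContDiffAt ℝ (⊤ : ℕ∞) ω p := fun p hp => hsmooth.contDiffAt (hVopen.mem_nhds hp)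
  have hωFD : ∀ p ∈ V, HasFDerivAt ω (fderiv ℝ ω p) p := fun p hp =>
    ((hωC p hp).differentiableAt (by simp)).hasFDerivAt
  have hΦC : ∀ p ∈ V, ContDiffAt ℝ (⊤ : ℕ∞) (fderiv ℝ ω) p := fun p hp =>
    (hωC p hp).fderiv_right (by simp)
  have hΦFD : ∀ p ∈ V, HasFDerivAt (fderiv ℝ ω) (fderiv ℝ (fderiv ℝ ω) p) p := fun p hp =>
    ((hΦC p hp).differentiableAt (by simp)).hasFDerivAt
  have hωx_eq : ∀ p ∈ V, ωx p = fderiv ℝ ω p (1, 0) := by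
    intro p hp
    have h1 : HasDerivAt (fun s => ω (s, p.2)) (fderiv ℝ ω p (1, 0)) p.1 :=
      (hωFD p hp).comp_hasDerivAt p.1 (hcurve1 p.2 p.1)
    exact (hωx p hp).unique h1
  have hωy_eq : ∀ p ∈ V, ωy p = fderiv ℝ ω p (0, 1) := by
    intro p hp
    have h1 : HasDerivAt (fun t => ω (p.1, t)) (fderiv ℝ ω p (0, 1)) p.2 :=
      (hωFD p hp).comp_hasDerivAt p.2 (hcurve2 p.1 p.2)
    exact (hωy p hp).unique h1
  set ωxy : ℝ × ℝ → ℝ := fun p => fderiv ℝ (fderiv ℝ ω) p (0, 1) (1, 0) with hωxydef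
  have hsymm : ∀ p ∈ V, fderiv ℝ (fderiv ℝ ω) p (1, 0) (0, 1) = ωxy p := by
    intro p hp
    apply second_derivative_symmetric_of_eventually (f := ω) ?_ (hΦFD p hp)
    filter_upwards [hVopen.mem_nhds hp] with q hq using hωFD q hq
  have hωxy_y : ∀ p ∈ V, HasDerivAt (fun t => ωx (p.1, t)) (ωxy p) p.2 := by
    intro p hp
    have h1 : HasDerivAt (fun t => fderiv ℝ ω (p.1, t)) (fderiv ℝ (fderiv ℝ ω) p (0, 1)) p.2 :=
      (hΦFD p hp).comp_hasDerivAt p.2 (hcurve2 p.1 p.2)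
    have h2 : HasDerivAt (fun t => fderiv ℝ ω (p.1, t) (1, 0)) (ωxy p) p.2 := by
      have := h1.clm_apply (hasDerivAt_const p.2 ((1 : ℝ), (0 : ℝ)))
      simpa using this
    apply h2.congr_of_eventuallyEq
    filter_upwards [hevV2 p hp] with t ht using hωx_eq _ ht
  have hωxy_x : ∀ p ∈ V, HasDerivAt (fun x => ωy (x, p.2)) (ωxy p) p.1 := by
    intro p hp
    have h1 : HasDerivAt (fun x => fderiv ℝ ω (x, p.2)) (fderiv ℝ (fderiv ℝ ω) p (1, 0)) p.1 :=
      (hΦFD p hp).comp_hasDerivAt p.1 (hcurve1 p.2 p.1)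
    have h2 : HasDerivAt (fun x => fderiv ℝ ω (x, p.2) (0, 1)) (ωxy p) p.1 := by
      have := h1.clm_apply (hasDerivAt_const p.1 ((0 : ℝ), (1 : ℝ)))
      rw [← hsymm p hp]
      simpa using this
    apply h2.congr_of_eventuallyEq
    filter_upwards [hevV1 p hp] with x hx using hωy_eq _ hx
  -- first-order consequences of the foliation identity
  have hfolxy : ∀ p ∈ V, 2 * ωxy p =
      ωy p * (α p.1 * Real.exp (-ω p) - β p.1 * Real.exp (ω p)) := by
    intro p hp
    have hω := hωy p hp
    have hv : HasDerivAt (fun t => Real.exp (-ω (p.1, t))) (Real.exp (-ω p) * -ωy p) p.2 :=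
      (hω.neg).exp
    have hu : HasDerivAt (fun t => Real.exp (ω (p.1, t))) (Real.exp (ω p) * ωy p) p.2 := hω.exp
    have hrhs : HasDerivAt
        (fun t => -α p.1 * Real.exp (-ω (p.1, t)) - β p.1 * Real.exp (ω (p.1, t)))
        (-α p.1 * (Real.exp (-ω p) * -ωy p) - β p.1 * (Real.exp (ω p) * ωy p)) p.2 :=
      (hv.const_mul (-α p.1)).sub (hu.const_mul (β p.1))
    have hlhs : HasDerivAt (fun t => 2 * ωx (p.1, t)) (2 * ωxy p) p.2 :=
      (hωxy_y p hp).const_mul 2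
    have heq : (fun t => 2 * ωx (p.1, t)) =ᶠ[nhds p.2]
        (fun t => -α p.1 * Real.exp (-ω (p.1, t)) - β p.1 * Real.exp (ω (p.1, t))) := by
      filter_upwards [hevV2 p hp] with t ht using hfol _ ht
    have h2 := (hrhs.congr_of_eventuallyEq heq).unique hlhs
    linear_combination -h2
  have hfolxx : ∀ p ∈ V, 2 * ωxx p =
      -α' p.1 * Real.exp (-ω p) - β' p.1 * Real.exp (ω p)
        + (α p.1 * Real.exp (-ω p) - β p.1 * Real.exp (ω p)) * ωx p := by
    intro p hp
    have hx1 := hωx p hp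
    have hx0 : p.1 ∈ Ioo s₁ s₂ := ((hmem p).1 hp).1
    have hv : HasDerivAt (fun x => Real.exp (-ω (x, p.2))) (Real.exp (-ω p) * -ωx p) p.1 :=
      (hx1.neg).exp
    have hu : HasDerivAt (fun x => Real.exp (ω (x, p.2))) (Real.exp (ω p) * ωx p) p.1 := hx1.exp
    have hrhs : HasDerivAt
        (fun x => -α x * Real.exp (-ω (x, p.2)) - β x * Real.exp (ω (x, p.2)))
        ((-α' p.1 * Real.exp (-ω p) + -α p.1 * (Real.exp (-ω p) * -ωx p))
          - (β' p.1 * Real.exp (ω p) + β p.1 * (Real.exp (ω p) * ωx p))) p.1 :=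
      (((hα' _ hx0).neg).mul hv).sub ((hβ' _ hx0).mul hu)
    have hlhs : HasDerivAt (fun x => 2 * ωx (x, p.2)) (2 * ωxx p) p.1 :=
      (hωxx p hp).const_mul 2
    have heq : (fun x => 2 * ωx (x, p.2)) =ᶠ[nhds p.1]
        (fun x => -α x * Real.exp (-ω (x, p.2)) - β x * Real.exp (ω (x, p.2))) := by
      filter_upwards [hevV1 p hp] with x hx using hfol _ hx
    have h2 := (hrhs.congr_of_eventuallyEq heq).unique hlhs
    linear_combination -h2
  have h2ωyy : ∀ p ∈ V, 2 * ωyy p = α' p.1 * Real.exp (-ω p) + β' p.1 * Real.exp (ω p)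
      + (α p.1 ^ 2 * Real.exp (-ω p) ^ 2 - β p.1 ^ 2 * Real.exp (ω p) ^ 2) / 2 := by
    intro p hp
    linear_combination 2 * hharm p hp - hfolxx p hp
      - ((α p.1 * Real.exp (-ω p) - β p.1 * Real.exp (ω p)) / 2) * hfol p hp
  -- the first integral  c(x)  with  ωy² = G + c
  have hy₀ : (t₁ + t₂) / 2 ∈ Ioo t₁ t₂ := ⟨by linarith, by linarith⟩
  set y₀ : ℝ := (t₁ + t₂) / 2 with hy₀def
  set c : ℝ → ℝ := fun x => ωy (x, y₀) ^ 2 + α' x * Real.exp (-ω (x, y₀))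
      - β' x * Real.exp (ω (x, y₀))
      + (α x ^ 2 * Real.exp (-ω (x, y₀)) ^ 2 + β x ^ 2 * Real.exp (ω (x, y₀)) ^ 2) / 4 with hcdef
  have hQ : ∀ p ∈ V, ωy p ^ 2 + α' p.1 * Real.exp (-ω p) - β' p.1 * Real.exp (ω p)
      + (α p.1 ^ 2 * Real.exp (-ω p) ^ 2 + β p.1 ^ 2 * Real.exp (ω p) ^ 2) / 4 = c p.1 := by
    intro p hp
    obtain ⟨hpx, hpy⟩ := (hmem p).1 hp
    have hder : ∀ t ∈ Ioo t₁ t₂, HasDerivAt (fun t => ωy (p.1, t) ^ 2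
        + α' p.1 * Real.exp (-ω (p.1, t)) - β' p.1 * Real.exp (ω (p.1, t))
        + (α p.1 ^ 2 * Real.exp (-ω (p.1, t)) ^ 2
           + β p.1 ^ 2 * Real.exp (ω (p.1, t)) ^ 2) / 4) 0 t := by
      intro t ht
      have hqV : (p.1, t) ∈ V := (hmem _).2 ⟨hpx, ht⟩
      have hω := hωy (p.1, t) hqV
      have hv : HasDerivAt (fun t' => Real.exp (-ω (p.1, t')))
          (Real.exp (-ω (p.1, t)) * -ωy (p.1, t)) t := (hω.neg).exp
      have hu : HasDerivAt (fun t' => Real.exp (ω (p.1, t')))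
          (Real.exp (ω (p.1, t)) * ωy (p.1, t)) t := hω.exp
      have hall := ((((hωyy (p.1, t) hqV).pow 2).add (hv.const_mul (α' p.1))).sub
          (hu.const_mul (β' p.1))).add
          ((((hv.pow 2).const_mul (α p.1 ^ 2)).add ((hu.pow 2).const_mul (β p.1 ^ 2))).div_const 4)
      refine hall.congr_deriv ?_
      symm
      push_cast
      linear_combination -(ωy (p.1, t)) * h2ωyy (p.1, t) hqV
    have := aux_const_of_deriv hder p.2 hpy y₀ hy₀
    exact this
  -- derivative of c
  set K : ℝ × ℝ → ℝ := fun p => 2 * ωy p * ωxy p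
      + (α'' p.1 * Real.exp (-ω p) - α' p.1 * (Real.exp (-ω p) * ωx p))
      - (β'' p.1 * Real.exp (ω p) + β' p.1 * (Real.exp (ω p) * ωx p))
      + (2 * α p.1 * α' p.1 * Real.exp (-ω p) ^ 2 - 2 * α p.1 ^ 2 * Real.exp (-ω p) ^ 2 * ωx p
         + 2 * β p.1 * β' p.1 * Real.exp (ω p) ^ 2
         + 2 * β p.1 ^ 2 * Real.exp (ω p) ^ 2 * ωx p) / 4 with hKdef
  have hcd : ∀ p ∈ V, HasDerivAt c (K p) p.1 := by
    intro p hp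
    obtain ⟨hpx, hpy⟩ := (hmem p).1 hp
    have heq : c =ᶠ[nhds p.1] fun x => ωy (x, p.2) ^ 2 + α' x * Real.exp (-ω (x, p.2))
        - β' x * Real.exp (ω (x, p.2))
        + (α x ^ 2 * Real.exp (-ω (x, p.2)) ^ 2 + β x ^ 2 * Real.exp (ω (x, p.2)) ^ 2) / 4 := by
      filter_upwards [hevV1 p hp] with x hx using (hQ (x, p.2) hx).symm
    have hωd := hωx p hp
    have hv : HasDerivAt (fun x => Real.exp (-ω (x, p.2))) (Real.exp (-ω p) * -ωx p) p.1 :=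
      (hωd.neg).exp
    have hu : HasDerivAt (fun x => Real.exp (ω (x, p.2))) (Real.exp (ω p) * ωx p) p.1 := hωd.exp
    have hall := ((((hωxy_x p hp).pow 2).add ((hα'' p.1 hpx).mul hv)).sub
        ((hβ'' p.1 hpx).mul hu)).add
        (((((hα' p.1 hpx).pow 2).mul (hv.pow 2)).add
          (((hβ' p.1 hpx).pow 2).mul (hu.pow 2))).div_const 4)
    have hc2 := hall.congr_of_eventuallyEq heq
    refine hc2.congr_deriv ?_
    symm
    simp only [hKdef, Pi.pow_apply]
    push_cast
    ring
  -- the value of K via the foliation identities (Laurent expansion)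
  have hKval : ∀ p ∈ V, K p = (3/2) * (α' p.1 * β p.1 + α p.1 * β' p.1)
      + (α'' p.1 + α p.1 * c p.1 + α p.1 ^ 2 * β p.1 / 2) * Real.exp (-ω p)
      - (β'' p.1 + β p.1 * c p.1 + α p.1 * β p.1 ^ 2 / 2) * Real.exp (ω p) := by
    intro p hp
    have huv : Real.exp (ω p) * Real.exp (-ω p) = 1 := by rw [← Real.exp_add]; simp
    have h1 := hfol p hp
    have h2 := hfolxy p hp
    have h3 := hQ p hp
    simp only [hKdef]
    linear_combination
      ((-(α' p.1 * Real.exp (-ω p)) - β' p.1 * Real.exp (ω p)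
        - α p.1 ^ 2 * Real.exp (-ω p) ^ 2 / 2 + β p.1 ^ 2 * Real.exp (ω p) ^ 2 / 2) / 2) * h1
      + ωy p * h2
      + (α p.1 * Real.exp (-ω p) - β p.1 * Real.exp (ω p)) * h3
      + ((3/2) * (α' p.1 * β p.1 + α p.1 * β' p.1)
         - α p.1 * β p.1 ^ 2 * Real.exp (ω p) / 2
         + α p.1 ^ 2 * β p.1 * Real.exp (-ω p) / 2) * huv
  -- a square around p₀ where ωy ≠ 0
  have hωycont : ContinuousAt ωy p₀ := by
    have h1 : ContinuousAt (fun p : ℝ × ℝ => fderiv ℝ ω p (0, 1)) p₀ :=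
      (((hΦC p₀ hp₀V).differentiableAt (by simp)).clm_apply (differentiableAt_const _)).continuousAt
    apply h1.congr_of_eventuallyEq
    filter_upwards [hVopen.mem_nhds hp₀V] with q hq using hωy_eq q hq
  obtain ⟨ε, hε, hball⟩ : ∃ ε > 0, ∀ q : ℝ × ℝ, dist q p₀ < ε → q ∈ V ∧ ωy q ≠ 0 := by
    have h2a : ∀ᶠ q in nhds p₀, q ∈ V := hVopen.mem_nhds hp₀V
    have h2 : ∀ᶠ q in nhds p₀, q ∈ V ∧ ωy q ≠ 0 :=
      h2a.and (hωycont.eventually_ne hp₀y)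
    rw [Metric.eventually_nhds_iff] at h2
    obtain ⟨ε, hε, h⟩ := h2
    exact ⟨ε, hε, fun q hq => h hq⟩
  have hsq : ∀ x : ℝ, |x - p₀.1| < ε → ∀ t : ℝ, |t - p₀.2| < ε →
      (x, t) ∈ V ∧ ωy (x, t) ≠ 0 := by
    intro x hx t ht
    apply hball
    rw [show p₀ = (p₀.1, p₀.2) from rfl, Prod.dist_eq, Real.dist_eq, Real.dist_eq]
    exact max_lt hx ht
  -- injectivity of ω (x, ·) on the t-window
  have hinj : ∀ x : ℝ, |x - p₀.1| < ε → ∀ ta tb : ℝ, |ta - p₀.2| < ε → |tb - p₀.2| < ε →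
      ω (x, ta) = ω (x, tb) → ta = tb := by
    intro x hx ta tb hta htb hωeq
    by_contra hne
    have key : ∀ sa sb : ℝ, |sa - p₀.2| < ε → |sb - p₀.2| < ε → sa < sb →
        ω (x, sa) = ω (x, sb) → False := by
      intro sa sb hsa hsb hlt heqω
      have hmid : ∀ z ∈ Icc sa sb, |z - p₀.2| < ε := by
        intro z hz
        rw [abs_lt] at hsa hsb ⊢
        exact ⟨by linarith [hz.1], by linarith [hz.2]⟩
      have hcont : ContinuousOn (fun t => ω (x, t)) (Icc sa sb) := fun z hz =>
        ((hωy (x, z) (hsq x hx z (hmid z hz)).1).continuousAt).continuousWithinAt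
      obtain ⟨ξ, hξ, hsl⟩ := exists_hasDerivAt_eq_slope (fun t => ω (x, t))
        (fun t => ωy (x, t)) hlt hcont
        (fun z hz => hωy (x, z) (hsq x hx z (hmid z (Ioo_subset_Icc_self hz))).1)
      have hξb : |ξ - p₀.2| < ε := hmid ξ (Ioo_subset_Icc_self hξ)
      have : ωy (x, ξ) = 0 := by rw [hsl, heqω]; simp
      exact (hsq x hx ξ hξb).2 this
    rcases lt_or_gt_of_ne hne with h | h
    · exact key ta tb hta htb h hωeq
    · exact key tb ta htb hta h hωeq.symm
  have hJxsub : ∀ x : ℝ, |x - p₀.1| < ε → x ∈ Ioo s₁ s₂ := by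
    intro x hx
    have h0 : |p₀.2 - p₀.2| < ε := by simpa using hε
    exact ((hmem _).1 (hsq x hx p₀.2 h0).1).1
  -- the local ODE system and the derivative of c
  have hmain : ∀ x : ℝ, |x - p₀.1| < ε →
      (α'' x + α x * c x + α x ^ 2 * β x / 2 = 0) ∧
      (β'' x + β x * c x + α x * β x ^ 2 / 2 = 0) ∧
      HasDerivAt c ((3 / 2) * (α' x * β x + α x * β' x)) x := by
    intro x hx
    have hta : |p₀.2 - ε / 2 - p₀.2| < ε := by rw [abs_lt]; constructor <;> linarith
    have htb : |p₀.2 - p₀.2| < ε := by simpa using hε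
    have htc : |p₀.2 + ε / 2 - p₀.2| < ε := by rw [abs_lt]; constructor <;> linarith
    have hVa := hsq x hx (p₀.2 - ε / 2) hta
    have hVb := hsq x hx p₀.2 htb
    have hVc := hsq x hx (p₀.2 + ε / 2) htc
    -- distinct values of exp (ω)
    have hd1 : Real.exp (ω (x, p₀.2 - ε / 2)) ≠ Real.exp (ω (x, p₀.2)) := by
      intro h
      have := hinj x hx _ _ hta htb (Real.exp_injective h)
      linarith
    have hd2 : Real.exp (ω (x, p₀.2 - ε / 2)) ≠ Real.exp (ω (x, p₀.2 + ε / 2)) := by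
      intro h
      have := hinj x hx _ _ hta htc (Real.exp_injective h)
      linarith
    have hd3 : Real.exp (ω (x, p₀.2)) ≠ Real.exp (ω (x, p₀.2 + ε / 2)) := by
      intro h
      have := hinj x hx _ _ htb htc (Real.exp_injective h)
      linarith
    -- all K-values on the segment agree
    have hκ1 : K (x, p₀.2 - ε / 2) = K (x, p₀.2) :=
      (hcd _ hVa.1).unique (hcd _ hVb.1)
    have hκ3 : K (x, p₀.2 + ε / 2) = K (x, p₀.2) :=
      (hcd _ hVc.1).unique (hcd _ hVb.1)
    have hκ2 : K (x, p₀.2) = K (x, p₀.2) := rfl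
    have quad : ∀ t : ℝ, (x, t) ∈ V → K (x, t) = K (x, p₀.2) →
        -(β'' x + β x * c x + α x * β x ^ 2 / 2) * Real.exp (ω (x, t)) ^ 2
          + ((3 / 2) * (α' x * β x + α x * β' x) - K (x, p₀.2)) * Real.exp (ω (x, t))
          + (α'' x + α x * c x + α x ^ 2 * β x / 2) = 0 := by
      intro t htV hκ
      have hKv := hKval (x, t) htV
      have huv : Real.exp (ω (x, t)) * Real.exp (-ω (x, t)) = 1 := by
        rw [← Real.exp_add]; simp
      linear_combination Real.exp (ω (x, t)) * hκ - Real.exp (ω (x, t)) * hKv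
        - (α'' x + α x * c x + α x ^ 2 * β x / 2) * huv
    obtain ⟨hq0, hq1, hq2⟩ := aux_quad hd1 hd2 hd3
      (quad _ hVa.1 hκ1) (quad _ hVb.1 hκ2) (quad _ hVc.1 hκ3)
    refine ⟨by linarith, by linarith, ?_⟩
    have hKb : K (x, p₀.2) = (3 / 2) * (α' x * β x + α x * β' x) := by linarith
    have := hcd _ hVb.1
    rw [hKb] at this
    exact this
  -- the function -c + (3/2)αβ has zero derivative near x₀, hence is a constant δ
  have hx₀s : p₀.1 ∈ Ioo s₁ s₂ := ((hmem p₀).1 hp₀V).1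
  have hmd : ∀ x : ℝ, |x - p₀.1| < ε →
      HasDerivAt (fun z => -c z + (3 / 2) * (α z * β z)) 0 x := by
    intro x hx
    have hxs : x ∈ Ioo s₁ s₂ := hJxsub x hx
    have h1 := (hmain x hx).2.2
    have h2 := (((hα' x hxs).mul (hβ' x hxs)).const_mul ((3 : ℝ) / 2))
    have h3 := (h1.neg).add h2
    refine h3.congr_deriv ?_
    symm
    ring
  have hmconst : ∀ x : ℝ, |x - p₀.1| < ε →
      -c x + (3 / 2) * (α x * β x) = -c p₀.1 + (3 / 2) * (α p₀.1 * β p₀.1) := by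
    intro x hx
    have hd : ∀ z ∈ Ioo (p₀.1 - ε) (p₀.1 + ε),
        HasDerivAt (fun z => -c z + (3 / 2) * (α z * β z)) 0 z := by
      intro z hz
      exact hmd z (by rw [abs_lt]; exact ⟨by linarith [hz.1], by linarith [hz.2]⟩)
    have hxm : x ∈ Ioo (p₀.1 - ε) (p₀.1 + ε) := by
      rw [abs_lt] at hx; exact ⟨by linarith [hx.1], by linarith [hx.2]⟩
    have hx₀m : p₀.1 ∈ Ioo (p₀.1 - ε) (p₀.1 + ε) := ⟨by linarith, by linarith⟩
    exact aux_const_of_deriv hd x hxm p₀.1 hx₀m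
  -- local form of the system
  have hloc : ∀ x : ℝ, |x - p₀.1| < ε →
      α'' x = (-c p₀.1 + (3 / 2) * (α p₀.1 * β p₀.1)) * α x - 2 * α x ^ 2 * β x ∧
      β'' x = (-c p₀.1 + (3 / 2) * (α p₀.1 * β p₀.1)) * β x - 2 * α x * β x ^ 2 := by
    intro x hx
    have h1 := (hmain x hx).1
    have h2 := (hmain x hx).2.1
    have h3 := hmconst x hx
    constructor
    · linear_combination h1 + α x * h3
    · linear_combination h2 + β x * h3
  -- analyticity of α', α'', β', β''
  have hα'anal : AnalyticOnNhd ℝ α' (Ioo s₁ s₂) := by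
    intro x hx
    apply (hαanal.deriv x hx).congr
    filter_upwards [Ioo_mem_nhds hx.1 hx.2] with z hz using ((hα' z hz).deriv)
  have hα''anal : AnalyticOnNhd ℝ α'' (Ioo s₁ s₂) := by
    intro x hx
    apply (hα'anal.deriv x hx).congr
    filter_upwards [Ioo_mem_nhds hx.1 hx.2] with z hz using ((hα'' z hz).deriv)
  have hβ'anal : AnalyticOnNhd ℝ β' (Ioo s₁ s₂) := by
    intro x hx
    apply (hβanal.deriv x hx).congr
    filter_upwards [Ioo_mem_nhds hx.1 hx.2] with z hz using ((hβ' z hz).deriv)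
  have hβ''anal : AnalyticOnNhd ℝ β'' (Ioo s₁ s₂) := by
    intro x hx
    apply (hβ'anal.deriv x hx).congr
    filter_upwards [Ioo_mem_nhds hx.1 hx.2] with z hz using ((hβ'' z hz).deriv)
  -- analytic continuation to all of (s₁, s₂)
  refine ⟨-c p₀.1 + (3 / 2) * (α p₀.1 * β p₀.1), ?_⟩
  set δ₀ : ℝ := -c p₀.1 + (3 / 2) * (α p₀.1 * β p₀.1) with hδ₀def
  have hev : ∀ᶠ z in nhds p₀.1, |z - p₀.1| < ε := by
    filter_upwards [Metric.ball_mem_nhds p₀.1 hε] with z hz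
    rw [Metric.mem_ball, Real.dist_eq] at hz; exact hz
  have hpre : IsPreconnected (Ioo s₁ s₂) := (convex_Ioo s₁ s₂).isPreconnected
  have he1 : EqOn (fun x => α'' x - (δ₀ * α x - 2 * α x ^ 2 * β x)) 0 (Ioo s₁ s₂) := by
    apply AnalyticOnNhd.eqOn_zero_of_preconnected_of_eventuallyEq_zero
      (fun x hx => ((hα''anal x hx).sub ((analyticAt_const.mul (hαanal x hx)).sub
        ((analyticAt_const.mul ((hαanal x hx).pow 2)).mul (hβanal x hx)))))
      hpre hx₀s
    filter_upwards [hev] with z hz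
    simp only [Pi.sub_apply, Pi.zero_apply, Pi.mul_apply, Pi.pow_apply]
    rw [(hloc z hz).1, hδ₀def]
    ring
  have he2 : EqOn (fun x => β'' x - (δ₀ * β x - 2 * α x * β x ^ 2)) 0 (Ioo s₁ s₂) := by
    apply AnalyticOnNhd.eqOn_zero_of_preconnected_of_eventuallyEq_zero
      (fun x hx => ((hβ''anal x hx).sub ((analyticAt_const.mul (hβanal x hx)).sub
        ((analyticAt_const.mul (hαanal x hx)).mul ((hβanal x hx).pow 2)))))
      hpre hx₀s
    filter_upwards [hev] with z hz
    simp only [Pi.sub_apply, Pi.zero_apply, Pi.mul_apply, Pi.pow_apply]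
    rw [(hloc z hz).2, hδ₀def]
    ring
  intro x hx
  have h1 := he1 hx
  have h2 := he2 hx
  simp only [Pi.sub_apply, Pi.zero_apply] at h1 h2
  constructor
  · linear_combination h1
  · linear_combination h2
end

section
/- Let 𝒱 = (s₁,s₂)×(t₁,t₂) ⊆ ℝ², let ω : 𝒱 → ℝ be harmonic (smooth with ω_xx + ω_yy = 0 on 𝒱), and let α, β : (s₁,s₂) → ℝ be real analytic functions such that 2ω_x(x,y) = −α(x)·e^{−ω(x,y)} − β(x)·e^{ω(x,y)} for all (x,y) ∈ 𝒱. Assume that ω_y is not identically zero on 𝒱. Then there exists a constant δ ∈ ℝ such that α'' = δα − 2α²β, β'' = δβ − 2αβ², and moreover at every point (x,y) ∈ 𝒱 the identity 4e^{−2ω}·ω_y² = −α(x)²·e^{−4ω} − 4α'(x)·e^{−3ω} + (6α(x)β(x) − 4δ)·e^{−2ω} + 4β'(x)·e^{−ω} − β(x)² holds (ω and its derivatives evaluated at (x,y)). -/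
open Set

/-- Helper: a function with vanishing derivative on an open interval is constant there. -/
private lemma aux_const_of_deriv_zero {f : ℝ → ℝ} {a b : ℝ}
    (hf : ∀ t ∈ Ioo a b, HasDerivAt f 0 t) :
    ∀ t ∈ Ioo a b, ∀ t' ∈ Ioo a b, f t = f t' := by
  have H : ∀ t ∈ Ioo a b, ∀ t' ∈ Ioo a b, t ≤ t' → f t' = f t := by
    intro t ht t' ht' htt
    have hsub : Icc t t' ⊆ Ioo a b := fun z hz => ⟨lt_of_lt_of_le ht.1 hz.1, lt_of_le_of_lt hz.2 ht'.2⟩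
    have := constant_of_has_deriv_right_zero (f := f) (a := t) (b := t')
      (fun z hz => (hf z (hsub hz)).continuousAt.continuousWithinAt)
      (fun z hz => (hf z (hsub (Ico_subset_Icc_self hz))).hasDerivWithinAt)
    exact this t' ⟨htt, le_rfl⟩
  intro t ht t' ht'
  rcases le_total t t' with h | h
  · exact (H t ht t' ht' h).symm
  · exact H t' ht' t ht h

/-- The conserved quantity of the capillary foliation. -/
noncomputable def folG (ω ωy : ℝ × ℝ → ℝ) (α α' β β' : ℝ → ℝ) : ℝ × ℝ → ℝ :=
  fun q => (ωy q) ^ 2 + (α q.1) ^ 2 / 4 * Real.exp (-ω q) ^ 2 + α' q.1 * Real.exp (-ω q)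
    - 3 / 2 * (α q.1 * β q.1) - β' q.1 * Real.exp (ω q) + (β q.1) ^ 2 / 4 * Real.exp (ω q) ^ 2

/-- Proposition 3.3 together with identity (3.12): the coefficients of a capillary foliation
solve the system `α'' = δα − 2α²β`, `β'' = δβ − 2αβ²`, and
`4e^{−2ω}ω_y² = −α²e^{−4ω} − 4α'e^{−3ω} + (6αβ−4δ)e^{−2ω} + 4β'e^{−ω} − β²` on the rectangle. -/
theorem foliation_coefficients_system_and_first_integral
    (s₁ s₂ t₁ t₂ : ℝ) (V : Set (ℝ × ℝ))
    (hV : V = Ioo s₁ s₂ ×ˢ Ioo t₁ t₂)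
    (ω ωx ωy ωxx ωyy : ℝ × ℝ → ℝ)
    (hsmooth : ContDiffOn ℝ (⊤ : ℕ∞) ω V)
    (hωx : ∀ p ∈ V, HasDerivAt (fun s => ω (s, p.2)) (ωx p) p.1)
    (hωy : ∀ p ∈ V, HasDerivAt (fun t => ω (p.1, t)) (ωy p) p.2)
    (hωxx : ∀ p ∈ V, HasDerivAt (fun s => ωx (s, p.2)) (ωxx p) p.1)
    (hωyy : ∀ p ∈ V, HasDerivAt (fun t => ωy (p.1, t)) (ωyy p) p.2)
    (hharm : ∀ p ∈ V, ωxx p + ωyy p = 0)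
    (α β α' β' α'' β'' : ℝ → ℝ)
    (hαanal : AnalyticOnNhd ℝ α (Ioo s₁ s₂))
    (hβanal : AnalyticOnNhd ℝ β (Ioo s₁ s₂))
    (hα' : ∀ x ∈ Ioo s₁ s₂, HasDerivAt α (α' x) x)
    (hα'' : ∀ x ∈ Ioo s₁ s₂, HasDerivAt α' (α'' x) x)
    (hβ' : ∀ x ∈ Ioo s₁ s₂, HasDerivAt β (β' x) x)
    (hβ'' : ∀ x ∈ Ioo s₁ s₂, HasDerivAt β' (β'' x) x)
    (hfol : ∀ p ∈ V, 2 * ωx p = -α p.1 * Real.exp (-ω p) - β p.1 * Real.exp (ω p))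
    (hωyne : ∃ p ∈ V, ωy p ≠ 0) :
    ∃ δ : ℝ,
      (∀ x ∈ Ioo s₁ s₂,
        α'' x = δ * α x - 2 * (α x) ^ 2 * β x ∧
        β'' x = δ * β x - 2 * α x * (β x) ^ 2) ∧
      (∀ p ∈ V,
        4 * Real.exp (-2 * ω p) * (ωy p) ^ 2
          = -(α p.1) ^ 2 * Real.exp (-4 * ω p)
            - 4 * α' p.1 * Real.exp (-3 * ω p)
            + (6 * α p.1 * β p.1 - 4 * δ) * Real.exp (-2 * ω p)
            + 4 * β' p.1 * Real.exp (-ω p)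
            - (β p.1) ^ 2) := by
  subst hV
  set V : Set (ℝ × ℝ) := Ioo s₁ s₂ ×ˢ Ioo t₁ t₂ with hVdef
  obtain ⟨p₀, hp₀V, hp₀y⟩ := hωyne
  have hVopen : IsOpen V := isOpen_Ioo.prod isOpen_Ioo
  have hVmem : ∀ a b : ℝ, a ∈ Ioo s₁ s₂ → b ∈ Ioo t₁ t₂ → (a, b) ∈ V :=
    fun a b ha hb => Set.mk_mem_prod ha hb
  have hVx : ∀ p ∈ V, p.1 ∈ Ioo s₁ s₂ := fun p hp => hp.1
  have hVy : ∀ p ∈ V, p.2 ∈ Ioo t₁ t₂ := fun p hp => hp.2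
  -- exp product
  have hAB : ∀ p : ℝ × ℝ, Real.exp (-ω p) * Real.exp (ω p) = 1 := by
    intro p; rw [← Real.exp_add, neg_add_cancel, Real.exp_zero]
  -- differentiability of ω
  have hdiff : ∀ p ∈ V, DifferentiableAt ℝ ω p := fun p hp =>
    ((hsmooth.differentiableOn (by simp)).differentiableAt (hVopen.mem_nhds hp))
  -- lines
  have hline_x : ∀ x y : ℝ, HasDerivAt (fun s : ℝ => (s, y)) ((1 : ℝ), (0 : ℝ)) x :=
    fun x y => (hasDerivAt_id x).prodMk (hasDerivAt_const x y)
  have hline_y : ∀ x y : ℝ, HasDerivAt (fun t : ℝ => (x, t)) ((0 : ℝ), (1 : ℝ)) y :=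
    fun x y => (hasDerivAt_const y x).prodMk (hasDerivAt_id y)
  -- partials equal fderiv
  have hωx_eq : ∀ p ∈ V, ωx p = fderiv ℝ ω p (1, 0) := by
    intro p hp
    exact (hωx p hp).unique ((hdiff p hp).hasFDerivAt.comp_hasDerivAt p.1 (hline_x p.1 p.2))
  have hωy_eq : ∀ p ∈ V, ωy p = fderiv ℝ ω p (0, 1) := by
    intro p hp
    exact (hωy p hp).unique ((hdiff p hp).hasFDerivAt.comp_hasDerivAt p.2 (hline_y p.1 p.2))
  -- smoothness of the derivative
  have hFsmooth : ContDiffOn ℝ (⊤ : ℕ∞) (fderiv ℝ ω) V := hsmooth.fderiv_of_isOpen hVopen (by simp)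
  have hFdiff : ∀ p ∈ V, DifferentiableAt ℝ (fderiv ℝ ω) p := fun p hp =>
    (hFsmooth.differentiableOn (by simp)).differentiableAt (hVopen.mem_nhds hp)
  -- the x-derivative of ωy
  have hωyx : ∀ p ∈ V, HasDerivAt (fun s => ωy (s, p.2))
      ((α p.1 * Real.exp (-ω p) - β p.1 * Real.exp (ω p)) * ωy p / 2) p.1 := by
    intro p hp
    have hF' : HasFDerivAt (fderiv ℝ ω) (fderiv ℝ (fderiv ℝ ω) p) p := (hFdiff p hp).hasFDerivAt
    have hsym : ∀ v w : ℝ × ℝ, fderiv ℝ (fderiv ℝ ω) p v w = fderiv ℝ (fderiv ℝ ω) p w v := by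
      apply second_derivative_symmetric_of_eventually (f := ω) ?_ hF'
      filter_upwards [hVopen.mem_nhds hp] with q hq using (hdiff q hq).hasFDerivAt
    -- derivative of s ↦ fderiv ω (s,p.2) (0,1)
    have happ : HasFDerivAt (fun q => fderiv ℝ ω q (0, 1))
        ((ContinuousLinearMap.apply ℝ ℝ ((0 : ℝ), (1 : ℝ))).comp (fderiv ℝ (fderiv ℝ ω) p)) p :=
      ((ContinuousLinearMap.apply ℝ ℝ ((0 : ℝ), (1 : ℝ))).hasFDerivAt).comp p hF'
    have hd1 : HasDerivAt (fun s => fderiv ℝ ω (s, p.2) (0, 1))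
        (fderiv ℝ (fderiv ℝ ω) p (1, 0) (0, 1)) p.1 := by
      have := happ.comp_hasDerivAt p.1 (hline_x p.1 p.2); simp at this; exact this
    have heq1 : (fun s => ωy (s, p.2)) =ᶠ[nhds p.1] (fun s => fderiv ℝ ω (s, p.2) (0, 1)) := by
      filter_upwards [Ioo_mem_nhds (hVx p hp).1 (hVx p hp).2] with s hs
      exact hωy_eq (s, p.2) (hVmem s p.2 hs (hVy p hp))
    have hd2 : HasDerivAt (fun s => ωy (s, p.2)) (fderiv ℝ (fderiv ℝ ω) p (1, 0) (0, 1)) p.1 :=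
      heq1.hasDerivAt_iff.mpr hd1
    -- compute the mixed derivative via the y-derivative of ωx (foliation equation)
    have happ2 : HasFDerivAt (fun q => fderiv ℝ ω q (1, 0))
        ((ContinuousLinearMap.apply ℝ ℝ ((1 : ℝ), (0 : ℝ))).comp (fderiv ℝ (fderiv ℝ ω) p)) p :=
      ((ContinuousLinearMap.apply ℝ ℝ ((1 : ℝ), (0 : ℝ))).hasFDerivAt).comp p hF'
    have hd3 : HasDerivAt (fun t => fderiv ℝ ω (p.1, t) (1, 0))
        (fderiv ℝ (fderiv ℝ ω) p (0, 1) (1, 0)) p.2 := by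
      have := happ2.comp_hasDerivAt p.2 (hline_y p.1 p.2); simp at this; exact this
    have heq2 : (fun t => 2 * ωx (p.1, t)) =ᶠ[nhds p.2] (fun t => 2 * fderiv ℝ ω (p.1, t) (1, 0)) := by
      filter_upwards [Ioo_mem_nhds (hVy p hp).1 (hVy p hp).2] with t ht
      rw [hωx_eq (p.1, t) (hVmem p.1 t (hVx p hp) ht)]
    have heq3 : (fun t => 2 * ωx (p.1, t)) =ᶠ[nhds p.2]
        (fun t => -α p.1 * Real.exp (-ω (p.1, t)) - β p.1 * Real.exp (ω (p.1, t))) := by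
      filter_upwards [Ioo_mem_nhds (hVy p hp).1 (hVy p hp).2] with t ht
      exact hfol (p.1, t) (hVmem p.1 t (hVx p hp) ht)
    have hd4 : HasDerivAt (fun t => 2 * ωx (p.1, t))
        (2 * fderiv ℝ (fderiv ℝ ω) p (0, 1) (1, 0)) p.2 :=
      heq2.hasDerivAt_iff.mpr (hd3.const_mul 2)
    have hd5 : HasDerivAt (fun t => -α p.1 * Real.exp (-ω (p.1, t)) - β p.1 * Real.exp (ω (p.1, t)))
        (-α p.1 * (Real.exp (-ω p) * -ωy p) - β p.1 * (Real.exp (ω p) * ωy p)) p.2 := by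
      exact ((((hωy p hp).neg.exp).const_mul (-α p.1)).sub (((hωy p hp).exp).const_mul (β p.1)))
    have hkey : 2 * fderiv ℝ (fderiv ℝ ω) p (0, 1) (1, 0)
        = -α p.1 * (Real.exp (-ω p) * -ωy p) - β p.1 * (Real.exp (ω p) * ωy p) :=
      hd4.unique (heq3.hasDerivAt_iff.mpr hd5)
    have hval : fderiv ℝ (fderiv ℝ ω) p (1, 0) (0, 1)
        = (α p.1 * Real.exp (-ω p) - β p.1 * Real.exp (ω p)) * ωy p / 2 := by
      rw [hsym (1, 0) (0, 1)]; linarith [hkey]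
    rw [← hval]; exact hd2
  -- the second x-derivative from the foliation equation
  have hωxx2 : ∀ p ∈ V, 2 * ωxx p = -α' p.1 * Real.exp (-ω p) - β' p.1 * Real.exp (ω p)
      + (α p.1 * Real.exp (-ω p) - β p.1 * Real.exp (ω p)) * ωx p := by
    intro p hp
    have heq : (fun s => 2 * ωx (s, p.2)) =ᶠ[nhds p.1]
        (fun s => -α s * Real.exp (-ω (s, p.2)) - β s * Real.exp (ω (s, p.2))) := by
      filter_upwards [Ioo_mem_nhds (hVx p hp).1 (hVx p hp).2] with s hs
      exact hfol (s, p.2) (hVmem s p.2 hs (hVy p hp))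
    have hd : HasDerivAt (fun s => -α s * Real.exp (-ω (s, p.2)) - β s * Real.exp (ω (s, p.2)))
        (-α' p.1 * Real.exp (-ω p) + -α p.1 * (Real.exp (-ω p) * -ωx p)
          - (β' p.1 * Real.exp (ω p) + β p.1 * (Real.exp (ω p) * ωx p))) p.1 :=
      (((hα' p.1 (hVx p hp)).neg.mul ((hωx p hp).neg.exp)).sub
        ((hβ' p.1 (hVx p hp)).mul ((hωx p hp).exp)))
    have := ((hωxx p hp).const_mul 2).unique (heq.hasDerivAt_iff.mpr hd)
    rw [this]; ring
  have hharm' : ∀ p ∈ V, ωyy p = -ωxx p := fun p hp => by linarith [hharm p hp]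
  -- the conserved quantity g is constant in the vertical direction
  set g : ℝ × ℝ → ℝ := folG ω ωy α α' β β' with hgdef
  have hgy0 : ∀ p ∈ V, HasDerivAt (fun t => g (p.1, t)) 0 p.2 := by
    intro p hp
    have hw := hωy p hp
    have H : HasDerivAt (fun t => g (p.1, t))
        (2 * ωy p ^ 1 * ωyy p
          + ((α p.1) ^ 2 / 4 * (2 * Real.exp (-ω p) ^ 1 * (Real.exp (-ω p) * -ωy p)))
          + α' p.1 * (Real.exp (-ω p) * -ωy p)
          - β' p.1 * (Real.exp (ω p) * ωy p)
          + (β p.1) ^ 2 / 4 * (2 * Real.exp (ω p) ^ 1 * (Real.exp (ω p) * ωy p))) p.2 := by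
      show HasDerivAt (fun t => folG ω ωy α α' β β' (p.1, t)) _ _
      unfold folG
      exact (((((hωyy p hp).pow 2).add
        (((hw.neg.exp.pow 2)).const_mul ((α p.1) ^ 2 / 4))).add
          ((hw.neg.exp).const_mul (α' p.1))).sub_const (3 / 2 * (α p.1 * β p.1))).sub
            ((hw.exp).const_mul (β' p.1)) |>.add (((hw.exp.pow 2)).const_mul ((β p.1) ^ 2 / 4))
    convert H using 1
    have h1 := hωxx2 p hp
    have h2 := hharm' p hp
    have h3 := hfol p hp
    push_cast
    linear_combination ωy p * h1 + (-2 * ωy p) * h2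
      + ((α p.1 * Real.exp (-ω p) - β p.1 * Real.exp (ω p)) * ωy p / 2) * h3
  obtain ⟨x₀, y₀⟩ := p₀
  have hx₀ : x₀ ∈ Ioo s₁ s₂ := hp₀V.1
  have hy₀ : y₀ ∈ Ioo t₁ t₂ := hp₀V.2
  -- g is constant along vertical lines
  have hgconst : ∀ p ∈ V, g p = g (p.1, y₀) := by
    rintro ⟨x, y⟩ hp
    exact aux_const_of_deriv_zero (f := fun t => g (x, t)) (a := t₁) (b := t₂)
      (fun t ht => hgy0 (x, t) (hVmem x t hp.1 ht)) y hp.2 y₀ hy₀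
  -- the x-derivative of g, in first-integral form
  have hgx : ∀ p ∈ V, HasDerivAt (fun s => g (s, p.2))
      ((α'' p.1 + α p.1 * g (p.1, y₀) + 2 * (α p.1) ^ 2 * β p.1) * Real.exp (-ω p)
        - (β'' p.1 + β p.1 * g (p.1, y₀) + 2 * α p.1 * (β p.1) ^ 2) * Real.exp (ω p)) p.1 := by
    intro p hp
    have hx := hVx p hp
    have hωs := hωx p hp
    have hA := hωs.neg.exp
    have hB := hωs.exp
    have H : HasDerivAt (fun s => g (s, p.2))
        (2 * ωy p ^ 1 * ((α p.1 * Real.exp (-ω p) - β p.1 * Real.exp (ω p)) * ωy p / 2)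
          + ((2 * α p.1 ^ 1 * α' p.1 / 4) * Real.exp (-ω p) ^ 2
              + (α p.1) ^ 2 / 4 * (2 * Real.exp (-ω p) ^ 1 * (Real.exp (-ω p) * -ωx p)))
          + (α'' p.1 * Real.exp (-ω p) + α' p.1 * (Real.exp (-ω p) * -ωx p))
          - 3 / 2 * (α' p.1 * β p.1 + α p.1 * β' p.1)
          - (β'' p.1 * Real.exp (ω p) + β' p.1 * (Real.exp (ω p) * ωx p))
          + ((2 * β p.1 ^ 1 * β' p.1 / 4) * Real.exp (ω p) ^ 2
              + (β p.1) ^ 2 / 4 * (2 * Real.exp (ω p) ^ 1 * (Real.exp (ω p) * ωx p)))) p.1 := by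
      show HasDerivAt (fun s => folG ω ωy α α' β β' (s, p.2)) _ _
      unfold folG
      exact ((((((hωyx p hp).pow 2).add
        ((((hα' p.1 hx).pow 2).div_const 4).mul (hA.pow 2))).add
          ((hα'' p.1 hx).mul hA)).sub
            (((hα' p.1 hx).mul (hβ' p.1 hx)).const_mul (3 / 2))).sub
              ((hβ'' p.1 hx).mul hB)).add ((((hβ' p.1 hx).pow 2).div_const 4).mul (hB.pow 2))
    convert H using 1
    have h3 := hfol p hp
    have hR1 : (ωy p) ^ 2 + (α p.1) ^ 2 / 4 * Real.exp (-ω p) ^ 2 + α' p.1 * Real.exp (-ω p)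
        - 3 / 2 * (α p.1 * β p.1) - β' p.1 * Real.exp (ω p) + (β p.1) ^ 2 / 4 * Real.exp (ω p) ^ 2
        = g (p.1, y₀) := by
      rw [← hgconst p hp]; rfl
    have hab := hAB p
    push_cast
    linear_combination (β p.1 * Real.exp (ω p) - α p.1 * Real.exp (-ω p)) * hR1
      - ((-α' p.1 * Real.exp (-ω p) - β' p.1 * Real.exp (ω p)
          - (α p.1) ^ 2 / 2 * Real.exp (-ω p) ^ 2 + (β p.1) ^ 2 / 2 * Real.exp (ω p) ^ 2) / 2) * h3
      - (3 / 2 * (α' p.1 * β p.1 + α p.1 * β' p.1) + (α p.1) ^ 2 * β p.1 / 2 * Real.exp (-ω p)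
          - α p.1 * (β p.1) ^ 2 / 2 * Real.exp (ω p)) * hab
  -- the x-derivative of g is independent of the height y
  have hDind : ∀ x ∈ Ioo s₁ s₂, ∀ y ∈ Ioo t₁ t₂,
      (α'' x + α x * g (x, y₀) + 2 * (α x) ^ 2 * β x) * Real.exp (-ω (x, y))
        - (β'' x + β x * g (x, y₀) + 2 * α x * (β x) ^ 2) * Real.exp (ω (x, y))
      = (α'' x + α x * g (x, y₀) + 2 * (α x) ^ 2 * β x) * Real.exp (-ω (x, y₀))
        - (β'' x + β x * g (x, y₀) + 2 * α x * (β x) ^ 2) * Real.exp (ω (x, y₀)) := by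
    intro x hx y hy
    have h1 := hgx (x, y) (hVmem x y hx hy)
    have h2 := hgx (x, y₀) (hVmem x y₀ hx hy₀)
    have heq : (fun s => g (s, y)) =ᶠ[nhds x] (fun s => g (s, y₀)) := by
      filter_upwards [Ioo_mem_nhds hx.1 hx.2] with s hs
      exact hgconst (s, y) (hVmem s y hs hy)
    exact h1.unique (heq.hasDerivAt_iff.mpr h2)
  -- where ωy ≠ 0 on the vertical line, the coefficients must vanish
  have hzero : ∀ x ∈ Ioo s₁ s₂, ωy (x, y₀) ≠ 0 →
      (α'' x + α x * g (x, y₀) + 2 * (α x) ^ 2 * β x = 0 ∧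
       β'' x + β x * g (x, y₀) + 2 * α x * (β x) ^ 2 = 0) := by
    intro x hx hwne
    set A1 := α'' x + α x * g (x, y₀) + 2 * (α x) ^ 2 * β x with hA1def
    set B1 := β'' x + β x * g (x, y₀) + 2 * α x * (β x) ^ 2 with hB1def
    set c := A1 * Real.exp (-ω (x, y₀)) - B1 * Real.exp (ω (x, y₀)) with hcdef
    -- ω is not constant on the vertical line
    obtain ⟨y₁, hy₁, hne⟩ : ∃ y₁ ∈ Ioo t₁ t₂, ω (x, y₁) ≠ ω (x, y₀) := by
      by_contra hcon
      push_neg at hcon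
      have heq : (fun t => ω (x, t)) =ᶠ[nhds y₀] (fun _ => ω (x, y₀)) := by
        filter_upwards [Ioo_mem_nhds hy₀.1 hy₀.2] with t ht using hcon t ht
      exact hwne ((hωy (x, y₀) (hVmem x y₀ hx hy₀)).unique
        (heq.hasDerivAt_iff.mpr (hasDerivAt_const y₀ (ω (x, y₀)))))
    -- the quadratic polynomial killed by all values exp (ω (x,y))
    set q : Polynomial ℝ := Polynomial.C A1 - Polynomial.C c * Polynomial.X
      - Polynomial.C B1 * Polynomial.X ^ 2 with hqdef
    have hroot : ∀ y ∈ Ioo t₁ t₂, q.IsRoot (Real.exp (ω (x, y))) := by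
      intro y hy
      have hD := hDind x hx y hy
      have hab := hAB (x, y)
      simp only [hqdef, Polynomial.IsRoot.def, Polynomial.eval_sub, Polynomial.eval_mul,
        Polynomial.eval_pow, Polynomial.eval_C, Polynomial.eval_X]
      linear_combination Real.exp (ω (x, y)) * hD - A1 * hab
    -- ω takes an interval of values on the vertical line
    have hcontω : ContinuousOn (fun t => ω (x, t)) (uIcc y₀ y₁) := by
      intro t ht
      have htI : t ∈ Ioo t₁ t₂ := by
        rcases le_total y₀ y₁ with h | h
        · rw [uIcc_of_le h] at ht; exact ⟨lt_of_lt_of_le hy₀.1 ht.1, lt_of_le_of_lt ht.2 hy₁.2⟩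
        · rw [uIcc_of_ge h] at ht; exact ⟨lt_of_lt_of_le hy₁.1 ht.1, lt_of_le_of_lt ht.2 hy₀.2⟩
      exact (hωy (x, t) (hVmem x t hx htI)).continuousAt.continuousWithinAt
    have hIVT := intermediate_value_uIcc hcontω
    have hSinf : (Real.exp '' uIcc (ω (x, y₀)) (ω (x, y₁))).Infinite := by
      refine Set.Infinite.image (Real.exp_injective.injOn) ?_
      rw [uIcc]
      exact Set.Icc_infinite (min_lt_max.mpr (Ne.symm hne))
    have hsub : Real.exp '' uIcc (ω (x, y₀)) (ω (x, y₁)) ⊆ {r | q.IsRoot r} := by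
      rintro r ⟨u, hu, rfl⟩
      obtain ⟨t, htm, htv⟩ := hIVT hu
      have htI : t ∈ Ioo t₁ t₂ := by
        rcases le_total y₀ y₁ with h | h
        · rw [uIcc_of_le h] at htm; exact ⟨lt_of_lt_of_le hy₀.1 htm.1, lt_of_le_of_lt htm.2 hy₁.2⟩
        · rw [uIcc_of_ge h] at htm; exact ⟨lt_of_lt_of_le hy₁.1 htm.1, lt_of_le_of_lt htm.2 hy₀.2⟩
      rw [← htv]
      exact hroot t htI
    have hq0 : q = 0 := Polynomial.eq_zero_of_infinite_isRoot q (hSinf.mono hsub)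
    constructor
    · have := congrArg (fun Q => Polynomial.coeff Q 0) hq0
      simpa [hqdef] using this
    · have := congrArg (fun Q => Polynomial.coeff Q 2) hq0
      simpa [hqdef] using this
  -- an open interval around x₀ on which ωy (·, y₀) ≠ 0
  have hUopen : IsOpen {p ∈ V | fderiv ℝ ω p (0, 1) ≠ 0} := by
    have : {p ∈ V | fderiv ℝ ω p (0, 1) ≠ 0}
        = V ∩ (fun p => fderiv ℝ ω p (0, 1)) ⁻¹' ({0}ᶜ) := by
      ext p; simp [Set.mem_setOf_eq, Set.mem_inter_iff]
    rw [this]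
    have hf2cont : ContinuousOn (fun p => fderiv ℝ ω p (0, 1)) V :=
      ((ContinuousLinearMap.apply ℝ ℝ ((0 : ℝ), (1 : ℝ))).continuous.comp_continuousOn
        hFsmooth.continuousOn)
    exact hf2cont.isOpen_inter_preimage hVopen (isOpen_compl_singleton)
  obtain ⟨ε, hε, hball⟩ := Metric.isOpen_iff.mp hUopen (x₀, y₀)
    ⟨hp₀V, by rw [← hωy_eq (x₀, y₀) hp₀V]; exact hp₀y⟩
  set I₀ : Set ℝ := Ioo (max s₁ (x₀ - ε)) (min s₂ (x₀ + ε)) with hI₀def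
  have hI₀x₀ : x₀ ∈ I₀ :=
    ⟨max_lt hx₀.1 (by linarith), lt_min hx₀.2 (by linarith)⟩
  have hI₀sub : I₀ ⊆ Ioo s₁ s₂ := fun z hz =>
    ⟨lt_of_le_of_lt (le_max_left _ _) hz.1, lt_of_lt_of_le hz.2 (min_le_left _ _)⟩
  have hI₀ne : ∀ x ∈ I₀, ωy (x, y₀) ≠ 0 := by
    intro x hxI
    have hdist : (x, y₀) ∈ Metric.ball (x₀, y₀) ε := by
      rw [Metric.mem_ball, Prod.dist_eq]
      simp only [dist_self]
      rw [max_eq_left dist_nonneg, Real.dist_eq, abs_sub_lt_iff]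
      constructor
      · linarith [lt_of_lt_of_le hxI.2 (min_le_right s₂ (x₀ + ε))]
      · linarith [lt_of_le_of_lt (le_max_right s₁ (x₀ - ε)) hxI.1]
    have := hball hdist
    rw [hωy_eq (x, y₀) this.1]
    exact this.2
  -- the coefficients vanish on I₀
  have hI₀zero : ∀ x ∈ I₀,
      α'' x + α x * g (x, y₀) + 2 * (α x) ^ 2 * β x = 0 ∧
      β'' x + β x * g (x, y₀) + 2 * α x * (β x) ^ 2 = 0 :=
    fun x hxI => hzero x (hI₀sub hxI) (hI₀ne x hxI)
  -- hence h := g (·, y₀) is constant on I₀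
  have hhconst : ∀ x ∈ I₀, g (x, y₀) = g (x₀, y₀) := by
    have hder0 : ∀ x ∈ I₀, HasDerivAt (fun s => g (s, y₀)) 0 x := by
      intro x hxI
      have H := hgx (x, y₀) (hVmem x y₀ (hI₀sub hxI) hy₀)
      obtain ⟨hz1, hz2⟩ := hI₀zero x hxI
      simpa [hz1, hz2] using H
    exact fun x hxI => aux_const_of_deriv_zero hder0 x hxI x₀ hI₀x₀
  set δ : ℝ := -g (x₀, y₀) with hδdef
  have hI₀nhds : I₀ ∈ nhds x₀ := isOpen_Ioo.mem_nhds hI₀x₀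
  -- second derivatives agree with iterated `deriv`
  have hder2 : ∀ γ γ1 γ2 : ℝ → ℝ, (∀ x ∈ Ioo s₁ s₂, HasDerivAt γ (γ1 x) x) →
      (∀ x ∈ Ioo s₁ s₂, HasDerivAt γ1 (γ2 x) x) →
      ∀ x ∈ Ioo s₁ s₂, deriv (deriv γ) x = γ2 x := by
    intro γ γ1 γ2 h1 h2 x hx
    have heq : γ1 =ᶠ[nhds x] deriv γ := by
      filter_upwards [Ioo_mem_nhds hx.1 hx.2] with z hz using ((h1 z hz).deriv).symm
    exact (heq.hasDerivAt_iff.mp (h2 x hx)).deriv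
  have hαd2 := hder2 α α' α'' hα' hα''
  have hβd2 := hder2 β β' β'' hβ' hβ''
  -- analytic continuation of the ODE system
  have hODE : ∀ x ∈ Ioo s₁ s₂,
      α'' x = δ * α x - 2 * (α x) ^ 2 * β x ∧ β'' x = δ * β x - 2 * α x * (β x) ^ 2 := by
    have hFanal : AnalyticOnNhd ℝ
        (fun x => deriv (deriv α) x - (δ * α x - 2 * α x ^ 2 * β x)) (Ioo s₁ s₂) :=
      (hαanal.deriv.deriv).sub ((analyticOnNhd_const.mul hαanal).sub
        ((analyticOnNhd_const.mul (hαanal.pow 2)).mul hβanal))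
    have hGanal : AnalyticOnNhd ℝ
        (fun x => deriv (deriv β) x - (δ * β x - 2 * α x * β x ^ 2)) (Ioo s₁ s₂) :=
      (hβanal.deriv.deriv).sub ((analyticOnNhd_const.mul hβanal).sub
        ((analyticOnNhd_const.mul hαanal).mul (hβanal.pow 2)))
    have hod : ∀ x ∈ I₀,
        (α'' x = δ * α x - 2 * α x ^ 2 * β x) ∧ (β'' x = δ * β x - 2 * α x * β x ^ 2) := by
      intro x hxI
      obtain ⟨hz1, hz2⟩ := hI₀zero x hxI
      rw [hhconst x hxI] at hz1 hz2
      exact ⟨by linear_combination hz1 - α x * hδdef, by linear_combination hz2 - β x * hδdef⟩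
    have hFev : (fun x => deriv (deriv α) x - (δ * α x - 2 * α x ^ 2 * β x)) =ᶠ[nhds x₀] 0 := by
      filter_upwards [hI₀nhds] with z hz
      rw [Pi.zero_apply, hαd2 z (hI₀sub hz), (hod z hz).1, sub_self]
    have hGev : (fun x => deriv (deriv β) x - (δ * β x - 2 * α x * β x ^ 2)) =ᶠ[nhds x₀] 0 := by
      filter_upwards [hI₀nhds] with z hz
      rw [Pi.zero_apply, hβd2 z (hI₀sub hz), (hod z hz).2, sub_self]
    have hF0 := hFanal.eqOn_zero_of_preconnected_of_eventuallyEq_zero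
      isPreconnected_Ioo hx₀ hFev
    have hG0 := hGanal.eqOn_zero_of_preconnected_of_eventuallyEq_zero
      isPreconnected_Ioo hx₀ hGev
    intro x hx
    have h1 : deriv (deriv α) x - (δ * α x - 2 * α x ^ 2 * β x) = 0 := hF0 hx
    have h2 : deriv (deriv β) x - (δ * β x - 2 * α x * β x ^ 2) = 0 := hG0 hx
    rw [hαd2 x hx] at h1
    rw [hβd2 x hx] at h2
    constructor <;> linarith [h1, h2]
  refine ⟨δ, hODE, ?_⟩
  -- the function g(·, y₀) + δ vanishes identically, by uniqueness of ODE solutions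
  have hφ : ∀ x ∈ Ioo s₁ s₂, g (x, y₀) + δ = 0 := by
    have hm : ∀ x ∈ Ioo s₁ s₂, HasDerivAt (fun z => g (z, y₀) + δ)
        ((α x * Real.exp (-ω (x, y₀)) - β x * Real.exp (ω (x, y₀))) * (g (x, y₀) + δ)) x := by
      intro x hx
      have H := (hgx (x, y₀) (hVmem x y₀ hx hy₀)).add_const δ
      have h1 := (hODE x hx).1
      have h2 := (hODE x hx).2
      refine H.congr_deriv ?_
      linear_combination Real.exp (-ω (x, y₀)) * h1 - Real.exp (ω (x, y₀)) * h2
    intro x₂ hx₂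
    set m : ℝ → ℝ := fun z => α z * Real.exp (-ω (z, y₀)) - β z * Real.exp (ω (z, y₀)) with hmdef
    set a : ℝ := (s₁ + min x₀ x₂) / 2 with hadef
    set b : ℝ := (max x₀ x₂ + s₂) / 2 with hbdef
    have haI : s₁ < a ∧ a < min x₀ x₂ := by
      constructor <;> · simp only [hadef]; cases' le_total x₀ x₂ with h h <;>
        simp [min_eq_left, min_eq_right, h] <;> linarith [hx₀.1, hx₂.1]
    have hbI : max x₀ x₂ < b ∧ b < s₂ := by
      constructor <;> · simp only [hbdef]; cases' le_total x₀ x₂ with h h <;>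
        simp [max_eq_left, max_eq_right, h] <;> linarith [hx₀.2, hx₂.2]
    have hIccsub : Icc a b ⊆ Ioo s₁ s₂ := fun z hz => ⟨lt_of_lt_of_le haI.1 hz.1, lt_of_le_of_lt hz.2 hbI.2⟩
    have hIoosub : Ioo a b ⊆ Ioo s₁ s₂ := fun z hz => hIccsub (Ioo_subset_Icc_self hz)
    have hmc : ContinuousOn m (Icc a b) := by
      intro z hz
      have hzI := hIccsub hz
      have hωc : ContinuousAt (fun s => ω (s, y₀)) z :=
        (hωx (z, y₀) (hVmem z y₀ hzI hy₀)).continuousAt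
      exact (((hαanal z hzI).continuousAt.mul
        (Real.continuous_exp.continuousAt.comp hωc.neg)).sub
        ((hβanal z hzI).continuousAt.mul
          (Real.continuous_exp.continuousAt.comp hωc))).continuousWithinAt
    obtain ⟨C, hC⟩ := isCompact_Icc.exists_bound_of_continuousOn hmc
    set v : ℝ → ℝ → ℝ := fun t z => (if t ∈ Icc a b then m t else 0) * z with hvdef
    have hv : ∀ t, LipschitzOnWith C.toNNReal (v t) univ := by
      intro t
      apply LipschitzWith.lipschitzOnWith
      apply LipschitzWith.of_dist_le_mul
      intro z z'
      simp only [hvdef, Real.dist_eq, ← mul_sub, abs_mul]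
      apply mul_le_mul_of_nonneg_right _ (abs_nonneg _)
      rw [Real.coe_toNNReal']
      by_cases ht : t ∈ Icc a b
      · rw [if_pos ht]
        exact le_trans (hC t ht) (le_max_left _ _)
      · rw [if_neg ht]; simp
    have hx₀ab : x₀ ∈ Ioo a b :=
      ⟨lt_of_lt_of_le haI.2 (min_le_left _ _), lt_of_le_of_lt (le_max_left _ _) hbI.1⟩
    have hx₂ab : x₂ ∈ Ioo a b :=
      ⟨lt_of_lt_of_le haI.2 (min_le_right _ _), lt_of_le_of_lt (le_max_right _ _) hbI.1⟩
    have hsol := ODE_solution_unique_of_mem_Ioo (v := v) (s := fun _ => univ)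
      (K := C.toNNReal) (fun t _ => hv t) (f := fun z => g (z, y₀) + δ) (g := fun _ => (0 : ℝ))
      (t₀ := x₀) (a := a) (b := b) hx₀ab
      (fun t ht => ⟨by
        have := hm t (hIoosub ht)
        rw [hvdef]
        simp only [if_pos (Ioo_subset_Icc_self ht)]
        exact this, trivial⟩)
      (fun t ht => ⟨by
        rw [hvdef]; simpa using hasDerivAt_const t (0 : ℝ), trivial⟩)
      (by simp [hδdef])
    have := hsol hx₂ab
    simpa using this
  -- conclusion: the first integral identity
  intro p hp
  have hgp : g p + δ = 0 := by rw [hgconst p hp]; exact hφ p.1 (hVx p hp)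
  have hgp' : (ωy p) ^ 2 + (α p.1) ^ 2 / 4 * Real.exp (-ω p) ^ 2 + α' p.1 * Real.exp (-ω p)
      - 3 / 2 * (α p.1 * β p.1) - β' p.1 * Real.exp (ω p) + (β p.1) ^ 2 / 4 * Real.exp (ω p) ^ 2
      + δ = 0 := hgp
  have he2 : Real.exp (-2 * ω p) = Real.exp (-ω p) ^ 2 := by
    rw [show (-2 : ℝ) * ω p = (2 : ℕ) * (-ω p) by push_cast; ring, Real.exp_nat_mul]
  have he3 : Real.exp (-3 * ω p) = Real.exp (-ω p) ^ 3 := by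
    rw [show (-3 : ℝ) * ω p = (3 : ℕ) * (-ω p) by push_cast; ring, Real.exp_nat_mul]
  have he4 : Real.exp (-4 * ω p) = Real.exp (-ω p) ^ 4 := by
    rw [show (-4 : ℝ) * ω p = (4 : ℕ) * (-ω p) by push_cast; ring, Real.exp_nat_mul]
  rw [he2, he3, he4]
  linear_combination (4 * Real.exp (-ω p) ^ 2) * hgp'
    + (4 * β' p.1 * Real.exp (-ω p) - (β p.1) ^ 2
        - (β p.1) ^ 2 * Real.exp (-ω p) * Real.exp (ω p)) * hAB p
end

section
/- Let δ ∈ ℝ, let I ⊆ ℝ be an open interval, and let α, β : I → ℝ be C² functions satisfying α'' = δα − 2α²β and β'' = δβ − 2αβ² on I. Then the functions κ₁ := α'β − αβ' and κ₂ := α'β' − δαβ + α²β² are constant on I. Moreover, the product s := αβ satisfies s'' = −6s² + 4δs + 2κ₂ and (s')² = −4s³ + 4δs² + 4κ₂·s + κ₁² on I. -/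
open Set

/-! Along solutions, `α'β − αβ'` and the Hamiltonian `α'β' − δαβ + α²β²` have zero derivative,
so they are constant on the interval. The equations for `s = αβ` are then algebraic: `s''` is
read off from the system, and `(s')² = (α'β − αβ')² + 4 s α'β'` with `α'β' = κ₂ + δs − s²`. -/

theorem Set.OrdConnected.eq_of_hasDerivAt_eq_zero {I : Set ℝ} (hI : I.OrdConnected)
    {f : ℝ → ℝ} (hf : ∀ x ∈ I, HasDerivAt f 0 x) {x y : ℝ} (hx : x ∈ I) (hy : y ∈ I) :
    f x = f y := by
  wlog hxy : x ≤ y generalizing x y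
  · exact (this hy hx (le_of_not_ge hxy)).symm
  have hIcc : Icc x y ⊆ I := hI.out hx hy
  exact (constant_of_has_deriv_right_zero
    (fun z hz => (hf z (hIcc hz)).continuousAt.continuousWithinAt)
    (fun z hz => (hf z (hIcc (Ico_subset_Icc_self hz))).hasDerivWithinAt) y ⟨hxy, le_rfl⟩).symm

theorem Set.OrdConnected.exists_eq_const_of_hasDerivAt_eq_zero {I : Set ℝ} (hI : I.OrdConnected)
    {f : ℝ → ℝ} (hf : ∀ x ∈ I, HasDerivAt f 0 x) : ∃ c, ∀ x ∈ I, f x = c := by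
  rcases I.eq_empty_or_nonempty with rfl | ⟨x₀, hx₀⟩
  · exact ⟨0, fun x hx => hx.elim⟩
  · exact ⟨f x₀, fun x hx => hI.eq_of_hasDerivAt_eq_zero hf hx hx₀⟩

section CapillarySystem

variable {δ x : ℝ} {α β α' β' α'' β'' : ℝ → ℝ}
  (hα' : HasDerivAt α (α' x) x) (hα'' : HasDerivAt α' (α'' x) x)
  (hβ' : HasDerivAt β (β' x) x) (hβ'' : HasDerivAt β' (β'' x) x)
  (hODEα : α'' x = δ * α x - 2 * α x ^ 2 * β x)
  (hODEβ : β'' x = δ * β x - 2 * α x * β x ^ 2)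
include hα' hα'' hβ' hβ'' hODEα hODEβ

theorem hasDerivAt_wronskian_eq_zero :
    HasDerivAt (fun t => α' t * β t - α t * β' t) 0 x := by
  refine ((hα''.mul hβ').sub (hα'.mul hβ'')).congr_deriv ?_
  rw [hODEα, hODEβ]
  ring

theorem hasDerivAt_hamiltonian_eq_zero :
    HasDerivAt (fun t => α' t * β' t - δ * α t * β t + α t ^ 2 * β t ^ 2) 0 x := by
  refine (((hα''.mul hβ'').sub ((hα'.const_mul δ).mul hβ')).add
    ((hα'.pow 2).mul (hβ'.pow 2))).congr_deriv ?_
  rw [hODEα, hODEβ]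
  simp only [Pi.pow_apply, Nat.cast_ofNat]
  ring

end CapillarySystem

theorem first_integrals_of_capillary_system_general
    (δ : ℝ) (I : Set ℝ) (hIconn : I.OrdConnected)
    (α β α' β' α'' β'' : ℝ → ℝ)
    (hα' : ∀ x ∈ I, HasDerivAt α (α' x) x)
    (hα'' : ∀ x ∈ I, HasDerivAt α' (α'' x) x)
    (hβ' : ∀ x ∈ I, HasDerivAt β (β' x) x)
    (hβ'' : ∀ x ∈ I, HasDerivAt β' (β'' x) x)
    (hODEα : ∀ x ∈ I, α'' x = δ * α x - 2 * (α x) ^ 2 * β x)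
    (hODEβ : ∀ x ∈ I, β'' x = δ * β x - 2 * α x * (β x) ^ 2) :
    ∃ κ₁ κ₂ : ℝ,
      (∀ x ∈ I, α' x * β x - α x * β' x = κ₁) ∧
      (∀ x ∈ I, α' x * β' x - δ * α x * β x + (α x) ^ 2 * (β x) ^ 2 = κ₂) ∧
      (∀ x ∈ I, α'' x * β x + 2 * α' x * β' x + α x * β'' x
        = -6 * (α x * β x) ^ 2 + 4 * δ * (α x * β x) + 2 * κ₂) ∧
      (∀ x ∈ I, (α' x * β x + α x * β' x) ^ 2
        = -4 * (α x * β x) ^ 3 + 4 * δ * (α x * β x) ^ 2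
          + 4 * κ₂ * (α x * β x) + κ₁ ^ 2) := by
  obtain ⟨κ₁, hκ₁⟩ := hIconn.exists_eq_const_of_hasDerivAt_eq_zero fun x hx =>
    hasDerivAt_wronskian_eq_zero (hα' x hx) (hα'' x hx) (hβ' x hx) (hβ'' x hx)
      (hODEα x hx) (hODEβ x hx)
  obtain ⟨κ₂, hκ₂⟩ := hIconn.exists_eq_const_of_hasDerivAt_eq_zero fun x hx =>
    hasDerivAt_hamiltonian_eq_zero (hα' x hx) (hα'' x hx) (hβ' x hx) (hβ'' x hx)
      (hODEα x hx) (hODEβ x hx)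
  refine ⟨κ₁, κ₂, hκ₁, hκ₂, fun x hx => ?_, fun x hx => ?_⟩
  · rw [hODEα x hx, hODEβ x hx]
    linear_combination 2 * hκ₂ x hx
  · linear_combination (α' x * β x - α x * β' x + κ₁) * hκ₁ x hx + 4 * (α x * β x) * hκ₂ x hx

/-- First integrals of the system `α'' = δα − 2α²β`, `β'' = δβ − 2αβ²`:
`κ₁ = α'β − αβ'` and `κ₂ = α'β' − δαβ + α²β²` are constant, and the product `s = αβ`
satisfies `s'' = −6s² + 4δs + 2κ₂` and `(s')² = −4s³ + 4δs² + 4κ₂s + κ₁²`. -/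
theorem first_integrals_of_capillary_system
    (δ : ℝ) (I : Set ℝ) (hIopen : IsOpen I) (hIconn : I.OrdConnected) (hIne : I.Nonempty)
    (α β α' β' α'' β'' : ℝ → ℝ)
    (hα' : ∀ x ∈ I, HasDerivAt α (α' x) x)
    (hα'' : ∀ x ∈ I, HasDerivAt α' (α'' x) x)
    (hβ' : ∀ x ∈ I, HasDerivAt β (β' x) x)
    (hβ'' : ∀ x ∈ I, HasDerivAt β' (β'' x) x)
    (hODEα : ∀ x ∈ I, α'' x = δ * α x - 2 * (α x) ^ 2 * β x)
    (hODEβ : ∀ x ∈ I, β'' x = δ * β x - 2 * α x * (β x) ^ 2) :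
    ∃ κ₁ κ₂ : ℝ,
      (∀ x ∈ I, α' x * β x - α x * β' x = κ₁) ∧
      (∀ x ∈ I, α' x * β' x - δ * α x * β x + (α x) ^ 2 * (β x) ^ 2 = κ₂) ∧
      (∀ x ∈ I, α'' x * β x + 2 * α' x * β' x + α x * β'' x
        = -6 * (α x * β x) ^ 2 + 4 * δ * (α x * β x) + 2 * κ₂) ∧
      (∀ x ∈ I, (α' x * β x + α x * β' x) ^ 2
        = -4 * (α x * β x) ^ 3 + 4 * δ * (α x * β x) ^ 2
          + 4 * κ₂ * (α x * β x) + κ₁ ^ 2) :=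
  first_integrals_of_capillary_system_general δ I hIconn α β α' β' α'' β'' hα' hα'' hβ' hβ'' hODEα
    hODEβ
end

section
/- Let 𝒱 = (s₁,s₂)×(t₁,t₂) ⊆ ℝ², let ω : 𝒱 → ℝ be harmonic (smooth with ω_xx + ω_yy = 0) with ω_y(x,y) ≠ 0 for all (x,y) ∈ 𝒱, and let c₀ ∈ ℝ be such that 2ω_yyy + 3ω_x²·ω_y − ω_y³ = −2c₀·ω_y at every point of 𝒱. Suppose there exist x₀ ∈ (s₁,s₂) and constants α₀, β₀ ∈ ℝ with α₀ ≠ 0 such that 2ω_x(x₀,y) = −α₀·e^{−ω(x₀,y)} − β₀·e^{ω(x₀,y)} for all y ∈ (t₁,t₂). Then there exist real analytic functions α, β : (s₁,s₂) → ℝ such that 2ω_x(x,y) = −α(x)·e^{−ω(x,y)} − β(x)·e^{ω(x,y)} for all (x,y) ∈ 𝒱; that is, ω is foliated by capillary curves. -/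
open Set

private lemma lineX {g : ℝ × ℝ → ℝ} {p : ℝ × ℝ} (hg : DifferentiableAt ℝ g p) :
    HasDerivAt (fun s => g (s, p.2)) (fderiv ℝ g p (1, 0)) p.1 := by
  have h1 : HasDerivAt (fun s : ℝ => (s, p.2)) ((1 : ℝ), (0 : ℝ)) p.1 :=
    (hasDerivAt_id p.1).prodMk (hasDerivAt_const p.1 p.2)
  exact hg.hasFDerivAt.comp_hasDerivAt p.1 h1

private lemma lineY {g : ℝ × ℝ → ℝ} {p : ℝ × ℝ} (hg : DifferentiableAt ℝ g p) :
    HasDerivAt (fun t => g (p.1, t)) (fderiv ℝ g p (0, 1)) p.2 := by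
  have h1 : HasDerivAt (fun t : ℝ => (p.1, t)) ((0 : ℝ), (1 : ℝ)) p.2 :=
    (hasDerivAt_const p.2 p.1).prodMk (hasDerivAt_id p.2)
  exact hg.hasFDerivAt.comp_hasDerivAt p.2 h1

private lemma harm_analytic {V : Set (ℝ × ℝ)} (hVo : IsOpen V)
    {ω ωx ωy ωxx ωyy : ℝ × ℝ → ℝ}
    (hsmooth : ContDiffOn ℝ (⊤ : ℕ∞) ω V)
    (hωx : ∀ p ∈ V, HasDerivAt (fun s => ω (s, p.2)) (ωx p) p.1)
    (hωy : ∀ p ∈ V, HasDerivAt (fun t => ω (p.1, t)) (ωy p) p.2)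
    (hωxx : ∀ p ∈ V, HasDerivAt (fun s => ωx (s, p.2)) (ωxx p) p.1)
    (hωyy : ∀ p ∈ V, HasDerivAt (fun t => ωy (p.1, t)) (ωyy p) p.2)
    (hharm : ∀ p ∈ V, ωxx p + ωyy p = 0) : AnalyticOnNhd ℝ ω V := by
  have hcd : ∀ p ∈ V, ContDiffAt ℝ 2 ω p := fun p hp =>
    ((hsmooth p hp).contDiffAt (hVo.mem_nhds hp)).of_le (by exact ENat.LEInfty.out)
  have hF : ∀ p ∈ V, DifferentiableAt ℝ (fderiv ℝ ω) p := fun p hp =>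
    ((hcd p hp).fderiv_right (m := 1) (by norm_num)).differentiableAt one_ne_zero
  have hd1 : ∀ p ∈ V, DifferentiableAt ℝ ω p := fun p hp =>
    (hcd p hp).differentiableAt (by norm_num)
  have hdu : ∀ p ∈ V, ∀ u : ℝ × ℝ, DifferentiableAt ℝ (fun z => fderiv ℝ ω z u) p :=
    fun p hp u => (hF p hp).clm_apply (differentiableAt_const u)
  have key : ∀ p ∈ V, ∀ u : ℝ × ℝ, fderiv ℝ (fun q => fderiv ℝ ω q u) p
      = (ContinuousLinearMap.apply ℝ ℝ u).comp (fderiv ℝ (fderiv ℝ ω) p) := by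
    intro p hp u
    exact (((ContinuousLinearMap.apply ℝ ℝ u).hasFDerivAt).comp p (hF p hp).hasFDerivAt).fderiv
  have hxNhd : ∀ p ∈ V, {s' : ℝ | (s', p.2) ∈ V} ∈ nhds p.1 := fun p hp =>
    (hVo.preimage (Continuous.prodMk_left p.2)).mem_nhds hp
  have hyNhd : ∀ p ∈ V, {t' : ℝ | (p.1, t') ∈ V} ∈ nhds p.2 := fun p hp =>
    (hVo.preimage (Continuous.prodMk_right p.1)).mem_nhds hp
  have hpx : ∀ p ∈ V, ωx p = fderiv ℝ ω p (1, 0) := fun p hp =>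
    (hωx p hp).unique (lineX (hd1 p hp))
  have hpy : ∀ p ∈ V, ωy p = fderiv ℝ ω p (0, 1) := fun p hp =>
    (hωy p hp).unique (lineY (hd1 p hp))
  have hD : ∀ p ∈ V, fderiv ℝ (fderiv ℝ ω) p (1, 0) (1, 0)
      + fderiv ℝ (fderiv ℝ ω) p (0, 1) (0, 1) = 0 := by
    intro p hp
    have hxx : ωxx p = fderiv ℝ (fun z => fderiv ℝ ω z (1, 0)) p (1, 0) := by
      have he : (fun s' => fderiv ℝ ω (s', p.2) (1, 0)) =ᶠ[nhds p.1] fun s' => ωx (s', p.2) :=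
        Filter.eventuallyEq_of_mem (hxNhd p hp) (fun s' hs' => (hpx _ hs').symm)
      exact ((hωxx p hp).congr_of_eventuallyEq he).unique (lineX (hdu p hp _))
    have hyy : ωyy p = fderiv ℝ (fun z => fderiv ℝ ω z (0, 1)) p (0, 1) := by
      have he : (fun t' => fderiv ℝ ω (p.1, t') (0, 1)) =ᶠ[nhds p.2] fun t' => ωy (p.1, t') :=
        Filter.eventuallyEq_of_mem (hyNhd p hp) (fun t' ht' => (hpy _ ht').symm)
      exact ((hωyy p hp).congr_of_eventuallyEq he).unique (lineY (hdu p hp _))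
    rw [key p hp] at hxx hyy
    have := hharm p hp
    simp only [ContinuousLinearMap.comp_apply, ContinuousLinearMap.apply_apply] at hxx hyy
    linarith
  set L := Complex.equivRealProdCLM
  set g : ℂ → ℝ := ω ∘ L with hg
  have hgH : ∀ z, L z ∈ V → InnerProductSpace.HarmonicAt g z := by
    intro z hz
    refine ⟨(hcd _ hz).comp z L.contDiff.contDiffAt, ?_⟩
    have hO : IsOpen (L ⁻¹' V) := hVo.preimage L.continuous
    filter_upwards [hO.mem_nhds hz] with w hw
    rw [InnerProductSpace.laplacian_eq_iteratedFDeriv_complexPlane]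
    have hc : iteratedFDeriv ℝ 2 g w = (iteratedFDeriv ℝ 2 ω (L w)).compContinuousLinearMap
        fun _ => (L : ℂ →L[ℝ] ℝ × ℝ) := by
      simpa [iteratedFDerivWithin_univ] using
        L.iteratedFDerivWithin_comp_right ω uniqueDiffOn_univ (mem_univ (L w)) 2
    show iteratedFDeriv ℝ 2 g w ![1, 1] + iteratedFDeriv ℝ 2 g w ![Complex.I, Complex.I] = 0
    rw [hc]
    simp only [ContinuousMultilinearMap.compContinuousLinearMap_apply, iteratedFDeriv_two_apply]
    have := hD _ hw
    simpa [L] using this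
  intro p hp
  have hz : L (L.symm p) ∈ V := by simpa using hp
  have hl : AnalyticAt ℝ L.symm p := (L.symm : (ℝ × ℝ) →L[ℝ] ℂ).analyticAt p
  have h1 := (HarmonicAt.analyticAt (hgH _ hz)).comp hl
  have h2 : g ∘ L.symm = ω := by funext x; simp [hg]
  simpa [h2] using h1

private lemma pd_analytic {g : ℝ × ℝ → ℝ} {V : Set (ℝ × ℝ)}
    (hg : AnalyticOnNhd ℝ g V) (v : ℝ × ℝ) :
    AnalyticOnNhd ℝ (fun q => fderiv ℝ g q v) V :=
  fun p hp => ((ContinuousLinearMap.apply ℝ ℝ v).analyticAt _).comp ((hg.fderiv) p hp)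

private lemma fderiv_swap {g : ℝ × ℝ → ℝ} {p : ℝ × ℝ} (hg : ContDiffAt ℝ 2 g p) (v w : ℝ × ℝ) :
    fderiv ℝ (fun q => fderiv ℝ g q v) p w = fderiv ℝ (fun q => fderiv ℝ g q w) p v := by
  have hsym := hg.isSymmSndFDerivAt (by simp)
  have hF : DifferentiableAt ℝ (fderiv ℝ g) p :=
    (hg.fderiv_right (m := 1) (by norm_num)).differentiableAt one_ne_zero
  have key : ∀ u : ℝ × ℝ, fderiv ℝ (fun q => fderiv ℝ g q u) p
      = (ContinuousLinearMap.apply ℝ ℝ u).comp (fderiv ℝ (fderiv ℝ g) p) := by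
    intro u
    exact (((ContinuousLinearMap.apply ℝ ℝ u).hasFDerivAt).comp p hF.hasFDerivAt).fderiv
  rw [key, key]
  exact hsym w v

/-- Theorem 9.8 (converse direction): a harmonic `ω` on a rectangle with `ω_y ≠ 0`
everywhere, of spectral genus at most `1` (i.e. `2ω_yyy + 3ω_x²ω_y − ω_y³ = −2c₀ω_y`),
having one vertical capillary parameter curve with nonzero capillarity constant,
is foliated by capillary curves: `2ω_x = −α(x)e^{−ω} − β(x)e^{ω}` with `α, β` real analytic. -/
theorem genus_one_implies_foliation
    (s₁ s₂ t₁ t₂ : ℝ) (V : Set (ℝ × ℝ))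
    (hV : V = Ioo s₁ s₂ ×ˢ Ioo t₁ t₂)
    (ω ωx ωy ωxx ωyy ωyyy : ℝ × ℝ → ℝ)
    (hsmooth : ContDiffOn ℝ (⊤ : ℕ∞) ω V)
    (hωx : ∀ p ∈ V, HasDerivAt (fun s => ω (s, p.2)) (ωx p) p.1)
    (hωy : ∀ p ∈ V, HasDerivAt (fun t => ω (p.1, t)) (ωy p) p.2)
    (hωxx : ∀ p ∈ V, HasDerivAt (fun s => ωx (s, p.2)) (ωxx p) p.1)
    (hωyy : ∀ p ∈ V, HasDerivAt (fun t => ωy (p.1, t)) (ωyy p) p.2)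
    (hωyyy : ∀ p ∈ V, HasDerivAt (fun t => ωyy (p.1, t)) (ωyyy p) p.2)
    (hharm : ∀ p ∈ V, ωxx p + ωyy p = 0)
    (hωyne : ∀ p ∈ V, ωy p ≠ 0)
    (c₀ : ℝ)
    (hgenus : ∀ p ∈ V,
      2 * ωyyy p + 3 * (ωx p) ^ 2 * ωy p - (ωy p) ^ 3 = -2 * c₀ * ωy p)
    (x₀ α₀ β₀ : ℝ) (hx₀ : x₀ ∈ Ioo s₁ s₂) (hα₀ : α₀ ≠ 0)
    (hcap : ∀ y ∈ Ioo t₁ t₂,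
      2 * ωx (x₀, y) = -α₀ * Real.exp (-ω (x₀, y)) - β₀ * Real.exp (ω (x₀, y))) :
    ∃ α β : ℝ → ℝ,
      AnalyticOnNhd ℝ α (Ioo s₁ s₂) ∧ AnalyticOnNhd ℝ β (Ioo s₁ s₂) ∧
      ∀ p ∈ V, 2 * ωx p = -α p.1 * Real.exp (-ω p) - β p.1 * Real.exp (ω p) := by
  by_cases htt : t₁ < t₂
  swap
  · refine ⟨fun _ => 0, fun _ => 0, analyticOnNhd_const, analyticOnNhd_const, ?_⟩
    intro p hp
    rw [hV] at hp
    exact absurd (hp.2.1.trans hp.2.2) htt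
  have hVo : IsOpen V := by rw [hV]; exact isOpen_Ioo.prod isOpen_Ioo
  have hmem : ∀ {x y : ℝ}, x ∈ Ioo s₁ s₂ → y ∈ Ioo t₁ t₂ → (x, y) ∈ V := by
    intro x y hx hy; rw [hV]; exact ⟨hx, hy⟩
  have hco : ∀ p ∈ V, p.1 ∈ Ioo s₁ s₂ ∧ p.2 ∈ Ioo t₁ t₂ := by
    intro p hp; rw [hV] at hp; exact hp
  set yst : ℝ := (t₁ + t₂) / 2 with hystdef
  have hyst : yst ∈ Ioo t₁ t₂ := ⟨by simp only [hystdef]; linarith, by simp only [hystdef]; linarith⟩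
  have hωa : AnalyticOnNhd ℝ ω V := harm_analytic hVo hsmooth hωx hωy hωxx hωyy hharm
  set px : ℝ × ℝ → ℝ := fun z => fderiv ℝ ω z (1, 0) with hpxdef
  set py : ℝ × ℝ → ℝ := fun z => fderiv ℝ ω z (0, 1) with hpydef
  set q : ℝ × ℝ → ℝ := fun z => fderiv ℝ px z (0, 1) with hqdef
  set r : ℝ × ℝ → ℝ := fun z => fderiv ℝ py z (0, 1) with hrdef
  set s : ℝ × ℝ → ℝ := fun z => fderiv ℝ q z (0, 1) with hsdef
  set t : ℝ × ℝ → ℝ := fun z => fderiv ℝ r z (0, 1) with htdef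
  set ty : ℝ × ℝ → ℝ := fun z => fderiv ℝ t z (0, 1) with htydef
  have hpxa : AnalyticOnNhd ℝ px V := pd_analytic hωa _
  have hpya : AnalyticOnNhd ℝ py V := pd_analytic hωa _
  have hqa : AnalyticOnNhd ℝ q V := pd_analytic hpxa _
  have hra : AnalyticOnNhd ℝ r V := pd_analytic hpya _
  have hsa : AnalyticOnNhd ℝ s V := pd_analytic hqa _
  have hta : AnalyticOnNhd ℝ t V := pd_analytic hra _
  have htya : AnalyticOnNhd ℝ ty V := pd_analytic hta _
  have hyNhd : ∀ p ∈ V, {t' : ℝ | (p.1, t') ∈ V} ∈ nhds p.2 := fun p hp =>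
    (hVo.preimage (Continuous.prodMk_right p.1)).mem_nhds hp
  have hxNhd : ∀ p ∈ V, {s' : ℝ | (s', p.2) ∈ V} ∈ nhds p.1 := fun p hp =>
    (hVo.preimage (Continuous.prodMk_left p.2)).mem_nhds hp
  have hpx : ∀ p ∈ V, ωx p = px p := fun p hp =>
    (hωx p hp).unique (lineX (hωa p hp).differentiableAt)
  have hpy : ∀ p ∈ V, ωy p = py p := fun p hp =>
    (hωy p hp).unique (lineY (hωa p hp).differentiableAt)
  have hpyne : ∀ p ∈ V, py p ≠ 0 := fun p hp => by
    rw [← hpy p hp]; exact hωyne p hp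
  have hrr : ∀ p ∈ V, ωyy p = r p := by
    intro p hp
    have he : (fun t' => py (p.1, t')) =ᶠ[nhds p.2] fun t' => ωy (p.1, t') :=
      Filter.eventuallyEq_of_mem (hyNhd p hp) (fun t' ht' => (hpy _ ht').symm)
    exact ((hωyy p hp).congr_of_eventuallyEq he).unique (lineY (hpya p hp).differentiableAt)
  have htt' : ∀ p ∈ V, ωyyy p = t p := by
    intro p hp
    have he : (fun t' => r (p.1, t')) =ᶠ[nhds p.2] fun t' => ωyy (p.1, t') :=
      Filter.eventuallyEq_of_mem (hyNhd p hp) (fun t' ht' => (hrr _ ht').symm)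
    exact ((hωyyy p hp).congr_of_eventuallyEq he).unique (lineY (hra p hp).differentiableAt)
  have hxx : ∀ p ∈ V, ωxx p = fderiv ℝ px p (1, 0) := by
    intro p hp
    have he : (fun s' => px (s', p.2)) =ᶠ[nhds p.1] fun s' => ωx (s', p.2) :=
      Filter.eventuallyEq_of_mem (hxNhd p hp) (fun s' hs' => (hpx _ hs').symm)
    exact ((hωxx p hp).congr_of_eventuallyEq he).unique (lineX (hpxa p hp).differentiableAt)
  -- the table of x-derivatives
  have T1 : ∀ p ∈ V, fderiv ℝ px p (1, 0) = -r p := by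
    intro p hp
    have h1 := hxx p hp
    have h2 := hharm p hp
    have h3 := hrr p hp
    linarith
  have T2 : ∀ p ∈ V, fderiv ℝ py p (1, 0) = q p := by
    intro p hp
    exact fderiv_swap ((hωa p hp).contDiffAt) (0, 1) (1, 0)
  have T3 : ∀ p ∈ V, fderiv ℝ q p (1, 0) = -t p := by
    intro p hp
    have h1 : fderiv ℝ q p (1, 0) = fderiv ℝ (fun z => fderiv ℝ px z (1, 0)) p (0, 1) :=
      fderiv_swap ((hpxa p hp).contDiffAt) (0, 1) (1, 0)
    have he : (fun z => fderiv ℝ px z (1, 0)) =ᶠ[nhds p] fun z => -r z :=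
      Filter.eventuallyEq_of_mem (hVo.mem_nhds hp) (fun z hz => T1 z hz)
    rw [h1, he.fderiv_eq, fderiv_fun_neg]
    simp
    rfl
  have T4 : ∀ p ∈ V, fderiv ℝ r p (1, 0) = s p := by
    intro p hp
    have h1 : fderiv ℝ r p (1, 0) = fderiv ℝ (fun z => fderiv ℝ py z (1, 0)) p (0, 1) :=
      fderiv_swap ((hpya p hp).contDiffAt) (0, 1) (1, 0)
    have he : (fun z => fderiv ℝ py z (1, 0)) =ᶠ[nhds p] q :=
      Filter.eventuallyEq_of_mem (hVo.mem_nhds hp) (fun z hz => T2 z hz)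
    rw [h1, he.fderiv_eq]
  have T5 : ∀ p ∈ V, fderiv ℝ s p (1, 0) = -ty p := by
    intro p hp
    have h1 : fderiv ℝ s p (1, 0) = fderiv ℝ (fun z => fderiv ℝ q z (1, 0)) p (0, 1) :=
      fderiv_swap ((hqa p hp).contDiffAt) (0, 1) (1, 0)
    have he : (fun z => fderiv ℝ q z (1, 0)) =ᶠ[nhds p] fun z => -t z :=
      Filter.eventuallyEq_of_mem (hVo.mem_nhds hp) (fun z hz => T3 z hz)
    rw [h1, he.fderiv_eq, fderiv_fun_neg]
    simp
    rfl
  -- genus condition in canonical form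
  have hgen : ∀ p ∈ V, 2 * t p + 3 * px p ^ 2 * py p - py p ^ 3 + 2 * c₀ * py p = 0 := by
    intro p hp
    have h := hgenus p hp
    rw [hpx p hp, hpy p hp, htt' p hp] at h
    linarith
  -- y-derivative of the genus identity
  have hE4 : ∀ p ∈ V, 2 * ty p + 6 * px p * q p * py p + 3 * px p ^ 2 * r p
      - 3 * py p ^ 2 * r p + 2 * c₀ * r p = 0 := by
    intro p hp
    have hdt : HasDerivAt (fun t' => t (p.1, t')) (ty p) p.2 := lineY (hta p hp).differentiableAt
    have hdx : HasDerivAt (fun t' => px (p.1, t')) (q p) p.2 := lineY (hpxa p hp).differentiableAt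
    have hdy : HasDerivAt (fun t' => py (p.1, t')) (r p) p.2 := lineY (hpya p hp).differentiableAt
    have hstruct := (((hdt.const_mul (2:ℝ)).add (((hdx.fun_pow 2).const_mul (3:ℝ)).fun_mul hdy)).sub
      (hdy.fun_pow 3)).add (hdy.const_mul (2*c₀))
    have h0 : HasDerivAt (fun t' => 2 * t (p.1, t') + 3 * px (p.1, t') ^ 2 * py (p.1, t')
        - py (p.1, t') ^ 3 + 2 * c₀ * py (p.1, t')) 0 p.2 := by
      refine (hasDerivAt_const p.2 0).congr_of_eventuallyEq ?_
      exact Filter.eventuallyEq_of_mem (hyNhd p hp) (fun t' ht' => hgen (p.1, t') ht')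
    have := hstruct.unique h0
    linear_combination this
  -- x-derivative of K := py*s - q*r - px*py^3 vanishes
  have hKx : ∀ p ∈ V, HasDerivAt (fun x' => py (x', p.2) * s (x', p.2) - q (x', p.2) * r (x', p.2)
      - px (x', p.2) * py (x', p.2) ^ 3) 0 p.1 := by
    intro p hp
    have hdpy : HasDerivAt (fun x' => py (x', p.2)) (q p) p.1 := by
      have := lineX (hpya p hp).differentiableAt; rwa [T2 p hp] at this
    have hdpx : HasDerivAt (fun x' => px (x', p.2)) (-r p) p.1 := by
      have := lineX (hpxa p hp).differentiableAt; rwa [T1 p hp] at this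
    have hdq : HasDerivAt (fun x' => q (x', p.2)) (-t p) p.1 := by
      have := lineX (hqa p hp).differentiableAt; rwa [T3 p hp] at this
    have hdr : HasDerivAt (fun x' => r (x', p.2)) (s p) p.1 := by
      have := lineX (hra p hp).differentiableAt; rwa [T4 p hp] at this
    have hds : HasDerivAt (fun x' => s (x', p.2)) (-ty p) p.1 := by
      have := lineX (hsa p hp).differentiableAt; rwa [T5 p hp] at this
    have hstruct := ((hdpy.fun_mul hds).fun_sub (hdq.fun_mul hdr)).fun_sub (hdpx.fun_mul (hdpy.fun_pow 3))
    refine hstruct.congr_deriv (Eq.symm ?_)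
    linear_combination (py p / 2) * hE4 p hp - (r p / 2) * hgen p hp
  -- K vanishes on the capillary line
  have hK0 : ∀ y ∈ Ioo t₁ t₂, py (x₀, y) * s (x₀, y) - q (x₀, y) * r (x₀, y)
      - px (x₀, y) * py (x₀, y) ^ 3 = 0 := by
    have cap0 : ∀ y ∈ Ioo t₁ t₂, 2 * px (x₀, y)
        = -α₀ * Real.exp (-ω (x₀, y)) - β₀ * Real.exp (ω (x₀, y)) := by
      intro y hy
      rw [← hpx (x₀, y) (hmem hx₀ hy)]
      exact hcap y hy
    have cap1 : ∀ y ∈ Ioo t₁ t₂, 2 * q (x₀, y)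
        = py (x₀, y) * (α₀ * Real.exp (-ω (x₀, y)) - β₀ * Real.exp (ω (x₀, y))) := by
      intro y hy
      have hpV : ((x₀ : ℝ), y) ∈ V := hmem hx₀ hy
      have hdω : HasDerivAt (fun t' => ω (x₀, t')) (py (x₀, y)) y :=
        lineY (hωa _ hpV).differentiableAt
      have hdq' : HasDerivAt (fun t' => (2:ℝ) * px (x₀, t')) (2 * q (x₀, y)) y :=
        (lineY (hpxa _ hpV).differentiableAt).const_mul (2:ℝ)
      have hstruct := ((hdω.neg.exp).const_mul (-α₀)).sub ((hdω.exp).const_mul β₀)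
      have heq : (fun t' => (2:ℝ) * px (x₀, t'))
          =ᶠ[nhds y] fun t' => -α₀ * Real.exp (-ω (x₀, t')) - β₀ * Real.exp (ω (x₀, t')) :=
        Filter.eventuallyEq_of_mem (Ioo_mem_nhds hy.1 hy.2) (fun t' ht' => cap0 t' ht')
      have := hdq'.unique (hstruct.congr_of_eventuallyEq heq)
      linear_combination this
    have cap2 : ∀ y ∈ Ioo t₁ t₂, 2 * s (x₀, y)
        = r (x₀, y) * (α₀ * Real.exp (-ω (x₀, y)) - β₀ * Real.exp (ω (x₀, y)))
          - py (x₀, y) ^ 2 * (α₀ * Real.exp (-ω (x₀, y)) + β₀ * Real.exp (ω (x₀, y))) := by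
      intro y hy
      have hpV : ((x₀ : ℝ), y) ∈ V := hmem hx₀ hy
      have hdω : HasDerivAt (fun t' => ω (x₀, t')) (py (x₀, y)) y :=
        lineY (hωa _ hpV).differentiableAt
      have hdpy' : HasDerivAt (fun t' => py (x₀, t')) (r (x₀, y)) y :=
        lineY (hpya _ hpV).differentiableAt
      have hds' : HasDerivAt (fun t' => (2:ℝ) * q (x₀, t')) (2 * s (x₀, y)) y :=
        (lineY (hqa _ hpV).differentiableAt).const_mul (2:ℝ)
      have hstruct := hdpy'.fun_mul
        (((hdω.fun_neg.exp).const_mul α₀).fun_sub ((hdω.exp).const_mul β₀))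
      have heq : (fun t' => (2:ℝ) * q (x₀, t')) =ᶠ[nhds y] fun t' =>
          py (x₀, t') * (α₀ * Real.exp (-ω (x₀, t')) - β₀ * Real.exp (ω (x₀, t'))) :=
        Filter.eventuallyEq_of_mem (Ioo_mem_nhds hy.1 hy.2) (fun t' ht' => cap1 t' ht')
      have := hds'.unique (hstruct.congr_of_eventuallyEq heq)
      linear_combination this
    intro y hy
    linear_combination (py (x₀, y) / 2) * cap2 y hy - (r (x₀, y) / 2) * cap1 y hy
      - (py (x₀, y) ^ 3 / 2) * cap0 y hy
  -- K vanishes everywhere on V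
  have hKzero : ∀ p ∈ V, py p * s p - q p * r p - px p * py p ^ 3 = 0 := by
    intro p hp
    obtain ⟨hp1, hp2⟩ := hco p hp
    set kf : ℝ → ℝ := fun x' => py (x', p.2) * s (x', p.2) - q (x', p.2) * r (x', p.2)
      - px (x', p.2) * py (x', p.2) ^ 3 with hkf
    have hdiffK : ∀ x' ∈ Ioo s₁ s₂, HasDerivAt kf 0 x' := fun x' hx' =>
      hKx (x', p.2) (hmem hx' hp2)
    have hconst : kf p.1 = kf x₀ :=
      Convex.is_const_of_fderivWithin_eq_zero (convex_Ioo s₁ s₂)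
        (fun x' hx' => (hdiffK x' hx').differentiableAt.differentiableWithinAt)
        (fun x' hx' => by
          rw [fderivWithin_of_isOpen isOpen_Ioo hx', (hdiffK x' hx').hasFDerivAt.fderiv]
          ext
          simp) hp1 hx₀
    exact hconst.trans (hK0 p.2 hp2)
  -- the vertical flows Φ and Ψ are constant in y
  have hΦ : ∀ p ∈ V, Real.exp (ω p) * (q p / py p - px p)
      = Real.exp (ω (p.1, yst)) * (q (p.1, yst) / py (p.1, yst) - px (p.1, yst)) := by
    intro p hp
    obtain ⟨hp1, hp2⟩ := hco p hp
    set Φ : ℝ → ℝ := fun t' => Real.exp (ω (p.1, t')) * (q (p.1, t') / py (p.1, t') - px (p.1, t'))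
      with hΦdef
    have hdiffΦ : ∀ y' ∈ Ioo t₁ t₂, HasDerivAt Φ 0 y' := by
      intro y' hy'
      have hptV : ((p.1 : ℝ), y') ∈ V := hmem hp1 hy'
      have hdω : HasDerivAt (fun t' => ω (p.1, t')) (py (p.1, y')) y' :=
        lineY (hωa _ hptV).differentiableAt
      have hdq : HasDerivAt (fun t' => q (p.1, t')) (s (p.1, y')) y' :=
        lineY (hqa _ hptV).differentiableAt
      have hdpy : HasDerivAt (fun t' => py (p.1, t')) (r (p.1, y')) y' :=
        lineY (hpya _ hptV).differentiableAt
      have hdpx : HasDerivAt (fun t' => px (p.1, t')) (q (p.1, y')) y' :=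
        lineY (hpxa _ hptV).differentiableAt
      have hstruct := (hdω.exp).fun_mul ((hdq.fun_div hdpy (hpyne _ hptV)).fun_sub hdpx)
      refine hstruct.congr_deriv (Eq.symm ?_)
      have hKp := hKzero _ hptV
      have hpyne' := hpyne _ hptV
      linear_combination (norm := skip) (-(Real.exp (ω (p.1, y'))) / py (p.1, y') ^ 2) * hKp
      field_simp
      ring
    have hconst : Φ p.2 = Φ yst :=
      Convex.is_const_of_fderivWithin_eq_zero (convex_Ioo t₁ t₂)
        (fun y' hy' => (hdiffΦ y' hy').differentiableAt.differentiableWithinAt)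
        (fun y' hy' => by
          rw [fderivWithin_of_isOpen isOpen_Ioo hy', (hdiffΦ y' hy').hasFDerivAt.fderiv]
          ext
          simp) hp2 hyst
    exact hconst
  have hΨ : ∀ p ∈ V, Real.exp (-ω p) * (-(q p / py p) - px p)
      = Real.exp (-ω (p.1, yst)) * (-(q (p.1, yst) / py (p.1, yst)) - px (p.1, yst)) := by
    intro p hp
    obtain ⟨hp1, hp2⟩ := hco p hp
    set Ψ : ℝ → ℝ := fun t' => Real.exp (-ω (p.1, t'))
      * (-(q (p.1, t') / py (p.1, t')) - px (p.1, t')) with hΨdef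
    have hdiffΨ : ∀ y' ∈ Ioo t₁ t₂, HasDerivAt Ψ 0 y' := by
      intro y' hy'
      have hptV : ((p.1 : ℝ), y') ∈ V := hmem hp1 hy'
      have hdω : HasDerivAt (fun t' => ω (p.1, t')) (py (p.1, y')) y' :=
        lineY (hωa _ hptV).differentiableAt
      have hdq : HasDerivAt (fun t' => q (p.1, t')) (s (p.1, y')) y' :=
        lineY (hqa _ hptV).differentiableAt
      have hdpy : HasDerivAt (fun t' => py (p.1, t')) (r (p.1, y')) y' :=
        lineY (hpya _ hptV).differentiableAt
      have hdpx : HasDerivAt (fun t' => px (p.1, t')) (q (p.1, y')) y' :=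
        lineY (hpxa _ hptV).differentiableAt
      have hstruct := (hdω.fun_neg.exp).fun_mul (((hdq.fun_div hdpy (hpyne _ hptV)).fun_neg).fun_sub hdpx)
      refine hstruct.congr_deriv (Eq.symm ?_)
      have hKp := hKzero _ hptV
      have hpyne' := hpyne _ hptV
      linear_combination (norm := skip) (Real.exp (-ω (p.1, y')) / py (p.1, y') ^ 2) * hKp
      field_simp
      ring
    have hconst : Ψ p.2 = Ψ yst :=
      Convex.is_const_of_fderivWithin_eq_zero (convex_Ioo t₁ t₂)
        (fun y' hy' => (hdiffΨ y' hy').differentiableAt.differentiableWithinAt)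
        (fun y' hy' => by
          rw [fderivWithin_of_isOpen isOpen_Ioo hy', (hdiffΨ y' hy').hasFDerivAt.fderiv]
          ext
          simp) hp2 hyst
    exact hconst
  -- conclusion
  refine ⟨fun x' => Real.exp (ω (x', yst)) * (q (x', yst) / py (x', yst) - px (x', yst)),
    fun x' => Real.exp (-ω (x', yst)) * (-(q (x', yst) / py (x', yst)) - px (x', yst)),
    ?_, ?_, ?_⟩
  · intro x' hx'
    have hptV : ((x' : ℝ), yst) ∈ V := hmem hx' hyst
    have hl : AnalyticAt ℝ (fun x'' : ℝ => ((x'' : ℝ), yst)) x' :=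
      (analyticAt_id).prod analyticAt_const
    have hωc : AnalyticAt ℝ (fun x'' => ω (x'', yst)) x' := AnalyticAt.comp (g := ω) (f := fun x'' : ℝ => (x'', yst)) (hωa _ hptV) hl
    have hqc : AnalyticAt ℝ (fun x'' => q (x'', yst)) x' :=
      AnalyticAt.comp (g := q) (f := fun x'' : ℝ => (x'', yst)) (hqa _ hptV) hl
    have hpyc : AnalyticAt ℝ (fun x'' => py (x'', yst)) x' :=
      AnalyticAt.comp (g := py) (f := fun x'' : ℝ => (x'', yst)) (hpya _ hptV) hl
    have hpxc : AnalyticAt ℝ (fun x'' => px (x'', yst)) x' :=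
      AnalyticAt.comp (g := px) (f := fun x'' : ℝ => (x'', yst)) (hpxa _ hptV) hl
    exact (hωc.rexp).mul ((hqc.div hpyc (hpyne _ hptV)).sub hpxc)
  · intro x' hx'
    have hptV : ((x' : ℝ), yst) ∈ V := hmem hx' hyst
    have hl : AnalyticAt ℝ (fun x'' : ℝ => ((x'' : ℝ), yst)) x' :=
      (analyticAt_id).prod analyticAt_const
    have hωc : AnalyticAt ℝ (fun x'' => ω (x'', yst)) x' := AnalyticAt.comp (g := ω) (f := fun x'' : ℝ => (x'', yst)) (hωa _ hptV) hl
    have hqc : AnalyticAt ℝ (fun x'' => q (x'', yst)) x' :=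
      AnalyticAt.comp (g := q) (f := fun x'' : ℝ => (x'', yst)) (hqa _ hptV) hl
    have hpyc : AnalyticAt ℝ (fun x'' => py (x'', yst)) x' :=
      AnalyticAt.comp (g := py) (f := fun x'' : ℝ => (x'', yst)) (hpya _ hptV) hl
    have hpxc : AnalyticAt ℝ (fun x'' => px (x'', yst)) x' :=
      AnalyticAt.comp (g := px) (f := fun x'' : ℝ => (x'', yst)) (hpxa _ hptV) hl
    exact (hωc.neg.rexp).mul (((hqc.div hpyc (hpyne _ hptV)).neg).sub hpxc)
  · intro p hp
    have hA : Real.exp (ω (p.1, yst)) * (q (p.1, yst) / py (p.1, yst) - px (p.1, yst))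
        = Real.exp (ω p) * (q p / py p - px p) := (hΦ p hp).symm
    have hB : Real.exp (-ω (p.1, yst)) * (-(q (p.1, yst) / py (p.1, yst)) - px (p.1, yst))
        = Real.exp (-ω p) * (-(q p / py p) - px p) := (hΨ p hp).symm
    rw [hpx p hp]
    show 2 * px p = -(Real.exp (ω (p.1, yst)) * (q (p.1, yst) / py (p.1, yst) - px (p.1, yst)))
        * Real.exp (-ω p) - Real.exp (-ω (p.1, yst))
        * (-(q (p.1, yst) / py (p.1, yst)) - px (p.1, yst)) * Real.exp (ω p)
    rw [hA, hB]
    have h1 : Real.exp (ω p) * Real.exp (-ω p) = 1 := by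
      rw [← Real.exp_add]; simp
    linear_combination (-2 * px p) * h1
end
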